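/- arXiv:2412.11098 — 8 statements merged into one kernel-verified Lean document; each statement's English description precedes it below -/
import Mathlib

section
/- There exists a constant κ ≥ 0 such that for all parameter vectors x₁, x₂ ∈ ℝ^{n_x} and all index sets I ⊆ {1,…,n_c}, one has ‖z*(x₁,I) − z*(x₂,I)‖ ≤ κ‖x₁ − x₂‖; that is, a global Lipschitz constant for the mp-QP always exists. -/
set_option synthInstance.maxHeartbeats 1000000
set_option maxHeartbeats 1600000

open Matrix Set

namespace MPQP

variable {m n : ℕ}

noncomputable def toE {m : ℕ} (v : Fin m → ℝ) : EuclideanSpace ℝ (Fin m) :=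
  (WithLp.equiv 2 (Fin m → ℝ)).symm v

@[simp] lemma toE_apply (v : Fin m → ℝ) (i : Fin m) : toE v i = v i := rfl

noncomputable def mulVecE (M : Matrix (Fin m) (Fin n) ℝ)
    (v : EuclideanSpace ℝ (Fin n)) : EuclideanSpace ℝ (Fin m) := toE (M.mulVec v)

lemma mulVecE_apply (M : Matrix (Fin m) (Fin n) ℝ) (v : EuclideanSpace ℝ (Fin n))
    (i : Fin m) : mulVecE M v i = ∑ j, M i j * v j := rfl

/-- dot product on EuclideanSpace -/
noncomputable def dp {m : ℕ} (a b : EuclideanSpace ℝ (Fin m)) : ℝ := dotProduct a b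

lemma dp_eq_sum (a b : EuclideanSpace ℝ (Fin m)) : dp a b = ∑ i, a i * b i := rfl

lemma dp_eq_inner (a b : EuclideanSpace ℝ (Fin m)) : dp a b = (inner ℝ a b : ℝ) := by
  simp [dp, PiLp.inner_apply, dotProduct, mul_comm]

lemma abs_dp_le (a b : EuclideanSpace ℝ (Fin m)) : |dp a b| ≤ ‖a‖ * ‖b‖ := by
  rw [dp_eq_inner]; exact abs_real_inner_le_norm a b

lemma dp_comm (a b : EuclideanSpace ℝ (Fin m)) : dp a b = dp b a :=
  dotProduct_comm a b

lemma dp_add_left (a b c : EuclideanSpace ℝ (Fin m)) : dp (a + b) c = dp a c + dp b c := by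
  simp [dp_eq_sum, PiLp.add_apply, add_mul, Finset.sum_add_distrib]

lemma dp_sub_left (a b c : EuclideanSpace ℝ (Fin m)) : dp (a - b) c = dp a c - dp b c := by
  simp [dp_eq_sum, PiLp.sub_apply, sub_mul, Finset.sum_sub_distrib]

lemma dp_smul_left (t : ℝ) (a c : EuclideanSpace ℝ (Fin m)) : dp (t • a) c = t * dp a c := by
  simp [dp_eq_sum, PiLp.smul_apply, smul_eq_mul, Finset.mul_sum, mul_assoc]

lemma dp_add_right (a b c : EuclideanSpace ℝ (Fin m)) : dp c (a + b) = dp c a + dp c b := by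
  simp [dp_comm c]; rw [dp_add_left]

lemma dp_sub_right (a b c : EuclideanSpace ℝ (Fin m)) : dp c (a - b) = dp c a - dp c b := by
  simp [dp_comm c]; rw [dp_sub_left]

lemma dp_smul_right (t : ℝ) (a c : EuclideanSpace ℝ (Fin m)) : dp c (t • a) = t * dp c a := by
  rw [dp_comm, dp_smul_left, dp_comm]

lemma mulVecE_add (M : Matrix (Fin m) (Fin n) ℝ) (a b : EuclideanSpace ℝ (Fin n)) :
    mulVecE M (a + b) = mulVecE M a + mulVecE M b := by
  ext i
  simp [mulVecE_apply, PiLp.add_apply, mul_add, Finset.sum_add_distrib]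

lemma mulVecE_sub (M : Matrix (Fin m) (Fin n) ℝ) (a b : EuclideanSpace ℝ (Fin n)) :
    mulVecE M (a - b) = mulVecE M a - mulVecE M b := by
  ext i
  simp [mulVecE_apply, PiLp.sub_apply, mul_sub, Finset.sum_sub_distrib]

lemma mulVecE_smul (M : Matrix (Fin m) (Fin n) ℝ) (t : ℝ) (a : EuclideanSpace ℝ (Fin n)) :
    mulVecE M (t • a) = t • mulVecE M a := by
  ext i
  simp [mulVecE_apply, PiLp.smul_apply, smul_eq_mul, Finset.mul_sum, mul_left_comm]

noncomputable def mulVecL (M : Matrix (Fin m) (Fin n) ℝ) :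
    EuclideanSpace ℝ (Fin n) →ₗ[ℝ] EuclideanSpace ℝ (Fin m) :=
  { toFun := fun v => mulVecE M v
    map_add' := mulVecE_add M
    map_smul' := mulVecE_smul M }

lemma exists_mulVec_bound (M : Matrix (Fin m) (Fin n) ℝ) :
    ∃ C, 0 ≤ C ∧ ∀ v : EuclideanSpace ℝ (Fin n), ‖mulVecE M v‖ ≤ C * ‖v‖ := by
  let f' := LinearMap.toContinuousLinearMap (mulVecL M)
  exact ⟨‖f'‖, norm_nonneg _, fun v => f'.le_opNorm v⟩

lemma abs_apply_le (v : EuclideanSpace ℝ (Fin m)) (k : Fin m) : |v k| ≤ ‖v‖ := by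
  rw [EuclideanSpace.norm_eq v, ← Real.sqrt_sq_eq_abs]
  apply Real.sqrt_le_sqrt
  calc v k ^ 2 = ‖v k‖ ^ 2 := by rw [Real.norm_eq_abs, sq_abs]
  _ ≤ ∑ i, ‖v i‖ ^ 2 := Finset.single_le_sum (f := fun i => ‖v i‖ ^ 2)
      (fun i _ => sq_nonneg _) (Finset.mem_univ k)

/-- row-wise dot product bound -/
lemma exists_row_bound (M : Matrix (Fin m) (Fin n) ℝ) :
    ∃ C, 0 ≤ C ∧ ∀ (j : Fin m) (v : EuclideanSpace ℝ (Fin n)),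
      |dotProduct (M j) v| ≤ C * ‖v‖ := by
  refine ⟨∑ j, ‖toE (M j)‖, Finset.sum_nonneg fun j _ => norm_nonneg _, fun j v => ?_⟩
  have h1 : dotProduct (M j) v = dp (toE (M j)) v := rfl
  rw [h1]
  calc |dp (toE (M j)) v| ≤ ‖toE (M j)‖ * ‖v‖ := abs_dp_le _ _
  _ ≤ (∑ j, ‖toE (M j)‖) * ‖v‖ := by
      apply mul_le_mul_of_nonneg_right _ (norm_nonneg v)
      exact Finset.single_le_sum (f := fun j => ‖toE (M j)‖) (fun i _ => norm_nonneg _)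
        (Finset.mem_univ j)

lemma dp_mulVecE_symm (M : Matrix (Fin m) (Fin n) ℝ) (a : EuclideanSpace ℝ (Fin m))
    (b : EuclideanSpace ℝ (Fin n)) : dp a (mulVecE M b) = dp b (mulVecE Mᵀ a) := by
  simp only [dp_eq_sum, mulVecE_apply, Matrix.transpose_apply, Finset.mul_sum]
  rw [Finset.sum_comm]
  apply Finset.sum_congr rfl; intro j _; apply Finset.sum_congr rfl; intro i _; ring



lemma dp_self (d : EuclideanSpace ℝ (Fin m)) : dp d d = ‖d‖ ^ 2 := by
  rw [dp_eq_inner, real_inner_self_eq_norm_sq]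

lemma posdef_dp_pos {H : Matrix (Fin m) (Fin m) ℝ} (hH : H.PosDef)
    (d : EuclideanSpace ℝ (Fin m)) (hd : d ≠ 0) : 0 < dp d (mulVecE H d) := by
  have h2 := hH.dotProduct_mulVec_pos (x := (d : Fin m → ℝ)) ?_
  · simpa [dp, mulVecE, toE] using h2
  · intro hc
    apply hd
    ext i
    have := congrFun hc i
    simpa using this

lemma exists_posdef_lb (hm : 0 < m) {H : Matrix (Fin m) (Fin m) ℝ} (hH : H.PosDef) :
    ∃ μ > 0, ∀ d : EuclideanSpace ℝ (Fin m), μ * ‖d‖ ^ 2 ≤ dp d (mulVecE H d) := by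
  have hnt : Nontrivial (EuclideanSpace ℝ (Fin m)) := by
    refine ⟨EuclideanSpace.single ⟨0, hm⟩ 1, 0, fun hc => ?_⟩
    have h := congrFun (congrArg (fun v : EuclideanSpace ℝ (Fin m) => (v : Fin m → ℝ)) hc) ⟨0, hm⟩
    simp [EuclideanSpace.single_apply] at h
  have hsne : (Metric.sphere (0 : EuclideanSpace ℝ (Fin m)) 1).Nonempty :=
    NormedSpace.sphere_nonempty.mpr zero_le_one
  have hcomp : IsCompact (Metric.sphere (0 : EuclideanSpace ℝ (Fin m)) 1) := isCompact_sphere 0 1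
  have hcont : Continuous fun d : EuclideanSpace ℝ (Fin m) => dp d (mulVecE H d) := by
    have : Continuous fun d : EuclideanSpace ℝ (Fin m) => mulVecE H d :=
      (LinearMap.toContinuousLinearMap (mulVecL H)).continuous
    have h2 : Continuous fun d : EuclideanSpace ℝ (Fin m) =>
        (inner ℝ d (mulVecE H d) : ℝ) := continuous_id.inner this
    simpa only [dp_eq_inner] using h2
  obtain ⟨d₀, hd₀s, hmin⟩ := hcomp.exists_isMinOn hsne hcont.continuousOn
  have hd₀ : d₀ ≠ 0 := by
    intro hc; rw [Metric.mem_sphere, hc] at hd₀s; simp at hd₀s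
  refine ⟨dp d₀ (mulVecE H d₀), posdef_dp_pos hH d₀ hd₀, fun d => ?_⟩
  rcases eq_or_ne d 0 with rfl | hd
  · simp [dp_eq_sum]
  · have hnd : ‖d‖ ≠ 0 := norm_ne_zero_iff.mpr hd
    set u : EuclideanSpace ℝ (Fin m) := ‖d‖⁻¹ • d with hu
    have hus : u ∈ Metric.sphere (0 : EuclideanSpace ℝ (Fin m)) 1 := by
      simp [hu, norm_smul, abs_of_nonneg (inv_nonneg.mpr (norm_nonneg d)),
        inv_mul_cancel₀ hnd]
    have hmu := hmin hus
    have hscale : dp u (mulVecE H u) = ‖d‖⁻¹ ^ 2 * dp d (mulVecE H d) := by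
      rw [hu, mulVecE_smul, dp_smul_left, dp_smul_right]; ring
    have hmu' : dp d₀ (mulVecE H d₀) ≤ ‖d‖⁻¹ ^ 2 * dp d (mulVecE H d) := by
      rw [← hscale]; exact hmu
    have hpos : (0:ℝ) < ‖d‖ ^ 2 := by positivity
    calc dp d₀ (mulVecE H d₀) * ‖d‖ ^ 2 ≤ (‖d‖⁻¹ ^ 2 * dp d (mulVecE H d)) * ‖d‖ ^ 2 :=
          mul_le_mul_of_nonneg_right hmu' (le_of_lt hpos)
    _ = dp d (mulVecE H d) := by field_simp


/-- pointed-local Lipschitz on [0,1] implies endpoint bound -/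
lemma local_to_global {E : Type*} [NormedAddCommGroup E] (f : ℝ → E) (L : ℝ) (hL : 0 ≤ L)
    (hf : ∀ t ∈ Icc (0:ℝ) 1, ∃ δ > 0, ∀ s ∈ Icc (0:ℝ) 1, |s - t| < δ →
      ‖f s - f t‖ ≤ L * |s - t|) :
    ‖f 1 - f 0‖ ≤ L := by
  set s : Set ℝ := {t | ‖f t - f 0‖ ≤ L * t} with hs
  have h0 : (0:ℝ) ∈ s := by simp [hs]
  have hclosed : IsClosed (s ∩ Icc (0:ℝ) 1) := by
    rw [← isOpen_compl_iff, isOpen_iff_mem_nhds]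
    intro u hu
    by_cases huI : u ∈ Icc (0:ℝ) 1
    · -- u ∉ s; find a neighborhood avoiding s ∩ Icc
      have hus : ¬ ‖f u - f 0‖ ≤ L * u := fun hc => hu ⟨hc, huI⟩
      push_neg at hus
      obtain ⟨δ, hδ, hloc⟩ := hf u huI
      set ε : ℝ := (‖f u - f 0‖ - L * u) / (2 * L + 1) with hε
      have hεpos : 0 < ε := by
        apply div_pos (by linarith) (by linarith)
      have : Metric.ball u (min δ ε) ∈ nhds u :=
        Metric.ball_mem_nhds u (lt_min hδ hεpos)
      filter_upwards [this] with t ht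
      rintro ⟨hts, htI⟩
      rw [Metric.mem_ball, Real.dist_eq] at ht
      have h1 : ‖f u - f t‖ ≤ L * |t - u| := by
        have := hloc t htI (lt_of_lt_of_le ht (min_le_left _ _))
        rwa [norm_sub_rev] at this
      have h2 : ‖f u - f 0‖ ≤ ‖f u - f t‖ + ‖f t - f 0‖ := norm_sub_le_norm_sub_add_norm_sub _ _ _
      have habs : |t - u| < ε := lt_of_lt_of_le ht (min_le_right _ _)
      have h3 : L * t ≤ L * u + L * |t - u| := by
        have : t ≤ u + |t - u| := by
          have := le_abs_self (t - u); linarith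
        nlinarith
      have hts' : ‖f t - f 0‖ ≤ L * t := hts
      have h4 : ‖f u - f 0‖ ≤ L * u + 2 * L * |t - u| := by
        calc ‖f u - f 0‖ ≤ ‖f u - f t‖ + ‖f t - f 0‖ := h2
          _ ≤ L * |t - u| + L * t := by linarith [h1, hts']
          _ ≤ L * u + 2 * L * |t - u| := by linarith [h3]
      have : ‖f u - f 0‖ < L * u + (2 * L + 1) * ε := by
        have hnn : 0 ≤ |t - u| := abs_nonneg _
        nlinarith
      rw [hε] at this
      have h2L : (0:ℝ) < 2 * L + 1 := by linarith
      rw [mul_div_cancel₀ _ (ne_of_gt h2L)] at this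
      linarith
    · -- u ∉ Icc: complement of Icc is open
      have : IsOpen (Icc (0:ℝ) 1)ᶜ := isClosed_Icc.isOpen_compl
      have hmem := this.mem_nhds (by simpa using huI)
      filter_upwards [hmem] with t ht
      rintro ⟨_, htI⟩; exact ht htI
  have hsub : Icc (0:ℝ) 1 ⊆ s := by
    apply hclosed.Icc_subset_of_forall_exists_gt h0
    rintro t ⟨hts, htI⟩ y hy
    obtain ⟨δ, hδ, hloc⟩ := hf t (Ico_subset_Icc_self htI)
    set z : ℝ := min y (min (t + δ / 2) ((t + 1) / 2)) with hz
    have htlt1 : t < 1 := htI.2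
    have ht0 : 0 ≤ t := htI.1
    have hzt : t < z := by
      apply lt_min hy
      apply lt_min (by linarith) (by linarith)
    have hzI : z ∈ Icc (0:ℝ) 1 := by
      constructor
      · linarith
      · calc z ≤ (t + 1) / 2 := le_trans (min_le_right _ _) (min_le_right _ _)
          _ ≤ 1 := by linarith
    have hzd : |z - t| < δ := by
      rw [abs_of_pos (by linarith)]
      have : z ≤ t + δ / 2 := le_trans (min_le_right _ _) (min_le_left _ _)
      linarith
    have hbnd := hloc z hzI hzd
    refine ⟨z, ?_, hzt, min_le_left _ _⟩
    have : ‖f z - f 0‖ ≤ ‖f z - f t‖ + ‖f t - f 0‖ := norm_sub_le_norm_sub_add_norm_sub _ _ _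
    rw [hs]
    simp only [mem_setOf_eq]
    have habs : |z - t| = z - t := abs_of_pos (by linarith)
    rw [habs] at hbnd
    calc ‖f z - f 0‖ ≤ ‖f z - f t‖ + ‖f t - f 0‖ := this
      _ ≤ L * (z - t) + L * t := by
          apply add_le_add hbnd hts
      _ = L * z := by ring
  have h1s : ‖f 1 - f 0‖ ≤ L * 1 := hsub (by norm_num : (1:ℝ) ∈ Icc (0:ℝ) 1)
  linarith


lemma dp_zero_right (c : EuclideanSpace ℝ (Fin m)) : dp c 0 = 0 := by
  simp [dp_eq_sum]

lemma dp_sum_right {ι : Type*} (s : Finset ι) (c : EuclideanSpace ℝ (Fin m))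
    (f : ι → EuclideanSpace ℝ (Fin m)) : dp c (∑ i ∈ s, f i) = ∑ i ∈ s, dp c (f i) := by
  classical
  induction s using Finset.induction_on with
  | empty => simp [dp_zero_right]
  | insert a s hnotmem ih =>
      rw [Finset.sum_insert hnotmem, Finset.sum_insert hnotmem, dp_add_right, ih]

lemma dp_single (q : EuclideanSpace ℝ (Fin m)) (i : Fin m) :
    dp q (EuclideanSpace.single i (1:ℝ)) = q i := by
  simp [dp_eq_sum, EuclideanSpace.single_apply, mul_ite]

/-- Uniformly bounded feasible points over a ball -/
lemma feas_bound {n_x n_z n_c : ℕ} (hnx : 0 < n_x)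
    (G : Matrix (Fin n_c) (Fin n_z) ℝ) (S : Matrix (Fin n_c) (Fin n_x) ℝ) (w : Fin n_c → ℝ)
    (hfeas : ∀ x : EuclideanSpace ℝ (Fin n_x), ∃ z : EuclideanSpace ℝ (Fin n_z),
      ∀ j, dotProduct (G j) z ≤ dotProduct (S j) x + w j)
    (x₀ : EuclideanSpace ℝ (Fin n_x)) (r : ℝ) (hr : 0 < r) :
    ∃ M : ℝ, ∀ v : EuclideanSpace ℝ (Fin n_x), ‖v - x₀‖ ≤ r →
      ∃ zv : EuclideanSpace ℝ (Fin n_z),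
        (∀ j, dotProduct (G j) zv ≤ dotProduct (S j) v + w j) ∧ ‖zv‖ ≤ M := by
  classical
  set nn : ℝ := (n_x : ℝ) with hnn
  have hnpos : (0:ℝ) < nn := by rw [hnn]; exact_mod_cast hnx
  have hn1 : (1:ℝ) ≤ nn := by rw [hnn]; exact_mod_cast hnx
  set p : Fin n_x → Bool → EuclideanSpace ℝ (Fin n_x) := fun i b =>
    x₀ + (cond b (r * nn) (-(r * nn))) • EuclideanSpace.single i (1:ℝ) with hp
  set ζ : Fin n_x → Bool → EuclideanSpace ℝ (Fin n_z) := fun i b => (hfeas (p i b)).choose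
    with hζ
  have hζ_spec : ∀ i b j,
      dotProduct (G j) (ζ i b) ≤ dotProduct (S j) (p i b) + w j :=
    fun i b j => (hfeas (p i b)).choose_spec j
  refine ⟨∑ i, (‖ζ i true‖ + ‖ζ i false‖), fun v hv => ?_⟩
  set u : EuclideanSpace ℝ (Fin n_x) := v - x₀ with hu
  set a : Fin n_x → ℝ := fun i => u i / r with ha
  have haabs : ∀ i, |a i| ≤ 1 := by
    intro i
    rw [ha, abs_div, abs_of_pos hr, div_le_one hr]
    exact le_trans (abs_apply_le u i) hv
  set wp : Fin n_x → ℝ := fun i => (1 + a i) / (2 * nn) with hwp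
  set wm : Fin n_x → ℝ := fun i => (1 - a i) / (2 * nn) with hwm
  have hwp_nonneg : ∀ i, 0 ≤ wp i := fun i => by
    have := haabs i; rw [abs_le] at this
    apply div_nonneg (by linarith [this.1]) (by linarith)
  have hwm_nonneg : ∀ i, 0 ≤ wm i := fun i => by
    have := haabs i; rw [abs_le] at this
    apply div_nonneg (by linarith [this.2]) (by linarith)
  have hwp_le : ∀ i, wp i ≤ 1 := fun i => by
    have := haabs i; rw [abs_le] at this
    rw [hwp, div_le_one (by linarith)]
    linarith [this.2, hn1]
  have hwm_le : ∀ i, wm i ≤ 1 := fun i => by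
    have := haabs i; rw [abs_le] at this
    rw [hwm, div_le_one (by linarith)]
    linarith [this.1, hn1]
  refine ⟨∑ i, (wp i • ζ i true + wm i • ζ i false), fun j => ?_, ?_⟩
  · -- feasibility
    have hexp : dotProduct (G j) (∑ i, (wp i • ζ i true + wm i • ζ i false) : EuclideanSpace ℝ (Fin n_z)) =
        ∑ i, (wp i * dotProduct (G j) (ζ i true)
            + wm i * dotProduct (G j) (ζ i false)) := by
      have h0 : dotProduct (G j) (∑ i, (wp i • ζ i true + wm i • ζ i false) : EuclideanSpace ℝ (Fin n_z)) =
          dp (toE (G j)) (∑ i, (wp i • ζ i true + wm i • ζ i false)) := rfl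
      rw [h0, dp_sum_right]
      apply Finset.sum_congr rfl
      intro i _
      rw [dp_add_right, dp_smul_right, dp_smul_right]
      rfl
    rw [hexp]
    have hbound : ∀ i : Fin n_x,
        wp i * dotProduct (G j) (ζ i true) + wm i * dotProduct (G j) (ζ i false)
        ≤ wp i * (dotProduct (S j) (p i true) + w j)
          + wm i * (dotProduct (S j) (p i false) + w j) := by
      intro i
      apply add_le_add
      · exact mul_le_mul_of_nonneg_left (hζ_spec i true j) (hwp_nonneg i)
      · exact mul_le_mul_of_nonneg_left (hζ_spec i false j) (hwm_nonneg i)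
    apply le_trans (Finset.sum_le_sum fun i _ => hbound i)
    -- now the exact identity
    have hpd : ∀ i b, dotProduct (S j) (p i b) =
        dotProduct (S j) x₀ + (cond b (r * nn) (-(r * nn))) * (S j i) := by
      intro i b
      have h1 : dotProduct (S j) (p i b) = dp (toE (S j)) (p i b) := rfl
      rw [h1, hp]
      rw [dp_add_right, dp_smul_right, dp_single]
      rfl
    have hterm : ∀ i : Fin n_x,
        wp i * (dotProduct (S j) (p i true) + w j)
          + wm i * (dotProduct (S j) (p i false) + w j)
        = (1 / nn) * (dotProduct (S j) x₀ + w j) + u i * S j i := by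
      intro i
      rw [hpd i true, hpd i false]
      simp only [cond_true, cond_false, hwp, hwm]
      have hai : a i * r = u i := by rw [ha]; field_simp
      rw [← hai]
      field_simp
      ring
    rw [Finset.sum_congr rfl fun i _ => hterm i]
    rw [Finset.sum_add_distrib, Finset.sum_const, Finset.card_univ, Fintype.card_fin]
    have hsv : dotProduct (S j) v = dotProduct (S j) x₀ + ∑ i, u i * S j i := by
      have h1 : dotProduct (S j) v = dp (toE (S j)) v := rfl
      have h2 : dotProduct (S j) x₀ = dp (toE (S j)) x₀ := rfl
      have h3 : dp (toE (S j)) v - dp (toE (S j)) x₀ = dp (toE (S j)) u := by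
        rw [hu, dp_sub_right]
      have h4 : dp (toE (S j)) u = ∑ i, u i * S j i := by
        rw [dp_eq_sum]; apply Finset.sum_congr rfl; intro i _; rw [toE_apply]; ring
      rw [h1, h2] at *
      linarith [h3, h4]
    rw [hsv]
    have hns : n_x • ((1 / nn) * (dotProduct (S j) x₀ + w j))
        = dotProduct (S j) x₀ + w j := by
      rw [nsmul_eq_mul, ← hnn]; field_simp
    rw [hns]
    linarith
  · -- norm bound
    apply le_trans (norm_sum_le _ _)
    apply Finset.sum_le_sum
    intro i _
    apply le_trans (norm_add_le _ _)
    apply add_le_add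
    · rw [norm_smul, Real.norm_eq_abs, abs_of_nonneg (hwp_nonneg i)]
      exact mul_le_of_le_one_left (norm_nonneg _) (hwp_le i)
    · rw [norm_smul, Real.norm_eq_abs, abs_of_nonneg (hwm_nonneg i)]
      exact mul_le_of_le_one_left (norm_nonneg _) (hwm_le i)


section Main

variable {n_x n_z : ℕ} (H : Matrix (Fin n_z) (Fin n_z) ℝ) (F : Matrix (Fin n_x) (Fin n_z) ℝ)

noncomputable def Vq (x : EuclideanSpace ℝ (Fin n_x)) (z : EuclideanSpace ℝ (Fin n_z)) : ℝ :=
  (1/2) * dp z (mulVecE H z) + dp x (mulVecE F z)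

noncomputable def grad (x : EuclideanSpace ℝ (Fin n_x)) (z : EuclideanSpace ℝ (Fin n_z)) :
    EuclideanSpace ℝ (Fin n_z) := mulVecE H z + mulVecE Fᵀ x

lemma expand (hsym : Hᵀ = H) (x : EuclideanSpace ℝ (Fin n_x))
    (z d : EuclideanSpace ℝ (Fin n_z)) (t : ℝ) :
    Vq H F x (z + t • d) = Vq H F x z + t * dp (grad H F x z) d
      + t^2 * (dp d (mulVecE H d) / 2) := by
  have hcross : dp z (mulVecE H d) = dp d (mulVecE H z) := by
    rw [dp_mulVecE_symm, hsym]
  have hFd : dp x (mulVecE F d) = dp d (mulVecE Fᵀ x) := dp_mulVecE_symm F x d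
  have hgd : dp (grad H F x z) d = dp d (mulVecE H z) + dp d (mulVecE Fᵀ x) := by
    rw [grad, dp_comm, dp_add_right]
  rw [Vq, Vq, mulVecE_add, mulVecE_smul, dp_add_left, dp_add_right, dp_add_right,
    dp_smul_left, dp_smul_right, dp_smul_right, mulVecE_add, mulVecE_smul,
    dp_add_right, dp_smul_right, hgd, hcross, hFd]
  rw [dp_smul_left]
  ring

lemma min_quadratic_growth (hsym : Hᵀ = H) {μ : ℝ} (hμ0 : 0 ≤ μ)
    (hμ : ∀ d : EuclideanSpace ℝ (Fin n_z), μ * ‖d‖ ^ 2 ≤ dp d (mulVecE H d))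
    (x : EuclideanSpace ℝ (Fin n_x)) (K : Set (EuclideanSpace ℝ (Fin n_z)))
    (zs : EuclideanSpace ℝ (Fin n_z))
    (hconv : ∀ z' ∈ K, ∀ t : ℝ, 0 < t → t ≤ 1 → zs + t • (z' - zs) ∈ K)
    (hopt : ∀ z' ∈ K, Vq H F x zs ≤ Vq H F x z') :
    ∀ z' ∈ K, Vq H F x zs + μ * ‖z' - zs‖ ^ 2 / 2 ≤ Vq H F x z' := by
  intro z' hz'
  set d : EuclideanSpace ℝ (Fin n_z) := z' - zs with hd
  set q : ℝ := dp d (mulVecE H d) with hq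
  have hq0 : 0 ≤ q := le_trans (by positivity) (hμ d)
  have hVI : 0 ≤ dp (grad H F x zs) d := by
    by_contra hneg
    push_neg at hneg
    set g : ℝ := dp (grad H F x zs) d with hg
    set t : ℝ := min 1 (-g / (q + 1)) with ht
    have htpos : 0 < t := by
      apply lt_min one_pos
      apply div_pos (by linarith) (by linarith)
    have htle : t ≤ 1 := min_le_left _ _
    have hmem := hconv z' hz' t htpos htle
    have hle := hopt _ hmem
    rw [expand H F hsym] at hle
    have htq : t * q ≤ -g := by
      rcases le_or_gt q 0 with h | h
      · nlinarith
      · have : t ≤ -g / (q + 1) := min_le_right _ _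
        have h2 : t * (q + 1) ≤ -g := by
          rw [← div_mul_cancel₀ (-g) (by linarith : (q:ℝ) + 1 ≠ 0)]
          exact mul_le_mul_of_nonneg_right this (by linarith)
        nlinarith
    nlinarith
  have h1 : zs + (1:ℝ) • d = z' := by
    rw [one_smul, hd]; abel
  have := expand H F hsym x zs d 1
  rw [h1] at this
  rw [this]
  have := hμ d
  nlinarith [hVI]




lemma norm_toE_le_of_bound {m : ℕ} (v : Fin m → ℝ) (c : ℝ) (hc : 0 ≤ c)
    (h : ∀ j, |v j| ≤ c) : ‖toE v‖ ≤ Real.sqrt m * c := by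
  rw [EuclideanSpace.norm_eq]
  have : ∀ j : Fin m, ‖toE v j‖ ^ 2 ≤ c ^ 2 := by
    intro j
    rw [Real.norm_eq_abs, toE_apply]
    exact pow_le_pow_left₀ (abs_nonneg _) (h j) 2
  calc Real.sqrt (∑ j, ‖toE v j‖ ^ 2) ≤ Real.sqrt (∑ _j : Fin m, c ^ 2) :=
        Real.sqrt_le_sqrt (Finset.sum_le_sum fun j _ => this j)
  _ = Real.sqrt m * c := by
      rw [Finset.sum_const, Finset.card_univ, Fintype.card_fin, nsmul_eq_mul,
        Real.sqrt_mul (by positivity), Real.sqrt_sq hc]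

variable {n_c : ℕ} (G : Matrix (Fin n_c) (Fin n_z) ℝ) (S : Matrix (Fin n_c) (Fin n_x) ℝ)
  (w : Fin n_c → ℝ)

/-- the "certificate" condition: `z` solves the equality-constrained problem with
active set `A` at parameter `x`. -/
def CA (A : Finset (Fin n_c)) (x : EuclideanSpace ℝ (Fin n_x))
    (z : EuclideanSpace ℝ (Fin n_z)) : Prop :=
  (∀ j ∈ A, dotProduct (G j) z = dotProduct (S j) x + w j) ∧
  (∀ d : EuclideanSpace ℝ (Fin n_z), (∀ j ∈ A, dotProduct (G j) d = 0) →
    dp (grad H F x z) d = 0)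

lemma active_lipschitz (hH : H.PosDef) (A : Finset (Fin n_c)) :
    ∃ L, 0 ≤ L ∧ ∀ x₁ z₁ x₂ z₂, CA H F G S w A x₁ z₁ → CA H F G S w A x₂ z₂ →
      ‖z₁ - z₂‖ ≤ L * ‖x₁ - x₂‖ := by
  classical
  set Ψ : EuclideanSpace ℝ (Fin n_z) →ₗ[ℝ] EuclideanSpace ℝ (Fin n_c) :=
    { toFun := fun z => toE (fun j => if j ∈ A then dotProduct (G j) z else 0)
      map_add' := fun a b => by
        ext j
        by_cases hj : j ∈ A <;>
          simp [toE_apply, hj, PiLp.add_apply, dotProduct, add_mul,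
            Finset.sum_add_distrib, mul_add]
      map_smul' := fun c a => by
        ext j
        by_cases hj : j ∈ A <;>
          simp [toE_apply, hj, PiLp.smul_apply, smul_eq_mul, dotProduct,
            Finset.mul_sum, mul_left_comm] } with hΨ
  have hΨ_apply : ∀ z j, Ψ z j = if j ∈ A then dotProduct (G j) z else 0 :=
    fun z j => rfl
  set K : Submodule ℝ (EuclideanSpace ℝ (Fin n_z)) := LinearMap.ker Ψ with hK
  have hKmem : ∀ d, d ∈ K ↔ ∀ j ∈ A, dotProduct (G j) d = 0 := by
    intro d
    constructor
    · intro hd j hj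
      have := congrFun (congrArg (fun v : EuclideanSpace ℝ (Fin n_c) => (v : Fin n_c → ℝ)) hd) j
      simpa [hΨ_apply, hj] using this
    · intro hd
      have : Ψ d = 0 := by
        ext j
        by_cases hj : j ∈ A <;> simp [hΨ_apply, hj, hd]
      exact this
  set π := K.orthogonalProjectionOnto with hπ
  set Φ : EuclideanSpace ℝ (Fin n_z) →ₗ[ℝ] EuclideanSpace ℝ (Fin n_c) × K :=
    LinearMap.prod Ψ ((π : EuclideanSpace ℝ (Fin n_z) →L[ℝ] K).toLinearMap.comp (mulVecL H))
    with hΦ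
  have hinj : LinearMap.ker Φ = ⊥ := by
    rw [LinearMap.ker_eq_bot]
    intro z₁ z₂ hz
    have hdiff : Φ (z₁ - z₂) = 0 := by rw [map_sub, hz, sub_self]
    set z := z₁ - z₂ with hzdef
    have h1 : Ψ z = 0 := congrArg Prod.fst hdiff
    have h2 : π (mulVecE H z) = 0 := congrArg Prod.snd hdiff
    have hzK : z ∈ K := h1
    have hHzK : mulVecE H z ∈ Kᗮ := Submodule.orthogonalProjectionOnto_eq_zero_iff.mp h2
    have hzero : dp z (mulVecE H z) = 0 := by
      rw [dp_eq_inner]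
      exact Submodule.inner_right_of_mem_orthogonal hzK hHzK
    have : z = 0 := by
      by_contra hne
      exact absurd hzero (ne_of_gt (posdef_dp_pos hH z hne))
    have := sub_eq_zero.mp (hzdef ▸ this)
    exact this
  obtain ⟨Ξ, hΞ⟩ := Φ.exists_leftInverse_of_injective hinj
  set Ξ' := LinearMap.toContinuousLinearMap Ξ with hΞ'
  obtain ⟨CS, hCS0, hCS⟩ := exists_row_bound S
  obtain ⟨CF, hCF0, hCF⟩ := exists_mulVec_bound (Fᵀ : Matrix (Fin n_z) (Fin n_x) ℝ)
  refine ⟨‖Ξ'‖ * (Real.sqrt n_c * CS + CF), mul_nonneg (ContinuousLinearMap.opNorm_nonneg _) (by positivity), ?_⟩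
  intro x₁ z₁ x₂ z₂ h1 h2
  set δz := z₁ - z₂ with hδz
  set δx := x₁ - x₂ with hδx
  -- first component
  have hfst : Ψ δz = toE (fun j => if j ∈ A then dotProduct (S j) δx else 0) := by
    ext j
    rw [hΨ_apply]
    by_cases hj : j ∈ A
    · simp only [hj, if_true, toE_apply]
      have e1 : dotProduct (G j) δz = dp (toE (G j)) z₁ - dp (toE (G j)) z₂ := by
        rw [hδz, ← dp_sub_right]; rfl
      have e2 : dotProduct (S j) δx = dp (toE (S j)) x₁ - dp (toE (S j)) x₂ := by
        rw [hδx, ← dp_sub_right]; rfl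
      have g1 : dp (toE (G j)) z₁ = dotProduct (S j) x₁ + w j := h1.1 j hj
      have g2 : dp (toE (G j)) z₂ = dotProduct (S j) x₂ + w j := h2.1 j hj
      rw [e1, e2, g1, g2]
      have : (dotProduct (S j) x₁ : ℝ) = dp (toE (S j)) x₁ := rfl
      have h2' : (dotProduct (S j) x₂ : ℝ) = dp (toE (S j)) x₂ := rfl
      rw [this, h2']
      ring
    · simp [hj, toE_apply]
  -- second component
  have hKorth : mulVecE H δz + mulVecE Fᵀ δx ∈ Kᗮ := by
    rw [Submodule.mem_orthogonal]
    intro u hu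
    have hu' : ∀ j ∈ A, dotProduct (G j) u = 0 := (hKmem u).mp hu
    have e1 : dp (grad H F x₁ z₁) u = 0 := h1.2 u hu'
    have e2 : dp (grad H F x₂ z₂) u = 0 := h2.2 u hu'
    have ediff : dp (grad H F x₁ z₁ - grad H F x₂ z₂) u = 0 := by
      rw [dp_sub_left, e1, e2, sub_zero]
    have hgd : grad H F x₁ z₁ - grad H F x₂ z₂ = mulVecE H δz + mulVecE Fᵀ δx := by
      rw [grad, grad, hδz, hδx, mulVecE_sub, mulVecE_sub]
      abel
    rw [hgd] at ediff
    rw [real_inner_comm, ← dp_eq_inner]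
    exact ediff
  have hsnd : π (mulVecE H δz) = - π (mulVecE Fᵀ δx) := by
    have : π (mulVecE H δz + mulVecE Fᵀ δx) = 0 := Submodule.orthogonalProjectionOnto_eq_zero_iff.mpr hKorth
    rw [map_add] at this
    linear_combination (norm := module) this
  -- assemble
  have hΦδz : Φ δz = (toE (fun j => if j ∈ A then dotProduct (S j) δx else 0),
      - π (mulVecE Fᵀ δx)) := by
    rw [hΦ]
    ext <;> simp only [LinearMap.prod_apply, Pi.prod, LinearMap.coe_comp,
      ContinuousLinearMap.coe_coe, Function.comp_apply]
    · show (Ψ δz).ofLp _ = _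
      rw [hfst]
    · show ((π (mulVecL H δz) : K) : EuclideanSpace ℝ (Fin n_z)).ofLp _ = _
      rw [show (mulVecL H) δz = mulVecE H δz from rfl, hsnd]
  have hrecover : δz = Ξ (Φ δz) := by
    have := LinearMap.congr_fun hΞ δz
    simp only [LinearMap.comp_apply, LinearMap.id_apply] at this
    exact this.symm
  have hnorm1 : ‖toE (fun j => if j ∈ A then dotProduct (S j) δx else 0)‖
      ≤ Real.sqrt n_c * (CS * ‖δx‖) := by
    apply norm_toE_le_of_bound _ _ (by positivity)
    intro j
    by_cases hj : j ∈ A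
    · simp only [hj, if_true]
      exact hCS j δx
    · simp only [hj, if_false, abs_zero]
      positivity
  have hnorm2 : ‖(- π (mulVecE Fᵀ δx) : K)‖ ≤ CF * ‖δx‖ := by
    rw [norm_neg]
    calc ‖π (mulVecE Fᵀ δx)‖ ≤ ‖(π : _ →L[ℝ] K)‖ * ‖mulVecE Fᵀ δx‖ :=
          ContinuousLinearMap.le_opNorm _ _
    _ ≤ 1 * ‖mulVecE Fᵀ δx‖ :=
        mul_le_mul_of_nonneg_right K.orthogonalProjectionOnto_norm_le (norm_nonneg _)
    _ = ‖mulVecE Fᵀ δx‖ := one_mul _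
    _ ≤ CF * ‖δx‖ := hCF δx
  have hΦnorm : ‖Φ δz‖ ≤ (Real.sqrt n_c * CS + CF) * ‖δx‖ := by
    rw [hΦδz, Prod.norm_def]
    apply max_le
    · calc _ ≤ Real.sqrt ↑n_c * (CS * ‖δx‖) := hnorm1
        _ ≤ (Real.sqrt n_c * CS + CF) * ‖δx‖ := by nlinarith [mul_nonneg (mul_nonneg (Real.sqrt_nonneg (n_c:ℝ)) hCS0) (norm_nonneg δx), mul_nonneg hCF0 (norm_nonneg δx)]
    · calc _ ≤ CF * ‖δx‖ := hnorm2
        _ ≤ (Real.sqrt n_c * CS + CF) * ‖δx‖ := by nlinarith [mul_nonneg (mul_nonneg (Real.sqrt_nonneg (n_c:ℝ)) hCS0) (norm_nonneg δx), mul_nonneg hCF0 (norm_nonneg δx)]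
  calc ‖δz‖ = ‖Ξ (Φ δz)‖ := by rw [← hrecover]
  _ = ‖Ξ' (Φ δz)‖ := rfl
  _ ≤ ‖Ξ'‖ * ‖Φ δz‖ := Ξ'.le_opNorm _
  _ ≤ ‖Ξ'‖ * ((Real.sqrt n_c * CS + CF) * ‖δx‖) :=
      mul_le_mul_of_nonneg_left hΦnorm (ContinuousLinearMap.opNorm_nonneg _)
  _ = ‖Ξ'‖ * (Real.sqrt n_c * CS + CF) * ‖δx‖ := by ring

end Main
end MPQP

namespace MPQP

lemma continuous_mulVecE {m n : ℕ} (M : Matrix (Fin m) (Fin n) ℝ) :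
    Continuous fun v : EuclideanSpace ℝ (Fin n) => mulVecE M v :=
  (LinearMap.toContinuousLinearMap (mulVecL M)).continuous

lemma continuous_dp_comp {α : Type*} [TopologicalSpace α] {m : ℕ}
    (a : EuclideanSpace ℝ (Fin m)) (f : α → EuclideanSpace ℝ (Fin m))
    (hf : Continuous f) : Continuous fun t => dp a (f t) := by
  have h2 : Continuous fun t => (inner ℝ a (f t) : ℝ) := Continuous.inner continuous_const hf
  simpa only [dp_eq_inner] using h2

end MPQP

lemma half_add_le (X Y C D : ℝ) (h1 : X ≤ C) (h2 : Y ≤ D) : 1/2 * X + Y ≤ C/2 + D := by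
  linarith

lemma abs_combo_le (X B' Y c1 c2 n : ℝ) (hX : |X| ≤ c1 * n) (hB : |B'| ≤ c1 * n)
    (hY : |Y| ≤ c2 * n) : |(X + B')/2 + Y| ≤ (c1 + c2) * n := by
  have h1 := abs_add_le ((X + B')/2) Y
  have h2 := abs_add_le X B'
  have h3 : |(X+B')/2| = |X+B'|/2 := by rw [abs_div]; norm_num
  nlinarith

open MPQP Matrix Set in
/-- Remark 1: a global Lipschitz constant for the mp-QP always exists. -/
theorem mpQP_global_lipschitz_constant_exists
    (n_x n_z n_c : ℕ) (hnx : 0 < n_x) (hnz : 0 < n_z) (hnc : 0 < n_c)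
    (H : Matrix (Fin n_z) (Fin n_z) ℝ) (hH : H.PosDef)
    (F : Matrix (Fin n_x) (Fin n_z) ℝ)
    (G : Matrix (Fin n_c) (Fin n_z) ℝ)
    (S : Matrix (Fin n_c) (Fin n_x) ℝ)
    (w : Fin n_c → ℝ)
    (V : EuclideanSpace ℝ (Fin n_x) → EuclideanSpace ℝ (Fin n_z) → ℝ)
    (hV : ∀ x z, V x z = (1 / 2) * dotProduct z (H.mulVec z)
      + dotProduct x (F.mulVec z))
    (Z : EuclideanSpace ℝ (Fin n_x) → Set (Fin n_c) → Set (EuclideanSpace ℝ (Fin n_z)))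
    (hZ : ∀ x I, Z x I =
      {z : EuclideanSpace ℝ (Fin n_z) | ∀ j ∈ I, dotProduct (G j) z ≤ dotProduct (S j) x + w j})
    (hfeas : ∀ x, (Z x Set.univ).Nonempty)
    (zstar : EuclideanSpace ℝ (Fin n_x) → Set (Fin n_c) → EuclideanSpace ℝ (Fin n_z))
    (hmem : ∀ x I, zstar x I ∈ Z x I)
    (hopt : ∀ x I, ∀ z ∈ Z x I, V x (zstar x I) ≤ V x z)
    (huniq : ∀ x I, ∀ z ∈ Z x I, (∀ z' ∈ Z x I, V x z ≤ V x z') → z = zstar x I)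
    : ∃ κ : ℝ, 0 ≤ κ ∧ ∀ (x₁ x₂ : EuclideanSpace ℝ (Fin n_x)) (I : Set (Fin n_c)),
      ‖zstar x₁ I - zstar x₂ I‖ ≤ κ * ‖x₁ - x₂‖ := by
  classical
  have hsym : Hᵀ = H := by
    have := hH.1.eq
    rwa [Matrix.conjTranspose_eq_transpose_of_trivial] at this
  have hVq : ∀ x z, V x z = Vq H F x z := by
    intro x z; rw [hV]; rfl
  obtain ⟨μ, hμpos, hμ⟩ := exists_posdef_lb hnz hH
  have hμ0 : 0 ≤ μ := le_of_lt hμpos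
  have hZmem : ∀ x I z, z ∈ Z x I ↔
      ∀ j ∈ I, dotProduct (G j) z ≤ dotProduct (S j) x + w j := by
    intro x I z; rw [hZ]; rfl
  have hfeas' : ∀ x : EuclideanSpace ℝ (Fin n_x), ∃ z : EuclideanSpace ℝ (Fin n_z),
      ∀ j, dotProduct (G j) z ≤ dotProduct (S j) x + w j := by
    intro x
    obtain ⟨z, hz⟩ := hfeas x
    exact ⟨z, fun j => (hZmem x Set.univ z).mp hz j (Set.mem_univ j)⟩
  -- quadratic growth at the minimizer
  have hgrow : ∀ (x : EuclideanSpace ℝ (Fin n_x)) (I : Set (Fin n_c))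
      (z' : EuclideanSpace ℝ (Fin n_z)), z' ∈ Z x I →
      Vq H F x (zstar x I) + μ * ‖z' - zstar x I‖ ^ 2 / 2 ≤ Vq H F x z' := by
    intro x I z' hz'
    refine min_quadratic_growth H F hsym hμ0 hμ x (Z x I) (zstar x I) ?_ ?_ z' hz'
    · intro z'' hz'' t ht0 ht1
      rw [hZmem] at hz'' ⊢
      intro j hj
      have h1 := hz'' j hj
      have h2 := (hZmem x I (zstar x I)).mp (hmem x I) j hj
      have hexp : dotProduct (G j) (zstar x I + t • (z'' - zstar x I) : EuclideanSpace ℝ (Fin n_z)) =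
          dotProduct (G j) (zstar x I)
          + t * (dotProduct (G j) z'' - dotProduct (G j) (zstar x I)) := by
        have e : dotProduct (G j) (zstar x I + t • (z'' - zstar x I) : EuclideanSpace ℝ (Fin n_z)) =
            dp (toE (G j)) (zstar x I + t • (z'' - zstar x I)) := rfl
        rw [e, dp_add_right, dp_smul_right, dp_sub_right]; rfl
      rw [hexp]
      nlinarith
    · intro z'' hz''
      have := hopt x I z'' hz''
      rwa [hVq, hVq] at this
  -- KKT certificate: every minimizer satisfies CA for its active set
  have hcert : ∀ (I : Set (Fin n_c)) (x : EuclideanSpace ℝ (Fin n_x)),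
      CA H F G S w (Finset.univ.filter (fun j => j ∈ I ∧
        dotProduct (G j) (zstar x I) = dotProduct (S j) x + w j)) x
        (zstar x I) := by
    intro I x
    set zs := zstar x I with hzs
    set A := Finset.univ.filter (fun j => j ∈ I ∧
        dotProduct (G j) zs = dotProduct (S j) x + w j) with hA
    constructor
    · intro j hj
      rw [hA, Finset.mem_filter] at hj
      exact hj.2.2
    · intro d hd
      set inact := Finset.univ.filter (fun j => j ∈ I ∧
        ¬ (dotProduct (G j) zs = dotProduct (S j) x + w j)) with hinact
      set f : Fin n_c → ℝ := fun j =>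
        (dotProduct (S j) x + w j - dotProduct (G j) zs)
          / (|dotProduct (G j) d| + 1) with hf
      have hgap : ∀ j ∈ inact,
          0 < dotProduct (S j) x + w j - dotProduct (G j) zs := by
        intro j hj
        rw [hinact, Finset.mem_filter] at hj
        have hle := (hZmem x I zs).mp (hmem x I) j hj.2.1
        have := lt_of_le_of_ne hle hj.2.2
        linarith
      have hfpos : ∀ j ∈ inact, 0 < f j := by
        intro j hj
        exact div_pos (hgap j hj) (by positivity)
      set t₀ : ℝ := if h : inact.Nonempty then inact.inf' h f else 1 with ht₀
      have ht₀pos : 0 < t₀ := by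
        rw [ht₀]
        split
        · next h => exact (Finset.lt_inf'_iff h).mpr fun j hj => hfpos j hj
        · exact one_pos
      have ht₀le : ∀ j ∈ inact, t₀ ≤ f j := by
        intro j hj
        rw [ht₀]
        rw [dif_pos ⟨j, hj⟩]
        exact Finset.inf'_le f hj
      have hfeast : ∀ t : ℝ, |t| ≤ t₀ → zs + t • d ∈ Z x I := by
        intro t htle
        rw [hZmem]
        intro j hj
        have hexp : dotProduct (G j) (zs + t • d : EuclideanSpace ℝ (Fin n_z)) =
            dotProduct (G j) zs + t * dotProduct (G j) d := by
          have e : dotProduct (G j) (zs + t • d : EuclideanSpace ℝ (Fin n_z)) = dp (toE (G j)) (zs + t • d) := rfl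
          rw [e, dp_add_right, dp_smul_right]; rfl
        rw [hexp]
        by_cases hjA : j ∈ A
        · rw [hd j hjA, mul_zero, add_zero]
          rw [hA, Finset.mem_filter] at hjA
          exact le_of_eq hjA.2.2
        · have hjin : j ∈ inact := by
            rw [hinact, Finset.mem_filter]
            refine ⟨Finset.mem_univ j, hj, fun hc => hjA ?_⟩
            rw [hA, Finset.mem_filter]
            exact ⟨Finset.mem_univ j, hj, hc⟩
          have hgapj := hgap j hjin
          have htj := le_trans htle (ht₀le j hjin)
          set gd := |dotProduct (G j) d| with hgd
          have hfj : f j * (gd + 1) =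
              dotProduct (S j) x + w j - dotProduct (G j) zs := by
            rw [hf]
            field_simp
            rfl
          have h1 : t * dotProduct (G j) d ≤ |t| * gd := by
            calc t * dotProduct (G j) d ≤ |t * dotProduct (G j) d| := le_abs_self _
            _ = |t| * gd := abs_mul _ _
          have h2 : |t| * gd ≤ f j * gd :=
            mul_le_mul_of_nonneg_right htj (abs_nonneg _)
          have hfj0 : 0 ≤ f j := le_of_lt (hfpos j hjin)
          nlinarith [abs_nonneg (dotProduct (G j) d)]
      set g := dp (grad H F x zs) d with hg
      set q := dp d (mulVecE H d) with hq
      have hq0 : 0 ≤ q := le_trans (by positivity) (hμ d)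
      have hbound : ∀ t : ℝ, 0 < t → t ≤ t₀ → |g| ≤ t * q / 2 := by
        intro t ht0 htle
        have hp' := hopt x I _ (hfeast t (by rw [abs_of_pos ht0]; exact htle))
        have hm' := hopt x I _ (hfeast (-t) (by rw [abs_neg, abs_of_pos ht0]; exact htle))
        rw [hVq, hVq] at hp' hm'
        rw [expand H F hsym] at hp' hm'
        rw [← hzs, ← hg, ← hq] at hp' hm'
        rw [abs_le]
        constructor <;> nlinarith
      by_contra hne
      have habs : 0 < |g| := abs_pos.mpr hne
      set t := min t₀ (|g| / (q + 1)) with ht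
      have ht0 : 0 < t := lt_min ht₀pos (div_pos habs (by linarith))
      have hb := hbound t ht0 (min_le_left _ _)
      have ht2 : t ≤ |g| / (q + 1) := min_le_right _ _
      have h2 : t * (q + 1) ≤ |g| := by
        rw [← div_mul_cancel₀ (|g|) (by linarith : (q:ℝ) + 1 ≠ 0)]
        exact mul_le_mul_of_nonneg_right ht2 (by linarith)
      nlinarith
  -- local continuity of the solution map
  have hcont : ∀ (I : Set (Fin n_c)) (x : EuclideanSpace ℝ (Fin n_x)) (ε : ℝ), 0 < ε →
      ∃ δ > 0, ∀ y, ‖y - x‖ ≤ δ → ‖zstar y I - zstar x I‖ ≤ ε := by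
    intro I x ε hε
    set zx := zstar x I with hzx
    obtain ⟨M₀, hM₀⟩ := feas_bound hnx G S w hfeas' x 4 (by norm_num)
    set M := max M₀ 0 with hM
    have hM0 : 0 ≤ M := le_max_right _ _
    have hM' : ∀ v, ‖v - x‖ ≤ 4 → ∃ zv : EuclideanSpace ℝ (Fin n_z),
        (∀ j, dotProduct (G j) zv ≤ dotProduct (S j) v + w j) ∧ ‖zv‖ ≤ M := by
      intro v hv
      obtain ⟨zv, h1, h2⟩ := hM₀ v hv
      exact ⟨zv, h1, le_trans h2 (le_max_left _ _)⟩
    -- lower semicontinuity of the feasible set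
    have hlsc : ∀ p q : EuclideanSpace ℝ (Fin n_x), ‖p - x‖ ≤ 1 → ‖q - x‖ ≤ 1 →
        ∀ z : EuclideanSpace ℝ (Fin n_z),
        (∀ j ∈ I, dotProduct (G j) z ≤ dotProduct (S j) p + w j) →
        ∃ z' : EuclideanSpace ℝ (Fin n_z),
          (∀ j ∈ I, dotProduct (G j) z' ≤ dotProduct (S j) q + w j) ∧
          ‖z' - z‖ ≤ (M + ‖z‖) * ‖q - p‖ := by
      intro p q hp hq z hzfeas
      rcases eq_or_ne q p with rfl | hne
      · exact ⟨z, hzfeas, by simp⟩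
      · set c := ‖q - p‖ with hc
        have hcpos : 0 < c := norm_pos_iff.mpr (sub_ne_zero.mpr hne)
        set v : EuclideanSpace ℝ (Fin n_x) := q + c⁻¹ • (q - p) with hv
        have hvx : ‖v - x‖ ≤ 4 := by
          have e : v - x = (q - x) + c⁻¹ • (q - p) := by rw [hv]; abel
          rw [e]
          have h1 : ‖c⁻¹ • (q - p)‖ = 1 := by
            rw [norm_smul, Real.norm_eq_abs, abs_of_pos (inv_pos.mpr hcpos), ← hc,
              inv_mul_cancel₀ (ne_of_gt hcpos)]
          calc ‖(q - x) + c⁻¹ • (q - p)‖ ≤ ‖q - x‖ + ‖c⁻¹ • (q - p)‖ := norm_add_le _ _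
          _ ≤ 1 + 1 := add_le_add hq (le_of_eq h1)
          _ ≤ 4 := by norm_num
        obtain ⟨zv, hzv, hzvM⟩ := hM' v hvx
        set s : ℝ := c / (c + 1) with hs
        have hs0 : 0 ≤ s := div_nonneg (le_of_lt hcpos) (by linarith)
        have hs1 : s ≤ 1 := by rw [hs, div_le_one (by linarith)]; linarith
        have hsc : s ≤ c := by
          rw [hs, div_le_iff₀ (by linarith)]
          nlinarith
        have hvp : q - p = s • (v - p) := by
          have e1 : v - p = (1 + c⁻¹) • (q - p) := by
            rw [hv, add_smul, one_smul]
            abel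
          rw [e1, smul_smul]
          have : s * (1 + c⁻¹) = 1 := by
            rw [hs]; field_simp
          rw [this, one_smul]
        refine ⟨z + s • (zv - z), ?_, ?_⟩
        · intro j hj
          have hcomb : dotProduct (S j) q = dotProduct (S j) p
              + s * (dotProduct (S j) v - dotProduct (S j) p) := by
            have e1 : dp (toE (S j)) (q - p) = dp (toE (S j)) (s • (v - p)) := by rw [← hvp]
            rw [dp_smul_right, dp_sub_right, dp_sub_right] at e1
            have e2 : dp (toE (S j)) q = dotProduct (S j) q := rfl
            have e3 : dp (toE (S j)) p = dotProduct (S j) p := rfl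
            have e4 : dp (toE (S j)) v = dotProduct (S j) v := rfl
            rw [e2, e3, e4] at e1
            linarith
          have h1 := hzfeas j hj
          have h2 := hzv j
          have hexp : dotProduct (G j) (z + s • (zv - z) : EuclideanSpace ℝ (Fin n_z)) =
              dotProduct (G j) z
              + s * (dotProduct (G j) zv - dotProduct (G j) z) := by
            have e : dotProduct (G j) (z + s • (zv - z) : EuclideanSpace ℝ (Fin n_z)) =
                dp (toE (G j)) (z + s • (zv - z)) := rfl
            rw [e, dp_add_right, dp_smul_right, dp_sub_right]; rfl
          rw [hexp, hcomb]
          nlinarith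
        · have e : z + s • (zv - z) - z = s • (zv - z) := by abel
          rw [e, norm_smul, Real.norm_eq_abs, abs_of_nonneg hs0]
          calc s * ‖zv - z‖ ≤ c * (M + ‖z‖) := by
                apply mul_le_mul hsc _ (norm_nonneg _) (le_of_lt hcpos)
                calc ‖zv - z‖ ≤ ‖zv‖ + ‖z‖ := norm_sub_le _ _
                _ ≤ M + ‖z‖ := add_le_add hzvM le_rfl
          _ = (M + ‖z‖) * c := mul_comm _ _
    -- matrix norm constants
    obtain ⟨CH, hCH0, hCH⟩ := exists_mulVec_bound H
    obtain ⟨CFm, hCFm0, hCFm⟩ := exists_mulVec_bound F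
    set a : ℝ := (‖x‖ + 1) * CFm with ha
    have ha0 : 0 ≤ a := mul_nonneg (by positivity) hCFm0
    have hzxfeas : ∀ j ∈ I, dotProduct (G j) zx ≤ dotProduct (S j) x + w j :=
      (hZmem x I zx).mp (hmem x I)
    -- uniform bound on minimizers near x
    have hBex : ∃ B, 0 ≤ B ∧ ∀ y, ‖y - x‖ ≤ 1 → ‖zstar y I‖ ≤ B := by
      set B₁ : ℝ := ‖zx‖ + (M + ‖zx‖) with hB₁
      have hB₁0 : 0 ≤ B₁ := by positivity
      set c₂ : ℝ := CH * B₁ ^ 2 / 2 + a * B₁ with hc₂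
      have hc₂0 : 0 ≤ c₂ := by positivity
      refine ⟨max ((2 * a + 2) / μ) c₂, le_max_of_le_right hc₂0, fun y hy => ?_⟩
      obtain ⟨z', hz'feas, hz'close⟩ := hlsc x y (by simp) hy zx hzxfeas
      have hz'norm : ‖z'‖ ≤ B₁ := by
        calc ‖z'‖ ≤ ‖zx‖ + ‖z' - zx‖ := norm_le_insert' z' zx
        _ ≤ ‖zx‖ + (M + ‖zx‖) * 1 := by
            apply add_le_add le_rfl
            apply le_trans hz'close
            apply mul_le_mul_of_nonneg_left _ (by positivity)
            simpa [norm_sub_rev] using hy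
        _ = B₁ := by rw [hB₁]; ring
      have hyopt := hopt y I z' ((hZmem y I z').mpr hz'feas)
      rw [hVq, hVq] at hyopt
      have hynorm : ‖y‖ ≤ ‖x‖ + 1 := by
        calc ‖y‖ = ‖x + (y - x)‖ := by congr 1; abel
        _ ≤ ‖x‖ + ‖y - x‖ := norm_add_le _ _
        _ ≤ ‖x‖ + 1 := add_le_add le_rfl hy
      have hub : Vq H F y z' ≤ c₂ := by
        rw [Vq]
        have f1 : |dp z' (mulVecE H z')| ≤ CH * B₁ ^ 2 := by
          calc |dp z' (mulVecE H z')| ≤ ‖z'‖ * ‖mulVecE H z'‖ := abs_dp_le _ _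
          _ ≤ ‖z'‖ * (CH * ‖z'‖) := mul_le_mul_of_nonneg_left (hCH z') (norm_nonneg _)
          _ ≤ B₁ * (CH * B₁) := mul_le_mul hz'norm (mul_le_mul_of_nonneg_left hz'norm hCH0) (by positivity) hB₁0
          _ = CH * B₁ ^ 2 := by ring
        have f2 : |dp y (mulVecE F z')| ≤ a * B₁ := by
          calc |dp y (mulVecE F z')| ≤ ‖y‖ * ‖mulVecE F z'‖ := abs_dp_le _ _
          _ ≤ (‖x‖ + 1) * (CFm * B₁) := by
              apply mul_le_mul hynorm _ (norm_nonneg _) (by positivity)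
              exact le_trans (hCFm z') (mul_le_mul_of_nonneg_left hz'norm hCFm0)
          _ = a * B₁ := by rw [ha]; ring
        rw [hc₂]
        exact half_add_le _ _ _ _ (le_trans (le_abs_self _) f1) (le_trans (le_abs_self _) f2)
      set t : ℝ := ‖zstar y I‖ with hzt
      have ht0 : 0 ≤ t := norm_nonneg _
      have hlb : μ / 2 * t ^ 2 - a * t ≤ Vq H F y (zstar y I) := by
        rw [Vq]
        have f1 : μ * t ^ 2 ≤ dp (zstar y I) (mulVecE H (zstar y I)) := hμ _
        have f2 : |dp y (mulVecE F (zstar y I))| ≤ a * t := by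
          calc |dp y (mulVecE F (zstar y I))| ≤ ‖y‖ * ‖mulVecE F (zstar y I)‖ := abs_dp_le _ _
          _ ≤ (‖x‖ + 1) * (CFm * t) := by
              apply mul_le_mul hynorm (hCFm _) (norm_nonneg _) (by positivity)
          _ = a * t := by rw [ha]; ring
        have g2 := neg_abs_le (dp y (mulVecE F (zstar y I)))
        nlinarith
      have hineq : μ / 2 * t ^ 2 - a * t ≤ c₂ := le_trans hlb (le_trans hyopt hub)
      by_contra hgt
      push_neg at hgt
      have h1 : (2 * a + 2) / μ < t := lt_of_le_of_lt (le_max_left _ _) hgt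
      have h2 : c₂ < t := lt_of_le_of_lt (le_max_right _ _) hgt
      have h3 : 2 * a + 2 < μ * t := by
        rw [div_lt_iff₀ hμpos] at h1
        linarith [mul_comm t μ]
      nlinarith
    obtain ⟨B, hB0, hBy⟩ := hBex
    have hzxB : ‖zx‖ ≤ B := by
      have := hBy x (by simp)
      rwa [← hzx] at this
    -- constants for the final estimate
    set B₂ : ℝ := B + (M + B) with hB₂
    have hB₂0 : 0 ≤ B₂ := by positivity
    set Λ : ℝ := CH * B₂ + (‖x‖ + 1) * CFm with hΛ
    have hΛ0 : 0 ≤ Λ := by positivity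
    set CΛ : ℝ := 2 * (CFm * B₂ + Λ * (M + B)) with hCΛ
    have hCΛ0 : 0 ≤ CΛ := by positivity
    -- V is Lipschitz in z on bounded sets, and in the parameter
    have hVzdiff : ∀ (y' : EuclideanSpace ℝ (Fin n_x)) (z z' : EuclideanSpace ℝ (Fin n_z)),
        ‖y' - x‖ ≤ 1 → ‖z‖ ≤ B₂ → ‖z'‖ ≤ B₂ →
        |Vq H F y' z - Vq H F y' z'| ≤ Λ * ‖z - z'‖ := by
      intro y' z z' hy' hzB hz'B
      have hy'norm : ‖y'‖ ≤ ‖x‖ + 1 := by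
        calc ‖y'‖ = ‖x + (y' - x)‖ := by congr 1; abel
        _ ≤ ‖x‖ + ‖y' - x‖ := norm_add_le _ _
        _ ≤ ‖x‖ + 1 := add_le_add le_rfl hy'
      have e1 : dp z (mulVecE H z) - dp z' (mulVecE H z') =
          dp (z - z') (mulVecE H z) + dp z' (mulVecE H (z - z')) := by
        rw [mulVecE_sub, dp_sub_right, dp_sub_left]
        ring
      have e2 : dp y' (mulVecE F z) - dp y' (mulVecE F z') = dp y' (mulVecE F (z - z')) := by
        rw [mulVecE_sub, dp_sub_right]
      have heq : Vq H F y' z - Vq H F y' z' =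
          (dp (z - z') (mulVecE H z) + dp z' (mulVecE H (z - z'))) / 2
            + dp y' (mulVecE F (z - z')) := by
        rw [Vq, Vq]
        linarith [e1, e2]
      have g1 : |dp (z - z') (mulVecE H z)| ≤ CH * B₂ * ‖z - z'‖ := by
        calc |dp (z - z') (mulVecE H z)| ≤ ‖z - z'‖ * ‖mulVecE H z‖ := abs_dp_le _ _
        _ ≤ ‖z - z'‖ * (CH * B₂) := by
            apply mul_le_mul_of_nonneg_left _ (norm_nonneg _)
            exact le_trans (hCH z) (mul_le_mul_of_nonneg_left hzB hCH0)
        _ = CH * B₂ * ‖z - z'‖ := mul_comm _ _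
      have g2 : |dp z' (mulVecE H (z - z'))| ≤ CH * B₂ * ‖z - z'‖ := by
        calc |dp z' (mulVecE H (z - z'))| ≤ ‖z'‖ * ‖mulVecE H (z - z')‖ := abs_dp_le _ _
        _ ≤ B₂ * (CH * ‖z - z'‖) := mul_le_mul hz'B (hCH _) (norm_nonneg _) hB₂0
        _ = CH * B₂ * ‖z - z'‖ := by ring
      have g3 : |dp y' (mulVecE F (z - z'))| ≤ (‖x‖ + 1) * CFm * ‖z - z'‖ := by
        calc |dp y' (mulVecE F (z - z'))| ≤ ‖y'‖ * ‖mulVecE F (z - z')‖ := abs_dp_le _ _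
        _ ≤ (‖x‖ + 1) * (CFm * ‖z - z'‖) :=
            mul_le_mul hy'norm (hCFm _) (norm_nonneg _) (by positivity)
        _ = (‖x‖ + 1) * CFm * ‖z - z'‖ := by ring
      rw [heq, hΛ]
      exact abs_combo_le _ _ _ _ _ _ g1 g2 g3
    have hVxdiff : ∀ (z : EuclideanSpace ℝ (Fin n_z)) (y' : EuclideanSpace ℝ (Fin n_x)),
        ‖z‖ ≤ B₂ → |Vq H F y' z - Vq H F x z| ≤ CFm * B₂ * ‖y' - x‖ := by
      intro z y' hzB
      have heq : Vq H F y' z - Vq H F x z = dp (y' - x) (mulVecE F z) := by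
        rw [Vq, Vq, dp_sub_left]
        ring
      rw [heq]
      calc |dp (y' - x) (mulVecE F z)| ≤ ‖y' - x‖ * ‖mulVecE F z‖ := abs_dp_le _ _
      _ ≤ ‖y' - x‖ * (CFm * B₂) := by
          apply mul_le_mul_of_nonneg_left _ (norm_nonneg _)
          exact le_trans (hCFm z) (mul_le_mul_of_nonneg_left hzB hCFm0)
      _ = CFm * B₂ * ‖y' - x‖ := mul_comm _ _
    -- choose δ
    set δ : ℝ := min 1 (min (ε / (2 * (M + B) + 1)) (μ * ε ^ 2 / (8 * (CΛ + 1)))) with hδ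
    have hδpos : 0 < δ := by
      apply lt_min one_pos
      apply lt_min
      · apply div_pos hε (by positivity)
      · apply div_pos (by positivity) (by positivity)
    refine ⟨δ, hδpos, fun y hyδ => ?_⟩
    have hyδ1 : ‖y - x‖ ≤ 1 := le_trans hyδ (min_le_left _ _)
    set zy := zstar y I with hzy
    have hzyB : ‖zy‖ ≤ B := hBy y hyδ1
    have hzyfeas : ∀ j ∈ I, dotProduct (G j) zy ≤ dotProduct (S j) y + w j :=
      (hZmem y I zy).mp (hmem y I)
    obtain ⟨z₁, hz₁feas, hz₁close⟩ := hlsc x y (by simp) hyδ1 zx hzxfeas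
    obtain ⟨z₂, hz₂feas, hz₂close⟩ := hlsc y x hyδ1 (by simp) zy hzyfeas
    have hz₁c : ‖z₁ - zx‖ ≤ (M + B) * ‖y - x‖ := by
      apply le_trans hz₁close
      apply mul_le_mul_of_nonneg_right _ (norm_nonneg _)
      linarith [hzxB]
    have hz₂c : ‖z₂ - zy‖ ≤ (M + B) * ‖y - x‖ := by
      apply le_trans hz₂close
      have e : ‖x - y‖ = ‖y - x‖ := norm_sub_rev _ _
      rw [e]
      apply mul_le_mul_of_nonneg_right _ (norm_nonneg _)
      linarith [hzyB]
    have hMB1 : (M + B) * ‖y - x‖ ≤ (M + B) * 1 := by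
      apply mul_le_mul_of_nonneg_left hyδ1 (by positivity)
    have hz₁B : ‖z₁‖ ≤ B₂ := by
      calc ‖z₁‖ ≤ ‖zx‖ + ‖z₁ - zx‖ := norm_le_insert' z₁ zx
      _ ≤ B + (M + B) := by
          apply add_le_add hzxB
          apply le_trans hz₁c
          linarith
      _ = B₂ := by rw [hB₂]
    have hz₂B : ‖z₂‖ ≤ B₂ := by
      calc ‖z₂‖ ≤ ‖zy‖ + ‖z₂ - zy‖ := norm_le_insert' z₂ zy
      _ ≤ B + (M + B) := by
          apply add_le_add hzyB
          apply le_trans hz₂c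
          linarith
      _ = B₂ := by rw [hB₂]
    have hzxB₂ : ‖zx‖ ≤ B₂ := by rw [hB₂]; linarith
    have hzyB₂ : ‖zy‖ ≤ B₂ := by rw [hB₂]; linarith
    -- optimality gap estimate
    have hgap : Vq H F y z₁ - Vq H F y zy ≤ CΛ * ‖y - x‖ := by
      have q1 : Vq H F y z₁ ≤ Vq H F y zx + Λ * ((M + B) * ‖y - x‖) := by
        have := hVzdiff y z₁ zx hyδ1 hz₁B hzxB₂
        have h' := le_trans (le_abs_self _) this
        have : Λ * ‖z₁ - zx‖ ≤ Λ * ((M + B) * ‖y - x‖) :=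
          mul_le_mul_of_nonneg_left hz₁c hΛ0
        linarith [le_trans (le_abs_self (Vq H F y z₁ - Vq H F y zx))
          (hVzdiff y z₁ zx hyδ1 hz₁B hzxB₂)]
      have q2 : Vq H F y zx ≤ Vq H F x zx + CFm * B₂ * ‖y - x‖ := by
        have := hVxdiff zx y hzxB₂
        linarith [le_trans (le_abs_self (Vq H F y zx - Vq H F x zx)) this]
      have q3 : Vq H F x zx ≤ Vq H F x z₂ := by
        have := hopt x I z₂ ((hZmem x I z₂).mpr hz₂feas)
        rwa [hVq, hVq, ← hzx] at this
      have q4 : Vq H F x z₂ ≤ Vq H F x zy + Λ * ((M + B) * ‖y - x‖) := by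
        have := hVzdiff x z₂ zy (by simp) hz₂B hzyB₂
        have h2 : Λ * ‖z₂ - zy‖ ≤ Λ * ((M + B) * ‖y - x‖) :=
          mul_le_mul_of_nonneg_left hz₂c hΛ0
        linarith [le_trans (le_abs_self (Vq H F x z₂ - Vq H F x zy)) this]
      have q5 : Vq H F x zy ≤ Vq H F y zy + CFm * B₂ * ‖y - x‖ := by
        have := hVxdiff zy y hzyB₂
        have h2 := neg_abs_le (Vq H F y zy - Vq H F x zy)
        linarith [abs_sub_comm (Vq H F y zy) (Vq H F x zy)]
      rw [hCΛ]
      linarith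
    -- quadratic growth at y
    have hgrow' := hgrow y I z₁ ((hZmem y I z₁).mpr hz₁feas)
    rw [← hzy] at hgrow'
    have hsq : μ * ‖z₁ - zy‖ ^ 2 / 2 ≤ CΛ * ‖y - x‖ := by linarith
    have hsqb : ‖z₁ - zy‖ ^ 2 ≤ (ε / 2) ^ 2 := by
      have hδ3 : ‖y - x‖ ≤ μ * ε ^ 2 / (8 * (CΛ + 1)) :=
        le_trans hyδ (le_trans (min_le_right _ _) (min_le_right _ _))
      have h1 : CΛ * ‖y - x‖ ≤ CΛ * (μ * ε ^ 2 / (8 * (CΛ + 1))) :=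
        mul_le_mul_of_nonneg_left hδ3 hCΛ0
      have h2 : CΛ * (μ * ε ^ 2 / (8 * (CΛ + 1))) ≤ μ * ε ^ 2 / 8 := by
        rw [← mul_div_assoc, div_le_div_iff₀ (by positivity) (by norm_num : (0:ℝ) < 8)]
        nlinarith [mul_nonneg hμ0 (sq_nonneg ε)]
      have h3 : μ * ‖z₁ - zy‖ ^ 2 / 2 ≤ μ * ε ^ 2 / 8 := by linarith
      have h4 : μ * ‖z₁ - zy‖ ^ 2 ≤ μ * (ε ^ 2 / 4) := by linarith
      have := (mul_le_mul_iff_right₀ hμpos).mp h4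
      linarith [this]
    have hz₁zy : ‖z₁ - zy‖ ≤ ε / 2 := by
      nlinarith [norm_nonneg (z₁ - zy), hε]
    have hδ2 : ‖y - x‖ ≤ ε / (2 * (M + B) + 1) :=
      le_trans hyδ (le_trans (min_le_right _ _) (min_le_left _ _))
    have hMBδ : (M + B) * ‖y - x‖ ≤ ε / 2 := by
      have h1 : (M + B) * ‖y - x‖ ≤ (M + B) * (ε / (2 * (M + B) + 1)) :=
        mul_le_mul_of_nonneg_left hδ2 (by positivity)
      have h2 : (M + B) * (ε / (2 * (M + B) + 1)) ≤ ε / 2 := by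
        rw [← mul_div_assoc, div_le_div_iff₀ (by positivity) (by norm_num : (0:ℝ) < 2)]
        nlinarith [hε.le, hM0, hB0]
      linarith
    calc ‖zstar y I - zstar x I‖ = ‖zy - zx‖ := by rw [← hzy, ← hzx]
    _ ≤ ‖zy - z₁‖ + ‖z₁ - zx‖ := norm_sub_le_norm_sub_add_norm_sub _ _ _
    _ ≤ ε / 2 + ε / 2 := by
        apply add_le_add
        · rw [norm_sub_rev]; exact hz₁zy
        · exact le_trans hz₁c hMBδ
    _ = ε := by ring
  -- per-active-set Lipschitz constants and the global constant
  choose L hL0 hLA using fun A : Finset (Fin n_c) => active_lipschitz H F G S w hH A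
  have hFne : (Finset.univ : Finset (Finset (Fin n_c))).Nonempty :=
    ⟨∅, Finset.mem_univ ∅⟩
  set κ : ℝ := Finset.univ.sup' hFne L with hκ
  have hκ0 : 0 ≤ κ := le_trans (hL0 ∅) (Finset.le_sup' L (Finset.mem_univ ∅))
  have hκA : ∀ A, L A ≤ κ := fun A => Finset.le_sup' L (Finset.mem_univ A)
  refine ⟨κ, hκ0, ?_⟩
  intro x₁ x₂ I
  rcases eq_or_ne x₁ x₂ with rfl | hne
  · simp only [sub_self, norm_zero, mul_zero, le_refl]
  · set c : ℝ := ‖x₁ - x₂‖ with hc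
    have hcpos : 0 < c := norm_pos_iff.mpr (sub_ne_zero.mpr hne)
    set xt : ℝ → EuclideanSpace ℝ (Fin n_x) := fun t => x₁ + t • (x₂ - x₁) with hxt
    set h : ℝ → EuclideanSpace ℝ (Fin n_z) := fun t => zstar (xt t) I with hh
    have hxtc : Continuous xt := by
      apply continuous_const.add
      exact continuous_id.smul continuous_const
    have hxtnorm : ∀ s t : ℝ, ‖xt s - xt t‖ = |s - t| * c := by
      intro s t
      have e : xt s - xt t = (s - t) • (x₂ - x₁) := by
        show x₁ + s • (x₂ - x₁) - (x₁ + t • (x₂ - x₁)) = (s - t) • (x₂ - x₁)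
        rw [sub_smul]
        abel
      rw [e, norm_smul, Real.norm_eq_abs, hc, norm_sub_rev x₂ x₁]
    -- continuity of the solution path
    have hhcont : Continuous h := by
      rw [continuous_iff_continuousAt]
      intro t
      rw [Metric.continuousAt_iff]
      intro ε hε
      obtain ⟨δ, hδpos, hδ⟩ := hcont I (xt t) (ε / 2) (by linarith)
      refine ⟨δ / (c + 1), by positivity, fun {s} hs => ?_⟩
      rw [Real.dist_eq] at hs
      have hnear : ‖xt s - xt t‖ ≤ δ := by
        rw [hxtnorm]
        have h1 : |s - t| * c ≤ (δ / (c + 1)) * c :=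
          mul_le_mul_of_nonneg_right (le_of_lt hs) (le_of_lt hcpos)
        have h2 : (δ / (c + 1)) * c ≤ δ := by
          rw [div_mul_eq_mul_div, div_le_iff₀ (by linarith)]
          nlinarith
        linarith
      have := hδ (xt s) hnear
      rw [dist_eq_norm]
      calc ‖h s - h t‖ ≤ ε / 2 := this
      _ < ε := by linarith
    -- the certificate sets
    set T : Finset (Fin n_c) → Set ℝ := fun A => {t | CA H F G S w A (xt t) (h t)} with hT
    have hTclosed : ∀ A, IsClosed (T A) := by
      intro A
      have hgradc : Continuous fun t => grad H F (xt t) (h t) := by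
        show Continuous fun t => mulVecE H (h t) + mulVecE Fᵀ (xt t)
        exact ((continuous_mulVecE H).comp hhcont).add ((continuous_mulVecE Fᵀ).comp hxtc)
      have hTeq : T A = (⋂ j ∈ A, {t : ℝ | dotProduct (G j) (h t)
            = dotProduct (S j) (xt t) + w j})
          ∩ (⋂ d : EuclideanSpace ℝ (Fin n_z), {t : ℝ | (∀ j ∈ A,
            dotProduct (G j) d = 0) → dp (grad H F (xt t) (h t)) d = 0}) := by
        ext t
        simp only [hT, mem_setOf_eq, mem_inter_iff, mem_iInter, CA]
      rw [hTeq]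
      apply IsClosed.inter
      · apply isClosed_biInter
        intro j _
        apply isClosed_eq
        · exact continuous_dp_comp (toE (G j)) h hhcont
        · exact (continuous_dp_comp (toE (S j)) xt hxtc).add continuous_const
      · apply isClosed_iInter
        intro d
        by_cases hPd : ∀ j ∈ A, dotProduct (G j) d = 0
        · have e : {t : ℝ | (∀ j ∈ A, dotProduct (G j) d = 0) →
              dp (grad H F (xt t) (h t)) d = 0}
              = {t : ℝ | dp (grad H F (xt t) (h t)) d = 0} := by
            ext t
            exact ⟨fun hi => hi hPd, fun hq _ => hq⟩
          rw [e]
          apply isClosed_eq _ continuous_const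
          have hcd : Continuous fun t => dp d (grad H F (xt t) (h t)) :=
            continuous_dp_comp d _ hgradc
          have e2 : (fun t => dp (grad H F (xt t) (h t)) d)
              = fun t => dp d (grad H F (xt t) (h t)) := by
            funext t; rw [dp_comm]
          rw [e2]
          exact hcd
        · have e : {t : ℝ | (∀ j ∈ A, dotProduct (G j) d = 0) →
              dp (grad H F (xt t) (h t)) d = 0} = univ := by
            ext t; simp [hPd]
          rw [e]
          exact isClosed_univ
    have hcover : ∀ t : ℝ, t ∈ T (Finset.univ.filter (fun j => j ∈ I ∧
        dotProduct (G j) (h t) = dotProduct (S j) (xt t) + w j)) :=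
      fun t => hcert I (xt t)
    -- pointed local Lipschitz estimate
    have hlocal : ∀ t ∈ Icc (0:ℝ) 1, ∃ δ > 0, ∀ s ∈ Icc (0:ℝ) 1, |s - t| < δ →
        ‖h s - h t‖ ≤ (κ * c) * |s - t| := by
      intro t _
      set U : Set ℝ := ⋂ A : Finset (Fin n_c), (if t ∈ T A then univ else (T A)ᶜ) with hU
      have hUopen : IsOpen U := by
        apply isOpen_iInter_of_finite
        intro A
        by_cases hA : t ∈ T A
        · rw [if_pos hA]; exact isOpen_univ
        · rw [if_neg hA]; exact (hTclosed A).isOpen_compl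
      have htU : t ∈ U := by
        rw [hU, mem_iInter]
        intro A
        by_cases hA : t ∈ T A
        · rw [if_pos hA]; exact mem_univ t
        · rw [if_neg hA]; exact hA
      obtain ⟨δ, hδpos, hδball⟩ := Metric.isOpen_iff.mp hUopen t htU
      refine ⟨δ, hδpos, fun s _ hst => ?_⟩
      have hsU : s ∈ U := hδball (by rw [Metric.mem_ball, Real.dist_eq]; exact hst)
      set A' := Finset.univ.filter (fun j => j ∈ I ∧
        dotProduct (G j) (h s) = dotProduct (S j) (xt s) + w j) with hA'
      have hsT : s ∈ T A' := hcover s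
      have htT : t ∈ T A' := by
        have hm := mem_iInter.mp hsU A'
        by_cases hA : t ∈ T A'
        · exact hA
        · rw [if_neg hA] at hm
          exact absurd hsT hm
      have hlip := hLA A' (xt s) (h s) (xt t) (h t) hsT htT
      calc ‖h s - h t‖ ≤ L A' * ‖xt s - xt t‖ := hlip
      _ = L A' * (|s - t| * c) := by rw [hxtnorm]
      _ ≤ κ * c * |s - t| := by
          nlinarith [mul_nonneg (mul_nonneg (sub_nonneg.mpr (hκA A')) hcpos.le)
            (abs_nonneg (s - t))]
    have hfinal := local_to_global h (κ * c) (mul_nonneg hκ0 hcpos.le) hlocal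
    have hxt1 : xt 1 = x₂ := by
      show x₁ + (1:ℝ) • (x₂ - x₁) = x₂
      rw [one_smul]; abel
    have hxt0 : xt 0 = x₁ := by
      show x₁ + (0:ℝ) • (x₂ - x₁) = x₁
      rw [zero_smul]; abel
    have e : ‖zstar x₁ I - zstar x₂ I‖ = ‖h 1 - h 0‖ := by
      rw [hh]
      simp only
      rw [hxt0, hxt1, norm_sub_rev]
    rw [e]
    exact hfinal
end

section
/- Let κ be a GLC and let x, x̂ ∈ ℝ^{n_x}. Define D(x) = {j ∈ {1,…,n_c} : B(z*(x̂), κ‖x − x̂‖) ⊆ Z_j(x)} and the trimming index set I(x) = A(x̂) ∪ ({1,…,n_c} \ D(x)). Then the trimmed problem over Z(x, I(x)) has the same optimal solution as the original mp-QP: z*(x, I(x)) = z*(x). -/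
/-!
Dropping constraints that are inactive at `z*(x̂)` keeps `z*(x̂)` a local, hence by convexity a
global, minimizer: `z*(x̂, I(x)) = z*(x̂)`. The Lipschitz bound then puts `z*(x, I(x))` in the ball
`B(z*(x̂), κ‖x − x̂‖)`, where every dropped constraint `j ∈ D(x)` holds. So `z*(x, I(x))` is feasible
for the full problem, whose feasible set is smaller, and is therefore its minimizer.
-/

open Set Filter Topology Matrix WithLp

theorem IsMinOn.of_convexOn_of_eventually_mem {E : Type*} [NormedAddCommGroup E]
    [NormedSpace ℝ E] {f : E → ℝ} {s t : Set E} {a : E} (hf : ConvexOn ℝ t f) (ha : a ∈ t)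
    (hmin : IsMinOn f s a) (hts : ∀ᶠ z in 𝓝 a, z ∈ t → z ∈ s) : IsMinOn f t a :=
  .of_isLocalMinOn_of_convexOn ha
    (eventually_nhdsWithin_iff.2 (hts.mono fun _ hs ht => hmin (hs ht))) hf

theorem Matrix.PosSemidef.convexOn_dotProduct_mulVec {n : Type*} [Fintype n]
    {M : Matrix n n ℝ} (hM : M.PosSemidef) : ConvexOn ℝ univ fun v : n → ℝ => v ⬝ᵥ M *ᵥ v := by
  refine ⟨convex_univ, fun u _ v _ a b ha hb hab => ?_⟩
  have hdiff : 0 ≤ (u - v) ⬝ᵥ M *ᵥ (u - v) := hM.dotProduct_mulVec_nonneg (u - v)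
  -- with `a + b = 1`, the convexity defect of a quadratic form is `a b q(u - v)`
  have hdefect : a • (u ⬝ᵥ M *ᵥ u) + b • (v ⬝ᵥ M *ᵥ v) - (a • u + b • v) ⬝ᵥ M *ᵥ (a • u + b • v)
      = a * b * ((u - v) ⬝ᵥ M *ᵥ (u - v)) := by
    obtain rfl : b = 1 - a := by linarith
    simp only [mulVec_add, mulVec_sub, mulVec_smul, dotProduct_add, dotProduct_sub,
      add_dotProduct, sub_dotProduct, dotProduct_smul, smul_dotProduct, smul_eq_mul]
    ring
  nlinarith [mul_nonneg (mul_nonneg ha hb) hdiff]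

theorem convexOn_quadratic_cost {m n : Type*} [Fintype m] [Fintype n] {H : Matrix n n ℝ}
    (hH : H.PosSemidef) (F : Matrix m n ℝ) (y : m → ℝ) :
    ConvexOn ℝ univ fun z : EuclideanSpace ℝ n =>
      (1 / 2) * (ofLp z ⬝ᵥ H *ᵥ ofLp z) + y ⬝ᵥ F *ᵥ ofLp z :=
  ((hH.convexOn_dotProduct_mulVec.smul (by norm_num : (0 : ℝ) ≤ 1 / 2)).add
    ((dotProductBilin ℝ ℝ y ∘ₗ F.mulVecLin).convexOn convex_univ)).comp_linearMap
      (WithLp.linearEquiv 2 ℝ (n → ℝ)).toLinearMap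

def polyhedron {m n : Type*} [Fintype n] (G : Matrix m n ℝ) (b : m → ℝ) (I : Set m) :
    Set (EuclideanSpace ℝ n) :=
  {z | ∀ j ∈ I, G j ⬝ᵥ ofLp z ≤ b j}

section polyhedron

variable {m n : Type*} [Fintype n] {G : Matrix m n ℝ} {b : m → ℝ} {I : Set m}

theorem convex_polyhedron : Convex ℝ (polyhedron G b I) := by
  simp only [polyhedron, ofPred_forall]
  exact convex_iInter₂ fun j _ =>
    convex_halfSpace_le
      (dotProductBilin ℝ ℝ (G j) ∘ₗ (WithLp.linearEquiv 2 ℝ (n → ℝ)).toLinearMap).isLinear (b j)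

theorem polyhedron_univ_subset : polyhedron G b univ ⊆ polyhedron G b I :=
  fun _ hz j _ => hz j (mem_univ j)

theorem eventually_mem_polyhedron_univ [Finite m] {a : EuclideanSpace ℝ n}
    (ha : ∀ j ∉ I, G j ⬝ᵥ ofLp a < b j) :
    ∀ᶠ z in 𝓝 a, z ∈ polyhedron G b I → z ∈ polyhedron G b univ := by
  have hstrict : ∀ᶠ z in 𝓝 a, ∀ j ∉ I, G j ⬝ᵥ ofLp z < b j := by
    refine eventually_all.2 fun j => ?_
    by_cases hj : j ∈ I
    · exact .of_forall fun _ hj' => absurd hj hj'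
    · have hcont : Continuous fun z : EuclideanSpace ℝ n => G j ⬝ᵥ ofLp z := by fun_prop
      exact (hcont.continuousAt.eventually_lt continuousAt_const (ha j hj)).mono
        fun _ h _ => h
  filter_upwards [hstrict] with z hz hzI j _
  by_cases hj : j ∈ I
  · exact hzI j hj
  · exact (hz j hj).le

theorem isMinOn_polyhedron_of_active_subset [Finite m] {f : EuclideanSpace ℝ n → ℝ}
    {a : EuclideanSpace ℝ n} (hf : ConvexOn ℝ univ f) (ha : a ∈ polyhedron G b univ)
    (hmin : IsMinOn f (polyhedron G b univ) a) (hI : {j | G j ⬝ᵥ ofLp a = b j} ⊆ I) :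
    IsMinOn f (polyhedron G b I) a :=
  hmin.of_convexOn_of_eventually_mem (hf.subset (subset_univ _) convex_polyhedron)
    (polyhedron_univ_subset ha)
    (eventually_mem_polyhedron_univ fun j hj => (ha j (mem_univ j)).lt_of_ne fun h => hj (hI h))

end polyhedron

theorem trimmed_mpQP_algorithm1_optimal_general
    (n_x n_z n_c : ℕ)
    (H : Matrix (Fin n_z) (Fin n_z) ℝ) (hH : H.PosDef)
    (F : Matrix (Fin n_x) (Fin n_z) ℝ)
    (G : Matrix (Fin n_c) (Fin n_z) ℝ)
    (S : Matrix (Fin n_c) (Fin n_x) ℝ)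
    (w : Fin n_c → ℝ)
    (V : EuclideanSpace ℝ (Fin n_x) → EuclideanSpace ℝ (Fin n_z) → ℝ)
    (hV : ∀ x z, V x z = (1 / 2) * dotProduct (WithLp.ofLp z) (H.mulVec (WithLp.ofLp z))
      + dotProduct (WithLp.ofLp x) (F.mulVec (WithLp.ofLp z)))
    (Z : EuclideanSpace ℝ (Fin n_x) → Set (Fin n_c) → Set (EuclideanSpace ℝ (Fin n_z)))
    (hZ : ∀ x I, Z x I =
      {z | ∀ j ∈ I, dotProduct (G j) (WithLp.ofLp z) ≤ dotProduct (S j) (WithLp.ofLp x) + w j})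
    (zstar : EuclideanSpace ℝ (Fin n_x) → Set (Fin n_c) → EuclideanSpace ℝ (Fin n_z))
    (hmem : ∀ x I, zstar x I ∈ Z x I)
    (hopt : ∀ x I, ∀ z ∈ Z x I, V x (zstar x I) ≤ V x z)
    (huniq : ∀ x I, ∀ z ∈ Z x I, (∀ z' ∈ Z x I, V x z ≤ V x z') → z = zstar x I)
    (κ : ℝ)
    (hGLC : ∀ (x₁ x₂ : EuclideanSpace ℝ (Fin n_x)) (I : Set (Fin n_c)),
      ‖zstar x₁ I - zstar x₂ I‖ ≤ κ * ‖x₁ - x₂‖)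
    (x xh : EuclideanSpace ℝ (Fin n_x)) :
    zstar x
      ({j | dotProduct (G j) (WithLp.ofLp (zstar xh Set.univ))
          = dotProduct (S j) (WithLp.ofLp xh) + w j} ∪
        {j | Metric.closedBall (zstar xh Set.univ) (κ * ‖x - xh‖) ⊆
          {z : EuclideanSpace ℝ (Fin n_z) |
            dotProduct (G j) (WithLp.ofLp z) ≤ dotProduct (S j) (WithLp.ofLp x) + w j}}ᶜ)
      = zstar x Set.univ := by
  obtain rfl : Z = fun y J => polyhedron G (S *ᵥ ofLp y + w) J := funext₂ hZ
  beta_reduce at hmem hopt huniq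
  have hconv (y : EuclideanSpace ℝ (Fin n_x)) : ConvexOn ℝ univ (V y) := by
    rw [show V y = _ from funext (hV y)]
    exact convexOn_quadratic_cost hH.posSemidef F (ofLp y)
  set a := zstar xh univ
  set I := {j | G j ⬝ᵥ ofLp a = S j ⬝ᵥ ofLp xh + w j} ∪
    {j | Metric.closedBall a (κ * ‖x - xh‖) ⊆ {z | G j ⬝ᵥ ofLp z ≤ S j ⬝ᵥ ofLp x + w j}}ᶜ
  have hxh : zstar xh I = a :=
    (huniq xh I a (polyhedron_univ_subset (hmem xh univ)) (isMinOn_iff.1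
      (isMinOn_polyhedron_of_active_subset (hconv xh) (hmem xh univ)
        (isMinOn_iff.2 (hopt xh univ)) subset_union_left))).symm
  have hfeas : zstar x I ∈ polyhedron G (S *ᵥ ofLp x + w) univ := by
    intro j _
    by_cases hj : j ∈ I
    · exact hmem x I j hj
    · refine not_not.1 (not_or.1 hj).2 ?_
      rw [Metric.mem_closedBall, dist_eq_norm, ← hxh]
      exact hGLC x xh I
  exact huniq x univ _ hfeas fun z hz => hopt x I z (polyhedron_univ_subset hz)

/-- Theorem 1: with `I(x) = A(x̂) ∪ ({1,…,n_c} \\ D(x))`, where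
`D(x) = {j : B(z*(x̂), κ‖x−x̂‖) ⊆ Z_j(x)}`, the trimmed mp-QP has the same optimal
solution as the original one. -/
theorem trimmed_mpQP_algorithm1_optimal
    (n_x n_z n_c : ℕ) (hnx : 0 < n_x) (hnz : 0 < n_z) (hnc : 0 < n_c)
    (H : Matrix (Fin n_z) (Fin n_z) ℝ) (hH : H.PosDef)
    (F : Matrix (Fin n_x) (Fin n_z) ℝ)
    (G : Matrix (Fin n_c) (Fin n_z) ℝ)
    (S : Matrix (Fin n_c) (Fin n_x) ℝ)
    (w : Fin n_c → ℝ)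
    (V : EuclideanSpace ℝ (Fin n_x) → EuclideanSpace ℝ (Fin n_z) → ℝ)
    (hV : ∀ x z, V x z = (1 / 2) * dotProduct (WithLp.ofLp z) (H.mulVec (WithLp.ofLp z))
      + dotProduct (WithLp.ofLp x) (F.mulVec (WithLp.ofLp z)))
    (Z : EuclideanSpace ℝ (Fin n_x) → Set (Fin n_c) → Set (EuclideanSpace ℝ (Fin n_z)))
    (hZ : ∀ x I, Z x I =
      {z | ∀ j ∈ I, dotProduct (G j) (WithLp.ofLp z) ≤ dotProduct (S j) (WithLp.ofLp x) + w j})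
    (hfeas : ∀ x, (Z x Set.univ).Nonempty)
    (zstar : EuclideanSpace ℝ (Fin n_x) → Set (Fin n_c) → EuclideanSpace ℝ (Fin n_z))
    (hmem : ∀ x I, zstar x I ∈ Z x I)
    (hopt : ∀ x I, ∀ z ∈ Z x I, V x (zstar x I) ≤ V x z)
    (huniq : ∀ x I, ∀ z ∈ Z x I, (∀ z' ∈ Z x I, V x z ≤ V x z') → z = zstar x I)
    (κ : ℝ) (hκ0 : 0 ≤ κ)
    (hGLC : ∀ (x₁ x₂ : EuclideanSpace ℝ (Fin n_x)) (I : Set (Fin n_c)),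
      ‖zstar x₁ I - zstar x₂ I‖ ≤ κ * ‖x₁ - x₂‖)
    (x xh : EuclideanSpace ℝ (Fin n_x)) :
    zstar x
      ({j | dotProduct (G j) (WithLp.ofLp (zstar xh Set.univ))
          = dotProduct (S j) (WithLp.ofLp xh) + w j} ∪
        {j | Metric.closedBall (zstar xh Set.univ) (κ * ‖x - xh‖) ⊆
          {z : EuclideanSpace ℝ (Fin n_z) |
            dotProduct (G j) (WithLp.ofLp z) ≤ dotProduct (S j) (WithLp.ofLp x) + w j}}ᶜ)
      = zstar x Set.univ :=
  trimmed_mpQP_algorithm1_optimal_general n_x n_z n_c H hH F G S w V hV Z hZ zstar hmem hopt huniq κ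
    hGLC x xh
end

section
/- Assume LICQ and that every row G_j of G is nonzero. Let κ be a GLC, let x̂¹,…,x̂^q, x ∈ ℝ^{n_x}, and for each k ∈ {1,…,q} define R(x,x̂^k) = {j ∈ Aᶜ(x̂^k) : κ‖x − x̂^k‖ > (w_j + S_j x − G_j z*(x̂^k))/‖G_j‖} and I^k(x) = A(x̂^k) ∪ R(x,x̂^k). Set I(x) = ⋂_{k=1}^{q} I^k(x). Then z*(x, I(x)) = z*(x). -/
open Matrix
open scoped RealInnerProductSpace

lemma TMQP.dot_inner {n : ℕ} (v : Fin n → ℝ) (w : EuclideanSpace ℝ (Fin n)) :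
    v ⬝ᵥ w = @inner ℝ (EuclideanSpace ℝ (Fin n)) _ (WithLp.toLp 2 v) w := by
  simp [PiLp.inner_apply, dotProduct, RCLike.inner_apply, mul_comm]

lemma TMQP.sqrt_dot {n : ℕ} (v : Fin n → ℝ) :
    Real.sqrt (dotProduct v v) = ‖WithLp.toLp 2 v‖ := by
  rw [EuclideanSpace.norm_eq]; simp [dotProduct, pow_two]

lemma TMQP.abs_dot {n : ℕ} (v : Fin n → ℝ) (w : EuclideanSpace ℝ (Fin n)) :
    |dotProduct v w| ≤ ‖WithLp.toLp 2 v‖ * ‖w‖ := by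
  rw [TMQP.dot_inner]; exact abs_real_inner_le_norm _ _

lemma TMQP.dot_sub_right {n : ℕ} (v : Fin n → ℝ) (a b : EuclideanSpace ℝ (Fin n)) :
    v ⬝ᵥ ((a - b : EuclideanSpace ℝ (Fin n))) = v ⬝ᵥ a - v ⬝ᵥ b := by
  simp [dotProduct, PiLp.sub_apply, mul_sub, Finset.sum_sub_distrib]

lemma TMQP.sub_dot_left {n : ℕ} (a b : EuclideanSpace ℝ (Fin n)) (v : Fin n → ℝ) :
    ((a - b : EuclideanSpace ℝ (Fin n))) ⬝ᵥ v = a ⬝ᵥ v - b ⬝ᵥ v := by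
  simp [dotProduct, PiLp.sub_apply, sub_mul, Finset.sum_sub_distrib]

lemma TMQP.dot_add_smul {n : ℕ} (v : Fin n → ℝ) (a b : EuclideanSpace ℝ (Fin n)) (σ : ℝ) :
    v ⬝ᵥ ((a + σ • b : EuclideanSpace ℝ (Fin n))) = v ⬝ᵥ a + σ * (v ⬝ᵥ b) := by
  simp [dotProduct, PiLp.add_apply, PiLp.smul_apply, mul_add, Finset.sum_add_distrib,
    Finset.mul_sum, smul_eq_mul]; ring_nf
  congr 1; ext i; ring

lemma TMQP.add_smul_dot {n : ℕ} (a b : EuclideanSpace ℝ (Fin n)) (σ : ℝ) (v : Fin n → ℝ) :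
    ((a + σ • b : EuclideanSpace ℝ (Fin n))) ⬝ᵥ v = a ⬝ᵥ v + σ * (b ⬝ᵥ v) := by
  simp [dotProduct, PiLp.add_apply, PiLp.smul_apply, add_mul, Finset.sum_add_distrib,
    Finset.mul_sum, smul_eq_mul]; ring_nf

lemma TMQP.dot_sum {n : ℕ} {ι : Type*} (v : Fin n → ℝ) (s : Finset ι) (f : ι → Fin n → ℝ) :
    v ⬝ᵥ (∑ i ∈ s, f i) = ∑ i ∈ s, v ⬝ᵥ f i := by
  simp [dotProduct, Finset.sum_apply, Finset.mul_sum]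
  exact Finset.sum_comm

lemma TMQP.mulVec_add_smul {m n : ℕ} (M : Matrix (Fin m) (Fin n) ℝ)
    (a b : EuclideanSpace ℝ (Fin n)) (σ : ℝ) :
    M *ᵥ ((a + σ • b : EuclideanSpace ℝ (Fin n))) = M *ᵥ a + σ • (M *ᵥ b) := by
  funext i
  show M i ⬝ᵥ (a + σ • b) = M i ⬝ᵥ a + σ * (M i ⬝ᵥ b)
  exact TMQP.dot_add_smul _ _ _ _

lemma TMQP.dot_mulVec_symm {n : ℕ} (H : Matrix (Fin n) (Fin n) ℝ) (hHT : Hᵀ = H)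
    (v u : Fin n → ℝ) : v ⬝ᵥ (H *ᵥ u) = u ⬝ᵥ (H *ᵥ v) := by
  rw [Matrix.dotProduct_mulVec, ← Matrix.mulVec_transpose, hHT, dotProduct_comm]

lemma TMQP.transpose_dot {m n : ℕ} (F : Matrix (Fin m) (Fin n) ℝ) (y : Fin m → ℝ)
    (δ : Fin n → ℝ) : (Fᵀ *ᵥ y) ⬝ᵥ δ = y ⬝ᵥ (F *ᵥ δ) := by
  rw [Matrix.mulVec_transpose, ← Matrix.dotProduct_mulVec]

lemma TMQP.Vdiff {n_x n_z : ℕ} (H : Matrix (Fin n_z) (Fin n_z) ℝ) (hHT : Hᵀ = H)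
    (F : Matrix (Fin n_x) (Fin n_z) ℝ)
    (V : EuclideanSpace ℝ (Fin n_x) → EuclideanSpace ℝ (Fin n_z) → ℝ)
    (hV : ∀ x z, V x z = (1 / 2) * dotProduct z (H.mulVec z)
      + dotProduct x (F.mulVec z))
    (y : EuclideanSpace ℝ (Fin n_x)) (z δ : EuclideanSpace ℝ (Fin n_z)) (σ : ℝ) :
    V y (z + σ • δ) = V y z + σ * ((H *ᵥ z + Fᵀ *ᵥ y) ⬝ᵥ δ)
      + σ ^ 2 / 2 * (δ ⬝ᵥ (H *ᵥ δ)) := by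
  rw [hV, hV]
  have h1 : H *ᵥ ((z + σ • δ : EuclideanSpace ℝ (Fin n_z))) = H *ᵥ z + σ • (H *ᵥ δ) := TMQP.mulVec_add_smul _ _ _ _
  have h2 : F *ᵥ ((z + σ • δ : EuclideanSpace ℝ (Fin n_z))) = F *ᵥ z + σ • (F *ᵥ δ) := TMQP.mulVec_add_smul _ _ _ _
  rw [h1, h2]
  rw [TMQP.add_smul_dot]
  rw [dotProduct_add, dotProduct_add, dotProduct_add]
  rw [dotProduct_smul, dotProduct_smul, dotProduct_smul]
  rw [add_dotProduct, TMQP.transpose_dot]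
  have h3 : (z : Fin n_z → ℝ) ⬝ᵥ (H *ᵥ (δ : Fin n_z → ℝ)) = (δ : Fin n_z → ℝ) ⬝ᵥ (H *ᵥ (z : Fin n_z → ℝ)) :=
    TMQP.dot_mulVec_symm H hHT _ _
  simp only [smul_eq_mul]
  rw [h3]
  have h4 : (H *ᵥ (z : Fin n_z → ℝ)) ⬝ᵥ (δ : Fin n_z → ℝ)
      = (δ : Fin n_z → ℝ) ⬝ᵥ (H *ᵥ (z : Fin n_z → ℝ)) := dotProduct_comm _ _
  rw [h4]
  ring

lemma TMQP.FO {n_x n_z n_c : ℕ} (hnc : 0 < n_c)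
    (H : Matrix (Fin n_z) (Fin n_z) ℝ) (hHT : Hᵀ = H)
    (hHpsd : ∀ v : Fin n_z → ℝ, 0 ≤ v ⬝ᵥ (H *ᵥ v))
    (F : Matrix (Fin n_x) (Fin n_z) ℝ)
    (G : Matrix (Fin n_c) (Fin n_z) ℝ)
    (S : Matrix (Fin n_c) (Fin n_x) ℝ)
    (w : Fin n_c → ℝ)
    (V : EuclideanSpace ℝ (Fin n_x) → EuclideanSpace ℝ (Fin n_z) → ℝ)
    (hV : ∀ x z, V x z = (1 / 2) * dotProduct z (H.mulVec z)
      + dotProduct x (F.mulVec z))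
    (Z : EuclideanSpace ℝ (Fin n_x) → Set (Fin n_c) → Set (EuclideanSpace ℝ (Fin n_z)))
    (hZ : ∀ x I, Z x I =
      {z : EuclideanSpace ℝ (Fin n_z) | ∀ j ∈ I, dotProduct (G j) z ≤ dotProduct (S j) x + w j})
    (zstar : EuclideanSpace ℝ (Fin n_x) → Set (Fin n_c) → EuclideanSpace ℝ (Fin n_z))
    (hmem : ∀ x I, zstar x I ∈ Z x I)
    (hopt : ∀ x I, ∀ z ∈ Z x I, V x (zstar x I) ≤ V x z)
    (y : EuclideanSpace ℝ (Fin n_x)) (δ : EuclideanSpace ℝ (Fin n_z))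
    (hprem : ∀ i, 0 < G i ⬝ᵥ δ → G i ⬝ᵥ (zstar y Set.univ) < S i ⬝ᵥ y + w i) :
    0 ≤ (H *ᵥ (zstar y Set.univ) + Fᵀ *ᵥ y) ⬝ᵥ δ := by
  classical
  by_contra hneg
  push_neg at hneg
  set z0 : EuclideanSpace ℝ (Fin n_z) := zstar y Set.univ with hz0
  set dq : ℝ := (H *ᵥ z0 + Fᵀ *ᵥ y) ⬝ᵥ δ with hdq
  set c : ℝ := (δ : Fin n_z → ℝ) ⬝ᵥ (H *ᵥ (δ : Fin n_z → ℝ)) with hc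
  have hc0 : 0 ≤ c := hHpsd δ
  have hfeas0 : ∀ i, G i ⬝ᵥ z0 ≤ S i ⬝ᵥ y + w i := by
    intro i
    have := hmem y Set.univ
    rw [hZ] at this
    exact this i (Set.mem_univ i)
  set s : Fin n_c → ℝ := fun i =>
    if h : 0 < G i ⬝ᵥ δ then (S i ⬝ᵥ y + w i - G i ⬝ᵥ z0) / (G i ⬝ᵥ δ) else 1 with hs
  have hne : (Finset.univ : Finset (Fin n_c)).Nonempty := ⟨⟨0, hnc⟩, Finset.mem_univ _⟩
  set s0 : ℝ := Finset.univ.inf' hne s with hs0def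
  have hs0 : 0 < s0 := by
    rw [hs0def, Finset.lt_inf'_iff]
    intro i _
    rw [hs]
    dsimp only
    split
    · rename_i h
      exact div_pos (by linarith [hprem i h]) h
    · exact one_pos
  set σ : ℝ := min s0 (-dq / (c + 1)) with hσdef
  have hσpos : 0 < σ := lt_min hs0 (div_pos (by linarith) (by linarith))
  have hσs0 : σ ≤ s0 := min_le_left _ _
  have hσ2 : σ * (c + 1) ≤ -dq := by
    have := min_le_right s0 (-dq / (c + 1))
    rw [hσdef] at *
    exact (le_div_iff₀ (by linarith)).mp this
  have hfeas2 : z0 + σ • δ ∈ Z y Set.univ := by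
    rw [hZ]
    intro i _
    rw [TMQP.dot_add_smul]
    by_cases h : 0 < G i ⬝ᵥ δ
    · have hsi : s i = (S i ⬝ᵥ y + w i - G i ⬝ᵥ z0) / (G i ⬝ᵥ δ) := by rw [hs]; simp [h]
      have h1 : σ ≤ (S i ⬝ᵥ y + w i - G i ⬝ᵥ z0) / (G i ⬝ᵥ δ) := by
        calc σ ≤ s0 := hσs0
        _ ≤ s i := Finset.inf'_le s (Finset.mem_univ i)
        _ = _ := hsi
      have h2 : σ * (G i ⬝ᵥ δ) ≤ S i ⬝ᵥ y + w i - G i ⬝ᵥ z0 := (le_div_iff₀ h).mp h1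
      linarith
    · push_neg at h
      have : σ * (G i ⬝ᵥ δ) ≤ 0 := mul_nonpos_of_nonneg_of_nonpos (le_of_lt hσpos) h
      linarith [hfeas0 i]
  have hVle := hopt y Set.univ _ hfeas2
  rw [TMQP.Vdiff H hHT F V hV y z0 δ σ] at hVle
  nlinarith [mul_pos hσpos hσpos, hσpos, hneg, hc0, hσ2]

lemma TMQP.DUAL {n_z n_c : ℕ} (G : Matrix (Fin n_c) (Fin n_z) ℝ) (Act : Fin n_c → Prop)
    (hli : LinearIndependent ℝ
      (fun i : {i : Fin n_c // Act i} => G i.1))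
    (j : Fin n_c) (hj : Act j) :
    ∃ e : EuclideanSpace ℝ (Fin n_z),
      G j ⬝ᵥ e = 1 ∧ ∀ i, Act i → i ≠ j → G i ⬝ᵥ e = 0 := by
  classical
  have hli : LinearIndependent ℝ
      (fun i : {i : Fin n_c // Act i} => (WithLp.toLp 2 (G i.1) : EuclideanSpace ℝ (Fin n_z))) :=
    hli.map' (WithLp.linearEquiv 2 ℝ (Fin n_z → ℝ)).symm.toLinearMap (LinearEquiv.ker _)
  set f : {i : Fin n_c // Act i} → EuclideanSpace ℝ (Fin n_z) := fun i => WithLp.toLp 2 (G i.1) with hf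
  set j0 : {i : Fin n_c // Act i} := ⟨j, hj⟩ with hj0
  set U : Submodule ℝ (EuclideanSpace ℝ (Fin n_z)) :=
    Submodule.span ℝ (f '' {i | i ≠ j0}) with hU
  haveI : FiniteDimensional ℝ U := FiniteDimensional.span_of_finite ℝ (Set.toFinite _)
  have hnot : f j0 ∉ U := hli.notMem_span_image (by simp)
  set p : EuclideanSpace ℝ (Fin n_z) := U.starProjection (f j0) with hp
  set v : EuclideanSpace ℝ (Fin n_z) := f j0 - p with hv
  have hv_orth : v ∈ Uᗮ := U.sub_starProjection_mem_orthogonal (f j0)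
  have hvne : v ≠ 0 := by
    intro h
    apply hnot
    have : f j0 = p := by rwa [hv, sub_eq_zero] at h
    rw [this]
    exact U.starProjection_apply_mem (f j0)
  have horth : ∀ u ∈ U, @inner ℝ (EuclideanSpace ℝ (Fin n_z)) _ u v = 0 :=
    (Submodule.mem_orthogonal U v).mp hv_orth
  set cc : ℝ := @inner ℝ (EuclideanSpace ℝ (Fin n_z)) _ (f j0) v with hcc
  have hcpos : 0 < cc := by
    have h1 : @inner ℝ (EuclideanSpace ℝ (Fin n_z)) _ (f j0) v
        = @inner ℝ (EuclideanSpace ℝ (Fin n_z)) _ v v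
          + @inner ℝ (EuclideanSpace ℝ (Fin n_z)) _ p v := by
      rw [hv]
      rw [← inner_add_left]
      norm_num
    have h2 : @inner ℝ (EuclideanSpace ℝ (Fin n_z)) _ p v = 0 :=
      horth p (U.starProjection_apply_mem (f j0))
    rw [hcc, h1, h2, add_zero]
    have hnn : (0:ℝ) ≤ @inner ℝ (EuclideanSpace ℝ (Fin n_z)) _ v v := real_inner_self_nonneg
    have hne0 : @inner ℝ (EuclideanSpace ℝ (Fin n_z)) _ v v ≠ 0 := fun h =>
      hvne ((inner_self_eq_zero (𝕜 := ℝ)).mp h)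
    exact lt_of_le_of_ne hnn (Ne.symm hne0)
  refine ⟨cc⁻¹ • v, ?_, ?_⟩
  · rw [TMQP.dot_inner, real_inner_smul_right]
    have : (WithLp.toLp 2 (G j) : EuclideanSpace ℝ (Fin n_z)) = f j0 := rfl
    rw [this, ← hcc]
    field_simp
  · intro i hi hij
    rw [TMQP.dot_inner, real_inner_smul_right]
    have hiU : (WithLp.toLp 2 (G i) : EuclideanSpace ℝ (Fin n_z)) ∈ U := by
      apply Submodule.subset_span
      exact ⟨⟨i, hi⟩, by simp [hj0, Subtype.ext_iff, hij], rfl⟩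
    rw [horth _ hiU]
    ring

lemma TMQP.dot_sub_le {n : ℕ} (v : Fin n → ℝ) (a b : EuclideanSpace ℝ (Fin n)) :
    v ⬝ᵥ a - v ⬝ᵥ b ≤ Real.sqrt (dotProduct v v) * ‖a - b‖ := by
  have h1 := TMQP.abs_dot v (a - b)
  have h2 := TMQP.sqrt_dot v
  have h3 := TMQP.dot_sub_right v a b
  have h4 := le_abs_self (dotProduct v ((a - b : EuclideanSpace ℝ (Fin n))))
  rw [h3] at h4
  rw [h2]
  rw [h3] at h1
  have h5 := (abs_le.mp h1).2
  linarith

lemma TMQP.sqrtdot_nonneg {n : ℕ} (v : Fin n → ℝ) :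
    0 ≤ Real.sqrt (dotProduct v v) := Real.sqrt_nonneg _

lemma TMQP.dot_pointwise {n : ℕ} {ι : Type*} (v : Fin n → ℝ) (a : EuclideanSpace ℝ (Fin n))
    (s : Finset ι) (c : ι → ℝ) (f : ι → EuclideanSpace ℝ (Fin n)) :
    v ⬝ᵥ (fun r => a r - ∑ i ∈ s, c i * f i r) = v ⬝ᵥ a - ∑ i ∈ s, c i * (v ⬝ᵥ f i) := by
  simp only [dotProduct, mul_sub, Finset.sum_sub_distrib, Finset.mul_sum]
  congr 1
  rw [Finset.sum_comm]
  apply Finset.sum_congr rfl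
  intro i _
  apply Finset.sum_congr rfl
  intro r _
  ring

set_option maxHeartbeats 1000000 in
lemma TMQP.KEY {n_x n_z n_c : ℕ} (hnc : 0 < n_c)
    (H : Matrix (Fin n_z) (Fin n_z) ℝ) (hHT : Hᵀ = H)
    (hHpsd : ∀ v : Fin n_z → ℝ, 0 ≤ v ⬝ᵥ (H *ᵥ v))
    (F : Matrix (Fin n_x) (Fin n_z) ℝ)
    (G : Matrix (Fin n_c) (Fin n_z) ℝ)
    (S : Matrix (Fin n_c) (Fin n_x) ℝ)
    (w : Fin n_c → ℝ)
    (V : EuclideanSpace ℝ (Fin n_x) → EuclideanSpace ℝ (Fin n_z) → ℝ)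
    (hV : ∀ x z, V x z = (1 / 2) * dotProduct z (H.mulVec z)
      + dotProduct x (F.mulVec z))
    (Z : EuclideanSpace ℝ (Fin n_x) → Set (Fin n_c) → Set (EuclideanSpace ℝ (Fin n_z)))
    (hZ : ∀ x I, Z x I =
      {z : EuclideanSpace ℝ (Fin n_z) | ∀ j ∈ I, dotProduct (G j) z ≤ dotProduct (S j) x + w j})
    (zstar : EuclideanSpace ℝ (Fin n_x) → Set (Fin n_c) → EuclideanSpace ℝ (Fin n_z))
    (hmem : ∀ x I, zstar x I ∈ Z x I)
    (hopt : ∀ x I, ∀ z ∈ Z x I, V x (zstar x I) ≤ V x z)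
    (κ : ℝ) (hκ0 : 0 ≤ κ)
    (hGLC : ∀ (x₁ x₂ : EuclideanSpace ℝ (Fin n_x)) (I : Set (Fin n_c)),
      ‖zstar x₁ I - zstar x₂ I‖ ≤ κ * ‖x₁ - x₂‖)
    (x xh : EuclideanSpace ℝ (Fin n_x)) (j : Fin n_c)
    (hσ : G j ⬝ᵥ (zstar xh Set.univ) < S j ⬝ᵥ xh + w j)
    (hcert : κ * ‖x - xh‖ * Real.sqrt (dotProduct (G j) (G j))
        ≤ w j + S j ⬝ᵥ x - G j ⬝ᵥ (zstar xh Set.univ))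
    (δ : EuclideanSpace ℝ (Fin n_z))
    (hδ : ∀ i, G i ⬝ᵥ (zstar x Set.univ) = S i ⬝ᵥ x + w i → i ≠ j → G i ⬝ᵥ δ ≤ 0) :
    0 ≤ (H *ᵥ (zstar x Set.univ) + Fᵀ *ᵥ x) ⬝ᵥ δ := by
  classical
  set zs : EuclideanSpace ℝ (Fin n_z) := zstar x Set.univ with hzs
  set zh : EuclideanSpace ℝ (Fin n_z) := zstar xh Set.univ with hzh
  set Δ : ℝ := ‖x - xh‖ with hΔdef
  have hΔ0 : 0 ≤ Δ := norm_nonneg _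
  have hfx : ∀ i, G i ⬝ᵥ zs ≤ S i ⬝ᵥ x + w i := by
    intro i
    have := hmem x Set.univ
    rw [hZ] at this
    exact this i (Set.mem_univ i)
  set Q : ℝ := (H *ᵥ zs + Fᵀ *ᵥ x) ⬝ᵥ δ with hQdef
  suffices hsuf : ∀ ε : ℝ, 0 < ε → -ε ≤ Q by
    by_contra hq
    push_neg at hq
    have := hsuf (-Q / 2) (by linarith)
    linarith
  intro ε hε
  set Hδ : EuclideanSpace ℝ (Fin n_z) := WithLp.toLp 2 (H *ᵥ δ) with hHδdef
  set Fδ : EuclideanSpace ℝ (Fin n_x) := WithLp.toLp 2 (F *ᵥ δ) with hFδdef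
  set Cerr : ℝ := κ * Δ * ‖Hδ‖ + Δ * ‖Fδ‖ with hCerrdef
  have hCerr0 : 0 ≤ Cerr := by positivity
  set mfun : Fin n_c → ℝ := fun i =>
    if G i ⬝ᵥ zs < S i ⬝ᵥ x + w i then
      (S i ⬝ᵥ x + w i - G i ⬝ᵥ zs) /
        ((|S i ⬝ᵥ (xh - x)| + Real.sqrt (dotProduct (G i) (G i)) * κ * Δ) + 1)
    else 1 with hmfun
  have hne : (Finset.univ : Finset (Fin n_c)).Nonempty := ⟨⟨0, hnc⟩, Finset.mem_univ _⟩
  have hCpos : ∀ i : Fin n_c,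
      (0:ℝ) < (|S i ⬝ᵥ (xh - x)| + Real.sqrt (dotProduct (G i) (G i)) * κ * Δ) + 1 := by
    intro i
    have h1 := abs_nonneg (S i ⬝ᵥ (xh - x))
    have h2 := TMQP.sqrtdot_nonneg (G i)
    nlinarith [mul_nonneg (mul_nonneg h2 hκ0) hΔ0]
  have hmpos : ∀ i, 0 < mfun i := by
    intro i
    rw [hmfun]
    dsimp only
    split
    · rename_i h
      exact div_pos (by linarith) (hCpos i)
    · exact one_pos
  set β : ℝ := min (min (Finset.univ.inf' hne mfun) (ε / (Cerr + 1))) 1 with hβdef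
  have hβpos : 0 < β :=
    lt_min (lt_min ((Finset.lt_inf'_iff hne).2 fun i _ => hmpos i)
      (div_pos hε (by linarith))) one_pos
  have hβ1 : β ≤ 1 := min_le_right _ _
  have hβm : ∀ i, β ≤ mfun i := fun i =>
    le_trans (le_trans (min_le_left _ _) (min_le_left _ _)) (Finset.inf'_le _ (Finset.mem_univ i))
  have hβε : β * (Cerr + 1) ≤ ε := by
    have h1 : β ≤ ε / (Cerr + 1) := le_trans (min_le_left _ _) (min_le_right _ _)
    exact (le_div_iff₀ (by linarith)).mp h1
  set t : ℝ := 1 - β / 2 with htdef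
  have h0t : 0 ≤ t := by rw [htdef]; linarith
  have ht1 : t < 1 := by rw [htdef]; linarith
  have h1t : 1 - t = β / 2 := by rw [htdef]; ring
  set y : EuclideanSpace ℝ (Fin n_x) := xh + t • (x - xh) with hydef
  have hyx : x - y = (1 - t) • (x - xh) := by rw [hydef]; module
  have hyh : y - xh = t • (x - xh) := by rw [hydef]; module
  have hy2 : y = x + (1 - t) • (xh - x) := by rw [hydef]; module
  have hnyx : ‖x - y‖ = (1 - t) * Δ := by
    rw [hyx, norm_smul, Real.norm_eq_abs, abs_of_nonneg (by linarith : (0:ℝ) ≤ 1 - t)]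
  have hnyh : ‖y - xh‖ = t * Δ := by
    rw [hyh, norm_smul, Real.norm_eq_abs, abs_of_nonneg h0t]
  set ζ : EuclideanSpace ℝ (Fin n_z) := zstar y Set.univ with hζdef
  have hGLC1 : ‖ζ - zs‖ ≤ κ * ((1 - t) * Δ) := by
    have h := hGLC y x Set.univ
    rw [norm_sub_rev y x, hnyx] at h
    exact h
  have hGLC2 : ‖ζ - zh‖ ≤ κ * (t * Δ) := by
    have h := hGLC y xh Set.univ
    rw [hnyh] at h
    exact h
  have hdot1 : ∀ i : Fin n_c, G i ⬝ᵥ ζ ≤ G i ⬝ᵥ zs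
      + Real.sqrt (dotProduct (G i) (G i)) * (κ * ((1 - t) * Δ)) := by
    intro i
    have h1 := TMQP.dot_sub_le (G i) ζ zs
    have h3 : Real.sqrt (dotProduct (G i) (G i)) * ‖ζ - zs‖
        ≤ Real.sqrt (dotProduct (G i) (G i)) * (κ * ((1 - t) * Δ)) :=
      mul_le_mul_of_nonneg_left hGLC1 (TMQP.sqrtdot_nonneg _)
    linarith
  have hdot2 : G j ⬝ᵥ ζ ≤ G j ⬝ᵥ zh
      + Real.sqrt (dotProduct (G j) (G j)) * (κ * (t * Δ)) := by
    have h1 := TMQP.dot_sub_le (G j) ζ zh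
    have h3 : Real.sqrt (dotProduct (G j) (G j)) * ‖ζ - zh‖
        ≤ Real.sqrt (dotProduct (G j) (G j)) * (κ * (t * Δ)) :=
      mul_le_mul_of_nonneg_left hGLC2 (TMQP.sqrtdot_nonneg _)
    linarith
  have hFOp : ∀ i, 0 < G i ⬝ᵥ δ → G i ⬝ᵥ ζ < S i ⬝ᵥ y + w i := by
    intro i hip
    by_cases hij : i = j
    · subst hij
      have hSy : S i ⬝ᵥ y = S i ⬝ᵥ xh + t * (S i ⬝ᵥ x - S i ⬝ᵥ xh) := by
        rw [hydef, TMQP.dot_add_smul, TMQP.dot_sub_right]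
      have hb := hdot2
      have hts : t * (κ * Δ * Real.sqrt (dotProduct (G i) (G i)))
          ≤ t * (w i + S i ⬝ᵥ x - G i ⬝ᵥ zh) := mul_le_mul_of_nonneg_left hcert h0t
      nlinarith [mul_pos (show (0:ℝ) < 1 - t by linarith)
        (show (0:ℝ) < S i ⬝ᵥ xh + w i - G i ⬝ᵥ zh by linarith)]
    · by_cases hact : G i ⬝ᵥ zs = S i ⬝ᵥ x + w i
      · have := hδ i hact hij
        linarith
      · have hslack : G i ⬝ᵥ zs < S i ⬝ᵥ x + w i := lt_of_le_of_ne (hfx i) hact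
        have hmi : β ≤ mfun i := hβm i
        have hmieq : mfun i = (S i ⬝ᵥ x + w i - G i ⬝ᵥ zs) /
            ((|S i ⬝ᵥ (xh - x)| + Real.sqrt (dotProduct (G i) (G i)) * κ * Δ) + 1) := by
          rw [hmfun]
          dsimp only
          rw [if_pos hslack]
        have hq1 : (1 - t) * ((|S i ⬝ᵥ (xh - x)|
              + Real.sqrt (dotProduct (G i) (G i)) * κ * Δ) + 1)
            < S i ⬝ᵥ x + w i - G i ⬝ᵥ zs := by
          have h1t2 : 1 - t < β := by rw [h1t]; linarith
          have h2 : β * ((|S i ⬝ᵥ (xh - x)|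
              + Real.sqrt (dotProduct (G i) (G i)) * κ * Δ) + 1)
              ≤ S i ⬝ᵥ x + w i - G i ⬝ᵥ zs := by
            rw [hmieq] at hmi
            exact (le_div_iff₀ (hCpos i)).mp hmi
          nlinarith [hCpos i]
        have hSy2 : S i ⬝ᵥ y = S i ⬝ᵥ x + (1 - t) * (S i ⬝ᵥ (xh - x)) := by
          rw [hy2, TMQP.dot_add_smul, WithLp.ofLp_sub]
        have habs : -(|S i ⬝ᵥ (xh - x)|) ≤ S i ⬝ᵥ (xh - x) := neg_abs_le _
        have h1t0 : (0:ℝ) ≤ 1 - t := by linarith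
        nlinarith [mul_le_mul_of_nonneg_left habs h1t0, hdot1 i]
  have hFO := TMQP.FO hnc H hHT hHpsd F G S w V hV Z hZ zstar hmem hopt y δ hFOp
  have e1 : (H *ᵥ (ζ : Fin n_z → ℝ)) ⬝ᵥ (δ : Fin n_z → ℝ)
      = (ζ : Fin n_z → ℝ) ⬝ᵥ (H *ᵥ (δ : Fin n_z → ℝ)) := by
    rw [dotProduct_comm]
    exact TMQP.dot_mulVec_symm H hHT δ ζ
  have e2 : (H *ᵥ (zs : Fin n_z → ℝ)) ⬝ᵥ (δ : Fin n_z → ℝ)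
      = (zs : Fin n_z → ℝ) ⬝ᵥ (H *ᵥ (δ : Fin n_z → ℝ)) := by
    rw [dotProduct_comm]
    exact TMQP.dot_mulVec_symm H hHT δ zs
  have e3 := TMQP.transpose_dot F y δ
  have e4 := TMQP.transpose_dot F x δ
  have hsplit1 : (H *ᵥ ζ + Fᵀ *ᵥ y) ⬝ᵥ δ
      = (H *ᵥ (ζ : Fin n_z → ℝ)) ⬝ᵥ δ + (Fᵀ *ᵥ (y : Fin n_x → ℝ)) ⬝ᵥ δ :=
    add_dotProduct _ _ _
  have hsplit2 : Q = (H *ᵥ (zs : Fin n_z → ℝ)) ⬝ᵥ δ + (Fᵀ *ᵥ (x : Fin n_x → ℝ)) ⬝ᵥ δ :=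
    add_dotProduct _ _ _
  -- bounds on the two error terms, via dot_sub_le in both directions
  have hHδn : Real.sqrt (dotProduct (Hδ : Fin n_z → ℝ) (Hδ : Fin n_z → ℝ)) = ‖Hδ‖ :=
    TMQP.sqrt_dot (Hδ : Fin n_z → ℝ)
  have hFδn : Real.sqrt (dotProduct (Fδ : Fin n_x → ℝ) (Fδ : Fin n_x → ℝ)) = ‖Fδ‖ :=
    TMQP.sqrt_dot (Fδ : Fin n_x → ℝ)
  have t1a : (Hδ : Fin n_z → ℝ) ⬝ᵥ ζ - (Hδ : Fin n_z → ℝ) ⬝ᵥ zs ≤ ‖Hδ‖ * ‖ζ - zs‖ := by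
    have := TMQP.dot_sub_le (Hδ : Fin n_z → ℝ) ζ zs
    rwa [hHδn] at this
  have t1b : (Hδ : Fin n_z → ℝ) ⬝ᵥ zs - (Hδ : Fin n_z → ℝ) ⬝ᵥ ζ ≤ ‖Hδ‖ * ‖ζ - zs‖ := by
    have := TMQP.dot_sub_le (Hδ : Fin n_z → ℝ) zs ζ
    rwa [hHδn, norm_sub_rev] at this
  have t2b : (Fδ : Fin n_x → ℝ) ⬝ᵥ y - (Fδ : Fin n_x → ℝ) ⬝ᵥ x ≤ ‖Fδ‖ * ‖x - y‖ := by
    have := TMQP.dot_sub_le (Fδ : Fin n_x → ℝ) y x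
    rwa [hFδn, norm_sub_rev] at this
  have c1 : (ζ : Fin n_z → ℝ) ⬝ᵥ (H *ᵥ (δ : Fin n_z → ℝ)) = (Hδ : Fin n_z → ℝ) ⬝ᵥ ζ := by
    rw [hHδdef, dotProduct_comm]
  have c2 : (zs : Fin n_z → ℝ) ⬝ᵥ (H *ᵥ (δ : Fin n_z → ℝ)) = (Hδ : Fin n_z → ℝ) ⬝ᵥ zs := by
    rw [hHδdef, dotProduct_comm]
  have c3 : (y : Fin n_x → ℝ) ⬝ᵥ (F *ᵥ (δ : Fin n_z → ℝ)) = (Fδ : Fin n_x → ℝ) ⬝ᵥ y := by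
    rw [hFδdef, dotProduct_comm]
  have c4 : (x : Fin n_x → ℝ) ⬝ᵥ (F *ᵥ (δ : Fin n_z → ℝ)) = (Fδ : Fin n_x → ℝ) ⬝ᵥ x := by
    rw [hFδdef, dotProduct_comm]
  have hQdiff : Q ≥ (H *ᵥ ζ + Fᵀ *ᵥ y) ⬝ᵥ δ
      - ‖Hδ‖ * ‖ζ - zs‖ - ‖Fδ‖ * ‖x - y‖ := by
    rw [hsplit1, hsplit2, e1, e2, e3, e4, c1, c2, c3, c4]
    linarith [t1a, t2b]
  have hn1 : ‖Hδ‖ * ‖ζ - zs‖ ≤ ‖Hδ‖ * (κ * ((1 - t) * Δ)) :=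
    mul_le_mul_of_nonneg_left hGLC1 (norm_nonneg _)
  have hn2 : ‖Fδ‖ * ‖x - y‖ = ‖Fδ‖ * ((1 - t) * Δ) := by rw [hnyx]
  have hlast : (1 - t) * Cerr ≤ ε := by
    have h7 : (1 - t) * Cerr = (β / 2) * Cerr := by rw [h1t]
    have h8 : (β / 2) * Cerr ≤ β * Cerr :=
      mul_le_mul_of_nonneg_right (by linarith) hCerr0
    have h9 : β * Cerr ≤ β * (Cerr + 1) :=
      mul_le_mul_of_nonneg_left (by linarith) (le_of_lt hβpos)
    calc (1 - t) * Cerr = β / 2 * Cerr := h7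
      _ ≤ β * Cerr := h8
      _ ≤ β * (Cerr + 1) := h9
      _ ≤ ε := hβε
  have hexp : ‖Hδ‖ * (κ * ((1 - t) * Δ)) + ‖Fδ‖ * ((1 - t) * Δ) = (1 - t) * Cerr := by
    rw [hCerrdef]; ring
  linarith [hFO]

set_option maxHeartbeats 1000000 in
/-- Theorem 2: under LICQ, intersecting the index sets produced by
Algorithm 1 over several solved mp-QPs preserves the optimal solution. -/
theorem trimmed_mpQP_multiple_solved_optimal
    (n_x n_z n_c : ℕ) (hnx : 0 < n_x) (hnz : 0 < n_z) (hnc : 0 < n_c)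
    (H : Matrix (Fin n_z) (Fin n_z) ℝ) (hH : H.PosDef)
    (F : Matrix (Fin n_x) (Fin n_z) ℝ)
    (G : Matrix (Fin n_c) (Fin n_z) ℝ)
    (S : Matrix (Fin n_c) (Fin n_x) ℝ)
    (w : Fin n_c → ℝ)
    (V : EuclideanSpace ℝ (Fin n_x) → EuclideanSpace ℝ (Fin n_z) → ℝ)
    (hV : ∀ x z, V x z = (1 / 2) * dotProduct z (H.mulVec z)
      + dotProduct x (F.mulVec z))
    (Z : EuclideanSpace ℝ (Fin n_x) → Set (Fin n_c) → Set (EuclideanSpace ℝ (Fin n_z)))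
    (hZ : ∀ x I, Z x I =
      {z : EuclideanSpace ℝ (Fin n_z) | ∀ j ∈ I, dotProduct (G j) z ≤ dotProduct (S j) x + w j})
    (hfeas : ∀ x, (Z x Set.univ).Nonempty)
    (zstar : EuclideanSpace ℝ (Fin n_x) → Set (Fin n_c) → EuclideanSpace ℝ (Fin n_z))
    (hmem : ∀ x I, zstar x I ∈ Z x I)
    (hopt : ∀ x I, ∀ z ∈ Z x I, V x (zstar x I) ≤ V x z)
    (huniq : ∀ x I, ∀ z ∈ Z x I, (∀ z' ∈ Z x I, V x z ≤ V x z') → z = zstar x I)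
    (hLICQ : ∀ x : EuclideanSpace ℝ (Fin n_x), LinearIndependent ℝ
      (fun j : {j : Fin n_c // dotProduct (G j) (zstar x Set.univ)
        = dotProduct (S j) x + w j} => G j.1))
    (hGrow : ∀ j, G j ≠ 0)
    (κ : ℝ) (hκ0 : 0 ≤ κ)
    (hGLC : ∀ (x₁ x₂ : EuclideanSpace ℝ (Fin n_x)) (I : Set (Fin n_c)),
      ‖zstar x₁ I - zstar x₂ I‖ ≤ κ * ‖x₁ - x₂‖)
    (q : ℕ) (xh : Fin q → EuclideanSpace ℝ (Fin n_x)) (x : EuclideanSpace ℝ (Fin n_x))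
    (A : Fin q → Set (Fin n_c))
    (hA : ∀ k, A k = {j | dotProduct (G j) (zstar (xh k) Set.univ)
      = dotProduct (S j) (xh k) + w j})
    (R : Fin q → Set (Fin n_c))
    (hR : ∀ k, R k = {j | j ∉ A k ∧
      (w j + dotProduct (S j) x - dotProduct (G j) (zstar (xh k) Set.univ)) /
        Real.sqrt (dotProduct (G j) (G j)) < κ * ‖x - xh k‖}) :
    zstar x (⋂ k, A k ∪ R k) = zstar x Set.univ := by
  classical
  have hHT : Hᵀ = H := by simpa using hH.isHermitian.eq
  have hHpsd : ∀ v : Fin n_z → ℝ, 0 ≤ v ⬝ᵥ (H *ᵥ v) := by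
    intro v
    simpa using hH.posSemidef.dotProduct_mulVec_nonneg v
  set zs : EuclideanSpace ℝ (Fin n_z) := zstar x Set.univ with hzsdef
  set I : Set (Fin n_c) := ⋂ k, A k ∪ R k with hIdef
  have hfxall : ∀ i, G i ⬝ᵥ zs ≤ S i ⬝ᵥ x + w i := by
    intro i
    have := hmem x Set.univ
    rw [hZ] at this
    exact this i (Set.mem_univ i)
  -- certificates for removed constraints
  have hcertj : ∀ j : Fin n_c, j ∉ I → ∃ k : Fin q,
      (G j ⬝ᵥ zstar (xh k) Set.univ < S j ⬝ᵥ xh k + w j) ∧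
      κ * ‖x - xh k‖ * Real.sqrt (dotProduct (G j) (G j))
        ≤ w j + S j ⬝ᵥ x - G j ⬝ᵥ zstar (xh k) Set.univ := by
    intro j hj
    rw [hIdef, Set.mem_iInter] at hj
    push_neg at hj
    obtain ⟨k, hk⟩ := hj
    rw [Set.mem_union] at hk
    push_neg at hk
    obtain ⟨hkA, hkR⟩ := hk
    have hjA : ¬ (G j ⬝ᵥ zstar (xh k) Set.univ = S j ⬝ᵥ xh k + w j) := by
      intro heq
      apply hkA
      rw [hA k]
      exact heq
    have hfeh : G j ⬝ᵥ zstar (xh k) Set.univ ≤ S j ⬝ᵥ xh k + w j := by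
      have := hmem (xh k) Set.univ
      rw [hZ] at this
      exact this j (Set.mem_univ j)
    refine ⟨k, lt_of_le_of_ne hfeh hjA, ?_⟩
    have hkR' : κ * ‖x - xh k‖
        ≤ (w j + S j ⬝ᵥ x - G j ⬝ᵥ zstar (xh k) Set.univ) /
          Real.sqrt (dotProduct (G j) (G j)) := by
      rw [hR k] at hkR
      simp only [Set.mem_setOf_eq, not_and, not_lt] at hkR
      exact hkR hkA
    have hsqpos : 0 < Real.sqrt (dotProduct (G j) (G j)) := by
      have hsq := TMQP.sqrt_dot (G j)
      rw [hsq]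
      exact norm_pos_iff.mpr (by simpa using hGrow j)
    exact (le_div_iff₀ hsqpos).mp hkR'
  set qv : Fin n_z → ℝ := H *ᵥ zs + Fᵀ *ᵥ x with hqvdef
  have hKEYj : ∀ j, j ∉ I → ∀ δ : EuclideanSpace ℝ (Fin n_z),
      (∀ i, G i ⬝ᵥ zs = S i ⬝ᵥ x + w i → i ≠ j → G i ⬝ᵥ δ ≤ 0) → 0 ≤ qv ⬝ᵥ δ := by
    intro j hj δ hδ
    obtain ⟨k, h1, h2⟩ := hcertj j hj
    exact TMQP.KEY hnc H hHT hHpsd F G S w V hV Z hZ zstar hmem hopt κ hκ0 hGLC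
      x (xh k) j h1 h2 δ hδ
  have hBASE : ∀ δ : EuclideanSpace ℝ (Fin n_z),
      (∀ i, G i ⬝ᵥ zs = S i ⬝ᵥ x + w i → G i ⬝ᵥ δ ≤ 0) → 0 ≤ qv ⬝ᵥ δ := by
    intro δ hδ
    apply TMQP.FO hnc H hHT hHpsd F G S w V hV Z hZ zstar hmem hopt x δ
    intro i hip
    by_cases hact : G i ⬝ᵥ zs = S i ⬝ᵥ x + w i
    · have := hδ i hact
      linarith
    · exact lt_of_le_of_ne (hfxall i) hact
  have hdual : ∀ j, G j ⬝ᵥ zs = S j ⬝ᵥ x + w j →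
      ∃ e : EuclideanSpace ℝ (Fin n_z),
        G j ⬝ᵥ e = 1 ∧ ∀ i, G i ⬝ᵥ zs = S i ⬝ᵥ x + w i → i ≠ j → G i ⬝ᵥ e = 0 := by
    intro j hj
    exact TMQP.DUAL G (fun i => G i ⬝ᵥ zs = S i ⬝ᵥ x + w i) (hLICQ x) j hj
  choose e he1 he2 using hdual
  have hcone : ∀ δ : EuclideanSpace ℝ (Fin n_z),
      (∀ i, G i ⬝ᵥ zs = S i ⬝ᵥ x + w i → i ∈ I → G i ⬝ᵥ δ ≤ 0) → 0 ≤ qv ⬝ᵥ δ := by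
    intro δ hδ
    set P : Finset (Fin n_c) := Finset.univ.filter
      (fun i => G i ⬝ᵥ zs = S i ⬝ᵥ x + w i ∧ i ∉ I ∧ 0 < G i ⬝ᵥ δ) with hPdef
    have hmemP : ∀ i ∈ P, (G i ⬝ᵥ zs = S i ⬝ᵥ x + w i) ∧ i ∉ I ∧ 0 < G i ⬝ᵥ δ := by
      intro i hi
      rw [hPdef] at hi
      exact (Finset.mem_filter.mp hi).2
    set cP : {a // a ∈ P} → ℝ := fun b => G b.1 ⬝ᵥ δ with hcP
    set fP : {a // a ∈ P} → EuclideanSpace ℝ (Fin n_z) :=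
      fun b => e b.1 (hmemP b.1 b.2).1 with hfP
    set δ' : Fin n_z → ℝ := fun r => δ r - ∑ b ∈ P.attach, cP b * fP b r with hδ'def
    have hdots : ∀ v : Fin n_z → ℝ,
        v ⬝ᵥ δ' = v ⬝ᵥ δ - ∑ b ∈ P.attach, cP b * (v ⬝ᵥ fP b) :=
      fun v => TMQP.dot_pointwise v δ P.attach cP fP
    have hbase' : 0 ≤ qv ⬝ᵥ δ' := by
      apply hBASE (WithLp.toLp 2 δ')
      intro i hi
      rw [WithLp.ofLp_toLp, hdots (G i)]
      by_cases hiP : i ∈ P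
      · have hsum : ∑ b ∈ P.attach, cP b * (G i ⬝ᵥ fP b) = G i ⬝ᵥ δ := by
          rw [Finset.sum_eq_single_of_mem (⟨i, hiP⟩ : {a // a ∈ P}) (Finset.mem_attach _ _)]
          · rw [hfP]
            dsimp only
            rw [he1 i (hmemP i hiP).1, hcP]
            exact mul_one _
          · intro b _ hb
            have hbne : i ≠ b.1 := by
              intro hh
              exact hb (Subtype.ext hh.symm)
            rw [hfP]
            dsimp only
            rw [he2 b.1 (hmemP b.1 b.2).1 i hi hbne]
            exact mul_zero _
        rw [hsum]
        linarith
      · have hzero : ∀ b ∈ P.attach, cP b * (G i ⬝ᵥ fP b) = 0 := by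
          intro b _
          have hbne : i ≠ b.1 := by
            intro hh
            rw [hh] at hiP
            exact hiP b.2
          rw [hfP]
          dsimp only
          rw [he2 b.1 (hmemP b.1 b.2).1 i hi hbne]
          exact mul_zero _
        rw [Finset.sum_eq_zero hzero]
        have hnP : ¬ (G i ⬝ᵥ zs = S i ⬝ᵥ x + w i ∧ i ∉ I ∧ 0 < G i ⬝ᵥ δ) := by
          intro hc
          exact hiP (by rw [hPdef]; exact Finset.mem_filter.mpr ⟨Finset.mem_univ _, hc⟩)
        by_cases hiI : i ∈ I
        · linarith [hδ i hi hiI]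
        · have : ¬ (0 < G i ⬝ᵥ δ) := fun hpos => hnP ⟨hi, hiI, hpos⟩
          push_neg at this
          linarith
    have hsumpos : 0 ≤ ∑ b ∈ P.attach, cP b * (qv ⬝ᵥ fP b) := by
      apply Finset.sum_nonneg
      intro b _
      apply mul_nonneg
      · rw [hcP]
        exact le_of_lt (hmemP b.1 b.2).2.2
      · rw [hfP]
        dsimp only
        refine hKEYj b.1 (hmemP b.1 b.2).2.1 _ ?_
        intro i hi hib
        exact le_of_eq (he2 b.1 (hmemP b.1 b.2).1 i hi hib)
    have := hdots qv
    linarith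
  have hzsI : zs ∈ Z x I := by
    rw [hZ]
    intro i _
    exact hfxall i
  have hmin : ∀ z' ∈ Z x I, V x zs ≤ V x z' := by
    intro z' hz'
    rw [hZ] at hz'
    have h1 : 0 ≤ qv ⬝ᵥ ((z' - zs : EuclideanSpace ℝ (Fin n_z))) := by
      apply hcone
      intro i hi hiI
      rw [TMQP.dot_sub_right]
      linarith [hz' i hiI]
    have h2 := hHpsd ((z' - zs : EuclideanSpace ℝ (Fin n_z)))
    have h3 := TMQP.Vdiff H hHT F V hV x zs (z' - zs) 1
    have h4 : zs + (1:ℝ) • (z' - zs) = z' := by module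
    rw [h4] at h3
    rw [h3]
    nlinarith [h1, h2]
  exact (huniq x I zs hzsI hmin).symm
end

section
/- Let κ be a GLC and let x, x̂ ∈ ℝ^{n_x}. If j ∈ {1,…,n_c} is such that the closed ball B(v(x̂), √(1+κ²)·‖x − x̂‖) in ℝ^{n_x+n_z} is contained in the lifted half-space 𝒱_j, then the closed ball B(z*(x̂), κ‖x − x̂‖) in ℝ^{n_z} is contained in Z_j(x). In other words, E(x) ⊆ D(x), where E(x) = {j : B(v(x̂), √(1+κ²)‖x−x̂‖) ⊆ 𝒱_j} and D(x) = {j : B(z*(x̂), κ‖x−x̂‖) ⊆ Z_j(x)}. -/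
/-! By Pythagoras in the product `ℓ²` norm, `z ∈ B(z*(x̂), κ‖x − x̂‖)` puts the lifted point
`(x, z)` in `B(v(x̂), √(1+κ²)‖x − x̂‖)`, and `(x, z) ∈ 𝒱_j` says exactly that `z ∈ Z_j(x)`. -/

open Metric

theorem WithLp.toLp_mem_closedBall_sqrt_one_add_sq {α β : Type*}
    [SeminormedAddCommGroup α] [SeminormedAddCommGroup β] {x x₀ : α} {z z₀ : β} {κ : ℝ}
    (hz : dist z z₀ ≤ κ * dist x x₀) :
    WithLp.toLp 2 (x, z) ∈ closedBall (WithLp.toLp 2 (x₀, z₀)) (√(1 + κ ^ 2) * dist x x₀) := by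
  have hsq : dist z z₀ ^ 2 ≤ κ ^ 2 * dist x x₀ ^ 2 := by
    rw [← mul_pow]
    exact pow_le_pow_left₀ dist_nonneg hz 2
  rw [mem_closedBall, WithLp.prod_dist_eq_of_L2]
  calc √(dist x x₀ ^ 2 + dist z z₀ ^ 2)
      ≤ √((1 + κ ^ 2) * dist x x₀ ^ 2) := Real.sqrt_le_sqrt (by linarith)
    _ = √(1 + κ ^ 2) * dist x x₀ := by
      rw [Real.sqrt_mul (by positivity), Real.sqrt_sq dist_nonneg]

theorem lifted_ball_subset_implies_ball_subset_general
    (n_x n_z n_c : ℕ)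
    (G : Matrix (Fin n_c) (Fin n_z) ℝ)
    (S : Matrix (Fin n_c) (Fin n_x) ℝ)
    (w : Fin n_c → ℝ)
    (zstar : EuclideanSpace ℝ (Fin n_x) → Set (Fin n_c) → EuclideanSpace ℝ (Fin n_z))
    (κ : ℝ)
    (x xh : EuclideanSpace ℝ (Fin n_x)) (j : Fin n_c)
    (hE : Metric.closedBall
        ((WithLp.equiv 2 (EuclideanSpace ℝ (Fin n_x) × EuclideanSpace ℝ (Fin n_z))).symm
          (xh, zstar xh Set.univ))
        (Real.sqrt (1 + κ ^ 2) * ‖x - xh‖) ⊆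
      {u : WithLp 2 (EuclideanSpace ℝ (Fin n_x) × EuclideanSpace ℝ (Fin n_z)) |
        dotProduct (G j) ((WithLp.equiv 2 _) u).2
          - dotProduct (S j) ((WithLp.equiv 2 _) u).1 ≤ w j}) :
    Metric.closedBall (zstar xh Set.univ) (κ * ‖x - xh‖) ⊆
      {z : EuclideanSpace ℝ (Fin n_z) |
        dotProduct (G j) z ≤ dotProduct (S j) x + w j} := by
  intro z hz
  rw [mem_closedBall, ← dist_eq_norm] at hz
  have hlifted := hE (by simpa [dist_eq_norm] using WithLp.toLp_mem_closedBall_sqrt_one_add_sq hz)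
  change G j ⬝ᵥ z - S j ⬝ᵥ x ≤ w j at hlifted
  change G j ⬝ᵥ z ≤ S j ⬝ᵥ x + w j
  linarith

/-- Lemma 5(b): if the lifted ball `B(v(x̂), √(1+κ²)‖x−x̂‖)` is contained
in the lifted half-space `𝒱_j`, then `B(z*(x̂), κ‖x−x̂‖) ⊆ Z_j(x)`; i.e. `E(x) ⊆ D(x)`. -/
theorem lifted_ball_subset_implies_ball_subset
    (n_x n_z n_c : ℕ) (hnx : 0 < n_x) (hnz : 0 < n_z) (hnc : 0 < n_c)
    (H : Matrix (Fin n_z) (Fin n_z) ℝ) (hH : H.PosDef)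
    (F : Matrix (Fin n_x) (Fin n_z) ℝ)
    (G : Matrix (Fin n_c) (Fin n_z) ℝ)
    (S : Matrix (Fin n_c) (Fin n_x) ℝ)
    (w : Fin n_c → ℝ)
    (V : EuclideanSpace ℝ (Fin n_x) → EuclideanSpace ℝ (Fin n_z) → ℝ)
    (hV : ∀ x z, V x z = (1 / 2) * dotProduct z (H.mulVec z)
      + dotProduct x (F.mulVec z))
    (Z : EuclideanSpace ℝ (Fin n_x) → Set (Fin n_c) → Set (EuclideanSpace ℝ (Fin n_z)))
    (hZ : ∀ x I, Z x I =
      {z : EuclideanSpace ℝ (Fin n_z) | ∀ j ∈ I, dotProduct (G j) z ≤ dotProduct (S j) x + w j})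
    (hfeas : ∀ x, (Z x Set.univ).Nonempty)
    (zstar : EuclideanSpace ℝ (Fin n_x) → Set (Fin n_c) → EuclideanSpace ℝ (Fin n_z))
    (hmem : ∀ x I, zstar x I ∈ Z x I)
    (hopt : ∀ x I, ∀ z ∈ Z x I, V x (zstar x I) ≤ V x z)
    (huniq : ∀ x I, ∀ z ∈ Z x I, (∀ z' ∈ Z x I, V x z ≤ V x z') → z = zstar x I)
    (κ : ℝ) (hκ0 : 0 ≤ κ)
    (hGLC : ∀ (x₁ x₂ : EuclideanSpace ℝ (Fin n_x)) (I : Set (Fin n_c)),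
      ‖zstar x₁ I - zstar x₂ I‖ ≤ κ * ‖x₁ - x₂‖)
    (x xh : EuclideanSpace ℝ (Fin n_x)) (j : Fin n_c)
    (hE : Metric.closedBall
        ((WithLp.equiv 2 (EuclideanSpace ℝ (Fin n_x) × EuclideanSpace ℝ (Fin n_z))).symm
          (xh, zstar xh Set.univ))
        (Real.sqrt (1 + κ ^ 2) * ‖x - xh‖) ⊆
      {u : WithLp 2 (EuclideanSpace ℝ (Fin n_x) × EuclideanSpace ℝ (Fin n_z)) |
        dotProduct (G j) ((WithLp.equiv 2 _) u).2
          - dotProduct (S j) ((WithLp.equiv 2 _) u).1 ≤ w j}) :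
    Metric.closedBall (zstar xh Set.univ) (κ * ‖x - xh‖) ⊆
      {z : EuclideanSpace ℝ (Fin n_z) |
        dotProduct (G j) z ≤ dotProduct (S j) x + w j} :=
  lifted_ball_subset_implies_ball_subset_general n_x n_z n_c G S w zstar κ x xh j hE
end

section
/- Let i ∈ {1,…,n_c} and suppose σ_i = sup Γ_i is finite. Then for every v ∈ 𝒱 and every r with 0 ≤ r ≤ σ_i, one has N(v,r) ≥ n_c − i, i.e., the closed ball B(v,r) is contained in at least n_c − i of the half-spaces 𝒱_j. -/
/-!
Shrinking the radius only enlarges the set of half-spaces containing `B(v,r)`, and, the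
half-spaces being closed and finitely many, that set is already attained at radii slightly
below `r`: a closed set containing every `B(v,s)` with `s < r` contains their union, the open
ball, hence its closure `B(v,r)`. Every `s < σ_i` lies below some element of `Γ_i`, so the
count at such radii, and therefore at `r`, is at least `n_c − i`. At `r = 0` the ball is `{v}`,
which lies in every half-space.
-/

open Metric Filter Topology

section ClosedBallIndices

variable {E ι : Type*} (v : E)

theorem ncard_setOf_closedBall_subset_antitone [PseudoMetricSpace E] [Finite ι]
    (H : ι → Set E) :
    Antitone fun r : ℝ => {j | closedBall v r ⊆ H j}.ncard :=
  fun _ _ hst => Set.ncard_le_ncard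
    (fun _ hj => (closedBall_subset_closedBall hst).trans hj) (Set.toFinite _)

theorem closedBall_subset_of_forall_lt [NormedAddCommGroup E] [NormedSpace ℝ E] {C : Set E}
    (hC : IsClosed C) {r : ℝ} (hr : 0 < r) (h : ∀ s < r, closedBall v s ⊆ C) :
    closedBall v r ⊆ C := by
  rw [← closure_ball v hr.ne']
  exact hC.closure_subset_iff.2 fun u hu => h (dist u v) hu (mem_closedBall.2 le_rfl)

theorem eventually_ncard_setOf_closedBall_subset_le [NormedAddCommGroup E] [NormedSpace ℝ E]
    [Finite ι] {H : ι → Set E} (hH : ∀ j, IsClosed (H j)) {r : ℝ} (hr : 0 < r) :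
    ∀ᶠ s in 𝓝[<] r,
      {j | closedBall v s ⊆ H j}.ncard ≤ {j | closedBall v r ⊆ H j}.ncard := by
  have hsub : ∀ j, ∀ᶠ s in 𝓝[<] r, closedBall v s ⊆ H j → closedBall v r ⊆ H j := by
    intro j
    by_cases hj : closedBall v r ⊆ H j
    · exact Eventually.of_forall fun _ _ => hj
    · obtain ⟨s₀, hs₀r, hs₀⟩ : ∃ s₀ < r, ¬closedBall v s₀ ⊆ H j := by
        by_contra! h
        exact hj (closedBall_subset_of_forall_lt v (hH j) hr h)
      filter_upwards [Ioo_mem_nhdsLT hs₀r] with s hs hsub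
      exact absurd ((closedBall_subset_closedBall hs.1.le).trans hsub) hs₀
  filter_upwards [eventually_all.2 hsub] with s hs
  exact Set.ncard_le_ncard hs (Set.toFinite _)

end ClosedBallIndices

theorem ENNReal.exists_gt_of_ofReal_lt_sSup_image {Γ : Set ℝ} {s : ℝ} (hs : 0 ≤ s)
    (h : ENNReal.ofReal s < sSup (ENNReal.ofReal '' Γ)) : ∃ t ∈ Γ, s < t := by
  obtain ⟨_, ⟨t, ht, rfl⟩, hlt⟩ := lt_sSup_iff.1 h
  exact ⟨t, ht, (ENNReal.ofReal_lt_ofReal_iff_of_nonneg hs).1 hlt⟩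

theorem ball_in_enough_halfspaces_of_le_sigma_general
    (n_x n_z n_c : ℕ)
    (G : Matrix (Fin n_c) (Fin n_z) ℝ)
    (S : Matrix (Fin n_c) (Fin n_x) ℝ)
    (w : Fin n_c → ℝ)
    (Vl : Set (WithLp 2 (EuclideanSpace ℝ (Fin n_x) × EuclideanSpace ℝ (Fin n_z))))
    (hVl : Vl = {v | ∀ j, dotProduct (G j) ((WithLp.equiv 2 _) v).2
      ≤ dotProduct (S j) ((WithLp.equiv 2 _) v).1 + w j})
    (N : WithLp 2 (EuclideanSpace ℝ (Fin n_x) × EuclideanSpace ℝ (Fin n_z)) → ℝ → ℕ)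
    (hN : ∀ v r, N v r = Set.ncard {j : Fin n_c | Metric.closedBall v r ⊆
      {u | dotProduct (G j) ((WithLp.equiv 2 _) u).2
        - dotProduct (S j) ((WithLp.equiv 2 _) u).1 ≤ w j}})
    (Γ : ℕ → Set ℝ)
    (hΓ : ∀ i, Γ i = {r : ℝ | 0 ≤ r ∧ ∀ v ∈ Vl, n_c - i ≤ N v r})
    (i : ℕ) :
    ∀ v ∈ Vl, ∀ r : ℝ, 0 ≤ r →
      ENNReal.ofReal r ≤ sSup (ENNReal.ofReal '' Γ i) → n_c - i ≤ N v r := by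
  intro v hv r hr hrσ
  let H : Fin n_c → Set (WithLp 2 (EuclideanSpace ℝ (Fin n_x) × EuclideanSpace ℝ (Fin n_z))) :=
    fun j => {u | dotProduct (G j) ((WithLp.equiv 2 _) u).2
      - dotProduct (S j) ((WithLp.equiv 2 _) u).1 ≤ w j}
  have hN : ∀ v r, N v r = {j | closedBall v r ⊆ H j}.ncard := hN
  have hH : ∀ j, IsClosed (H j) :=
    fun j => isClosed_le (by unfold dotProduct; fun_prop) continuous_const
  rcases hr.eq_or_lt with rfl | hr₀
  · have hvH : ∀ j, v ∈ H j := fun j => sub_le_iff_le_add'.2 ((hVl ▸ hv) j)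
    simp only [hN, closedBall_zero, Set.singleton_subset_iff, hvH, Set.ofPred_true, Set.ncard_univ,
      Nat.card_eq_fintype_card, Fintype.card_fin]
    omega
  · obtain ⟨s, ⟨hs₀, hsr⟩, hs⟩ :=
      (Eventually.and (Ioo_mem_nhdsLT hr₀)
        (eventually_ncard_setOf_closedBall_subset_le v hH hr₀)).exists
    obtain ⟨t, htΓ, hst⟩ := ENNReal.exists_gt_of_ofReal_lt_sSup_image hs₀.le
      (((ENNReal.ofReal_lt_ofReal_iff hr₀).2 hsr).trans_le hrσ)
    rw [hΓ] at htΓ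
    calc n_c - i ≤ N v t := htΓ.2 v hv
      _ ≤ N v s := by rw [hN, hN]; exact ncard_setOf_closedBall_subset_antitone v H hst.le
      _ ≤ N v r := by rw [hN, hN]; exact hs

/-- Lemma 6(b): if `σ_i = sup Γ_i` is finite, then for every `v ∈ 𝒱` and
every `0 ≤ r ≤ σ_i`, the ball `B(v,r)` is contained in at least `n_c − i` half-spaces. -/
theorem ball_in_enough_halfspaces_of_le_sigma
    (n_x n_z n_c : ℕ) (hnx : 0 < n_x) (hnz : 0 < n_z) (hnc : 0 < n_c)
    (G : Matrix (Fin n_c) (Fin n_z) ℝ)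
    (S : Matrix (Fin n_c) (Fin n_x) ℝ)
    (w : Fin n_c → ℝ)
    (Vl : Set (WithLp 2 (EuclideanSpace ℝ (Fin n_x) × EuclideanSpace ℝ (Fin n_z))))
    (hVl : Vl = {v | ∀ j, dotProduct (G j) ((WithLp.equiv 2 _) v).2
      ≤ dotProduct (S j) ((WithLp.equiv 2 _) v).1 + w j})
    (N : WithLp 2 (EuclideanSpace ℝ (Fin n_x) × EuclideanSpace ℝ (Fin n_z)) → ℝ → ℕ)
    (hN : ∀ v r, N v r = Set.ncard {j : Fin n_c | Metric.closedBall v r ⊆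
      {u | dotProduct (G j) ((WithLp.equiv 2 _) u).2
        - dotProduct (S j) ((WithLp.equiv 2 _) u).1 ≤ w j}})
    (Γ : ℕ → Set ℝ)
    (hΓ : ∀ i, Γ i = {r : ℝ | 0 ≤ r ∧ ∀ v ∈ Vl, n_c - i ≤ N v r})
    (hVlne : Vl.Nonempty)
    (i : ℕ) (hi : 1 ≤ i) (hin : i ≤ n_c)
    (hfin : sSup (ENNReal.ofReal '' Γ i) ≠ ⊤) :
    ∀ v ∈ Vl, ∀ r : ℝ, 0 ≤ r →
      ENNReal.ofReal r ≤ sSup (ENNReal.ofReal '' Γ i) → n_c - i ≤ N v r :=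
  ball_in_enough_halfspaces_of_le_sigma_general n_x n_z n_c G S w Vl hVl N hN Γ hΓ i
end

section
/- Assume LICQ, let κ be a GLC, and let x, x̂ ∈ ℝ^{n_x}. Define D(x) = {j : B(z*(x̂), κ‖x−x̂‖) ⊆ Z_j(x)} and I(x) = A(x̂) ∪ ({1,…,n_c} \ D(x)). If √(1+κ²)·‖x − x̂‖ ≤ σ_i for some i ∈ {1,…,n_c}, then the cardinality of I(x) is at most n_z + i. -/
/-!
By LICQ the active set at `x̂` has at most `n_z` elements. If `j ∉ D(x)`, some `z` within
`κ‖x - x̂‖` of `z*(x̂)` violates constraint `j` at `x`; the lifted point `(x, z)` lies within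
`r = √(1 + κ²)‖x - x̂‖` of the feasible point `(x̂, z*(x̂)) ∈ 𝒱`, so the ball of radius `r` about
that point leaves `𝒱_j`. Since the half-spaces are closed, a closed ball about a point of `𝒱_j`
that leaves `𝒱_j` still does so for a slightly smaller radius, so `r ≤ σ_i = sup Γ_i` may be
replaced by a radius in `Γ_i`, where at most `i` half-spaces are left.
-/

open Metric Filter Topology

section ClosedBall

variable {E : Type*} [NormedAddCommGroup E] [NormedSpace ℝ E] {v : E} {r : ℝ}

theorem exists_lt_not_closedBall_subset {C : Set E} (hC : IsClosed C) (hv : v ∈ C)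
    (h : ¬ closedBall v r ⊆ C) : ∃ s < r, ¬ closedBall v s ⊆ C := by
  have hr : r ≠ 0 := by
    rintro rfl
    exact h (by simpa using hv)
  rw [← closure_ball v hr, hC.closure_subset_iff, Set.not_subset] at h
  obtain ⟨u, hu, huC⟩ := h
  exact ⟨dist u v, mem_ball.1 hu, fun hs => huC (hs (mem_closedBall.2 le_rfl))⟩

theorem eventually_not_closedBall_subset {C : Set E} (hC : IsClosed C) (hv : v ∈ C)
    (h : ¬ closedBall v r ⊆ C) : ∀ᶠ s in 𝓝[<] r, ¬ closedBall v s ⊆ C := by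
  obtain ⟨s₀, hs₀, hs₀C⟩ := exists_lt_not_closedBall_subset hC hv h
  filter_upwards [Ioo_mem_nhdsLT hs₀] with s hs hsC
  exact hs₀C ((closedBall_subset_closedBall hs.1.le).trans hsC)

theorem exists_lt_setOf_not_closedBall_subset_subset {ι : Type*} [Finite ι] {C : ι → Set E}
    (hC : ∀ j, IsClosed (C j)) (hv : ∀ j, v ∈ C j) (r : ℝ) :
    ∃ s < r, {j | ¬ closedBall v r ⊆ C j} ⊆ {j | ¬ closedBall v s ⊆ C j} := by
  have h : ∀ j, ∀ᶠ s in 𝓝[<] r, ¬ closedBall v r ⊆ C j → ¬ closedBall v s ⊆ C j := by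
    intro j
    by_cases hj : closedBall v r ⊆ C j
    · exact Eventually.of_forall fun _ h => absurd hj h
    · exact (eventually_not_closedBall_subset (hC j) (hv j) hj).mono fun _ hs _ => hs
  obtain ⟨s, hs, hsr⟩ := ((eventually_all.2 h).and self_mem_nhdsWithin).exists
  exact ⟨s, hsr, hs⟩

theorem ncard_setOf_not_closedBall_subset_le {ι : Type*} [Finite ι] {C : ι → Set E}
    (hC : ∀ j, IsClosed (C j)) (hv : ∀ j, v ∈ C j) {Γ : Set ℝ} {i : ℕ}
    (hΓ : ∀ t ∈ Γ, Nat.card ι - i ≤ {j | closedBall v t ⊆ C j}.ncard)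
    (hr : ENNReal.ofReal r ≤ sSup (ENNReal.ofReal '' Γ)) :
    {j | ¬ closedBall v r ⊆ C j}.ncard ≤ i := by
  obtain ⟨s, hsr, hsub⟩ := exists_lt_setOf_not_closedBall_subset_subset hC hv r
  rcases Set.eq_empty_or_nonempty {j | ¬ closedBall v r ⊆ C j} with hempty | ⟨j, hj⟩
  · simp [hempty]
  have hs : 0 ≤ s := by
    by_contra! hs
    exact hsub hj (by simp [closedBall_eq_empty.2 hs])
  obtain ⟨_, ⟨t, htΓ, rfl⟩, hst⟩ :=
    lt_sSup_iff.1 (((ENNReal.ofReal_lt_ofReal_iff_of_nonneg hs).2 hsr).trans_le hr)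
  have hrt : {j | ¬ closedBall v r ⊆ C j} ⊆ {j | closedBall v t ⊆ C j}ᶜ :=
    hsub.trans fun j hj ht => hj ((closedBall_subset_closedBall
      ((ENNReal.ofReal_lt_ofReal_iff_of_nonneg hs).1 hst).le).trans ht)
  have hsplit := Set.ncard_add_ncard_compl {j | closedBall v t ⊆ C j}
  have hgood := hΓ t htΓ
  have hbad := Set.ncard_le_ncard hrt
  omega

end ClosedBall

theorem WithLp.dist_toLp_prod_le {E F : Type*} [SeminormedAddCommGroup E]
    [SeminormedAddCommGroup F] {x x' : E} {z z' : F} {κ : ℝ}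
    (h : dist z z' ≤ κ * dist x x') :
    dist (WithLp.toLp 2 (x, z)) (WithLp.toLp 2 (x', z')) ≤ √(1 + κ ^ 2) * dist x x' := by
  have hz : dist z z' ^ 2 ≤ (κ * dist x x') ^ 2 := pow_le_pow_left₀ dist_nonneg h 2
  calc dist (WithLp.toLp 2 (x, z)) (WithLp.toLp 2 (x', z'))
      = √(dist x x' ^ 2 + dist z z' ^ 2) := prod_dist_eq_of_L2 _ _
    _ ≤ √((1 + κ ^ 2) * dist x x' ^ 2) := Real.sqrt_le_sqrt (by nlinarith)
    _ = √(1 + κ ^ 2) * dist x x' := by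
      rw [Real.sqrt_mul (by positivity), Real.sqrt_sq dist_nonneg]

theorem LinearIndependent.ncard_setOf_le_finrank {R M ι : Type*} [Ring R] [StrongRankCondition R]
    [AddCommGroup M] [Module R M] [Module.Finite R M] {p : ι → Prop} {f : ι → M}
    (hf : LinearIndependent R (fun j : {j // p j} => f j)) :
    {j | p j}.ncard ≤ Module.finrank R M := by
  have := hf.finite
  cases nonempty_fintype {j // p j}
  rw [← Nat.card_coe_set_eq]
  exact (Nat.card_eq_fintype_card (α := {j // p j})).trans_le hf.fintype_card_le_finrank

theorem isClosed_setOf_dotProduct_snd_sub_dotProduct_fst_le {ι ι' : Type*} [Fintype ι]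
    [Fintype ι'] (g : ι' → ℝ) (s : ι → ℝ) (c : ℝ) :
    IsClosed {u : WithLp 2 (EuclideanSpace ℝ ι × EuclideanSpace ℝ ι') |
      dotProduct g ((WithLp.equiv 2 _) u).2 - dotProduct s ((WithLp.equiv 2 _) u).1 ≤ c} := by
  simp only [WithLp.equiv_apply]
  exact isClosed_le (by fun_prop) continuous_const

theorem trimmed_index_card_le_general
    (n_x n_z n_c : ℕ)
    (G : Matrix (Fin n_c) (Fin n_z) ℝ)
    (S : Matrix (Fin n_c) (Fin n_x) ℝ)
    (w : Fin n_c → ℝ)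
    (Z : EuclideanSpace ℝ (Fin n_x) → Set (Fin n_c) → Set (EuclideanSpace ℝ (Fin n_z)))
    (hZ : ∀ x I, Z x I =
      {z : EuclideanSpace ℝ (Fin n_z) | ∀ j ∈ I, dotProduct (G j) z ≤ dotProduct (S j) x + w j})
    (zstar : EuclideanSpace ℝ (Fin n_x) → Set (Fin n_c) → EuclideanSpace ℝ (Fin n_z))
    (hmem : ∀ x I, zstar x I ∈ Z x I)
    (hLICQ : ∀ x : EuclideanSpace ℝ (Fin n_x), LinearIndependent ℝ
      (fun j : {j : Fin n_c // dotProduct (G j) (zstar x Set.univ)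
        = dotProduct (S j) x + w j} => G j.1))
    (κ : ℝ)
    (Vl : Set (WithLp 2 (EuclideanSpace ℝ (Fin n_x) × EuclideanSpace ℝ (Fin n_z))))
    (hVl : Vl = {v | ∀ j, dotProduct (G j) ((WithLp.equiv 2 _) v).2
      ≤ dotProduct (S j) ((WithLp.equiv 2 _) v).1 + w j})
    (N : WithLp 2 (EuclideanSpace ℝ (Fin n_x) × EuclideanSpace ℝ (Fin n_z)) → ℝ → ℕ)
    (hN : ∀ v r, N v r = Set.ncard {j : Fin n_c | Metric.closedBall v r ⊆
      {u | dotProduct (G j) ((WithLp.equiv 2 _) u).2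
        - dotProduct (S j) ((WithLp.equiv 2 _) u).1 ≤ w j}})
    (Γ : ℕ → Set ℝ)
    (hΓ : ∀ i, Γ i = {r : ℝ | 0 ≤ r ∧ ∀ v ∈ Vl, n_c - i ≤ N v r})
    (x xh : EuclideanSpace ℝ (Fin n_x))
    (i : ℕ)
    (hdist : ENNReal.ofReal (Real.sqrt (1 + κ ^ 2) * ‖x - xh‖)
      ≤ sSup (ENNReal.ofReal '' Γ i)) :
    Set.ncard
      ({j | dotProduct (G j) (zstar xh Set.univ)
          = dotProduct (S j) xh + w j} ∪
        {j | Metric.closedBall (zstar xh Set.univ) (κ * ‖x - xh‖) ⊆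
          {z : EuclideanSpace ℝ (Fin n_z) |
            dotProduct (G j) z ≤ dotProduct (S j) x + w j}}ᶜ)
      ≤ n_z + i := by
  set zh := zstar xh Set.univ
  set v := WithLp.toLp 2 (xh, zh)
  have hzh : ∀ j, dotProduct (G j) zh ≤ dotProduct (S j) xh + w j := by
    simpa [hZ] using hmem xh Set.univ
  have hvVl : v ∈ Vl := by simpa [hVl, v] using hzh
  have hbad := ncard_setOf_not_closedBall_subset_le (v := v) (Γ := Γ i)
    (fun j => isClosed_setOf_dotProduct_snd_sub_dotProduct_fst_le (G j) (S j) (w j))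
    (fun j => by simpa [v, add_comm] using hzh j)
    (fun t ht => by
      rw [hΓ] at ht
      rw [Nat.card_fin, ← hN]
      exact ht.2 v hvVl) hdist
  have hD : {j | closedBall zh (κ * ‖x - xh‖) ⊆
      {z | dotProduct (G j) z ≤ dotProduct (S j) x + w j}}ᶜ ⊆
      {j | ¬ closedBall v (√(1 + κ ^ 2) * ‖x - xh‖) ⊆
        {u | dotProduct (G j) ((WithLp.equiv 2 _) u).2
          - dotProduct (S j) ((WithLp.equiv 2 _) u).1 ≤ w j}} := by
    refine fun j hj hball => hj fun z hz => ?_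
    have hlift : WithLp.toLp 2 (x, z) ∈ closedBall v (√(1 + κ ^ 2) * ‖x - xh‖) := by
      rw [mem_closedBall, ← dist_eq_norm x xh]
      exact WithLp.dist_toLp_prod_le (by rwa [dist_eq_norm x xh])
    have hlift_mem := hball hlift
    simp only [Set.mem_ofPred_eq, WithLp.equiv_apply] at hlift_mem ⊢
    linarith
  calc _ ≤ _ + _ := Set.ncard_union_le _ _
    _ ≤ n_z + i := add_le_add
      ((hLICQ xh).ncard_setOf_le_finrank.trans_eq (Module.finrank_fin_fun ℝ))
      ((Set.ncard_le_ncard hD).trans hbad)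

/-- Theorem 3: under LICQ, if `√(1+κ²)‖x − x̂‖ ≤ σ_i`, then the trimming
index set `I(x) = A(x̂) ∪ ({1,…,n_c} \\ D(x))` has at most `n_z + i` elements. -/
theorem trimmed_index_card_le
    (n_x n_z n_c : ℕ) (hnx : 0 < n_x) (hnz : 0 < n_z) (hnc : 0 < n_c)
    (H : Matrix (Fin n_z) (Fin n_z) ℝ) (hH : H.PosDef)
    (F : Matrix (Fin n_x) (Fin n_z) ℝ)
    (G : Matrix (Fin n_c) (Fin n_z) ℝ)
    (S : Matrix (Fin n_c) (Fin n_x) ℝ)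
    (w : Fin n_c → ℝ)
    (V : EuclideanSpace ℝ (Fin n_x) → EuclideanSpace ℝ (Fin n_z) → ℝ)
    (hV : ∀ x z, V x z = (1 / 2) * dotProduct z (H.mulVec z)
      + dotProduct x (F.mulVec z))
    (Z : EuclideanSpace ℝ (Fin n_x) → Set (Fin n_c) → Set (EuclideanSpace ℝ (Fin n_z)))
    (hZ : ∀ x I, Z x I =
      {z : EuclideanSpace ℝ (Fin n_z) | ∀ j ∈ I, dotProduct (G j) z ≤ dotProduct (S j) x + w j})
    (hfeas : ∀ x, (Z x Set.univ).Nonempty)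
    (zstar : EuclideanSpace ℝ (Fin n_x) → Set (Fin n_c) → EuclideanSpace ℝ (Fin n_z))
    (hmem : ∀ x I, zstar x I ∈ Z x I)
    (hopt : ∀ x I, ∀ z ∈ Z x I, V x (zstar x I) ≤ V x z)
    (huniq : ∀ x I, ∀ z ∈ Z x I, (∀ z' ∈ Z x I, V x z ≤ V x z') → z = zstar x I)
    (hLICQ : ∀ x : EuclideanSpace ℝ (Fin n_x), LinearIndependent ℝ
      (fun j : {j : Fin n_c // dotProduct (G j) (zstar x Set.univ)
        = dotProduct (S j) x + w j} => G j.1))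
    (κ : ℝ) (hκ0 : 0 ≤ κ)
    (hGLC : ∀ (x₁ x₂ : EuclideanSpace ℝ (Fin n_x)) (I : Set (Fin n_c)),
      ‖zstar x₁ I - zstar x₂ I‖ ≤ κ * ‖x₁ - x₂‖)
    (Vl : Set (WithLp 2 (EuclideanSpace ℝ (Fin n_x) × EuclideanSpace ℝ (Fin n_z))))
    (hVl : Vl = {v | ∀ j, dotProduct (G j) ((WithLp.equiv 2 _) v).2
      ≤ dotProduct (S j) ((WithLp.equiv 2 _) v).1 + w j})
    (N : WithLp 2 (EuclideanSpace ℝ (Fin n_x) × EuclideanSpace ℝ (Fin n_z)) → ℝ → ℕ)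
    (hN : ∀ v r, N v r = Set.ncard {j : Fin n_c | Metric.closedBall v r ⊆
      {u | dotProduct (G j) ((WithLp.equiv 2 _) u).2
        - dotProduct (S j) ((WithLp.equiv 2 _) u).1 ≤ w j}})
    (Γ : ℕ → Set ℝ)
    (hΓ : ∀ i, Γ i = {r : ℝ | 0 ≤ r ∧ ∀ v ∈ Vl, n_c - i ≤ N v r})
    (hVlne : Vl.Nonempty)
    (x xh : EuclideanSpace ℝ (Fin n_x))
    (i : ℕ) (hi : 1 ≤ i) (hin : i ≤ n_c)
    (hdist : ENNReal.ofReal (Real.sqrt (1 + κ ^ 2) * ‖x - xh‖)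
      ≤ sSup (ENNReal.ofReal '' Γ i)) :
    Set.ncard
      ({j | dotProduct (G j) (zstar xh Set.univ)
          = dotProduct (S j) xh + w j} ∪
        {j | Metric.closedBall (zstar xh Set.univ) (κ * ‖x - xh‖) ⊆
          {z : EuclideanSpace ℝ (Fin n_z) |
            dotProduct (G j) z ≤ dotProduct (S j) x + w j}}ᶜ)
      ≤ n_z + i :=
  trimmed_index_card_le_general n_x n_z n_c G S w Z hZ zstar hmem hLICQ κ Vl hVl N hN Γ hΓ x xh i
    hdist
end

section
/- Assume LICQ and let κ be a GLC. Let (x_k)_{k≥0} be a sequence in ℝ^{n_x} with x₀ ≠ 0 satisfying ‖x_k‖ ≤ c‖x₀‖β^k for all k ≥ 0, where c > 0 and β ∈ (0,1). For k ≥ 1 define D_k = {j : B(z*(x_{k−1}), κ‖x_k − x_{k−1}‖) ⊆ Z_j(x_k)} and I(x_k) = A(x_{k−1}) ∪ ({1,…,n_c} \ D_k). Fix i ∈ {1,…,n_c} with 0 < σ_i < ∞ and set K_i = ⌈log_β (σ_i / (c‖x₀‖(1 + β⁻¹)√(1+κ²)))⌉. Then for every k ≥ max(K_i, 1), the cardinality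 of I(x_k) is at most n_z + i. -/
/-!
At most `n_z` constraints are active at `z*(x_{k-1})`, by LICQ. For the others, lift to
`v = (x_{k-1}, z*(x_{k-1})) ∈ 𝒱`: a point `(x_k, z)` with `z` in the trimming ball
`B(z*(x_{k-1}), κ‖x_k - x_{k-1}‖)` is within `√(1 + κ²)‖x_k - x_{k-1}‖` of `v`, and the choice
of `K_i` together with the geometric decay of `x_k` makes this at most `σ_i`. The ball
`B(v, σ_i)` lies in at least `n_c - i` of the closed half-spaces `𝒱_j`, as a limit of balls with
radii in `Γ_i`; each such `j` lies in `D_k`, so at most `i` constraints are not trimmed away.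
-/

open Metric Filter Topology Set

theorem LinearIndependent.ncard_le_finrank {R M ι : Type*} [Ring R] [StrongRankCondition R]
    [AddCommGroup M] [Module R M] [Module.Finite R M] {v : ι → M} {s : Set ι}
    (h : LinearIndependent R fun j : s => v j) : s.ncard ≤ Module.finrank R M := by
  have := h.finite
  have := Fintype.ofFinite s
  rw [← Nat.card_coe_set_eq, Nat.card_eq_fintype_card]
  exact h.fintype_card_le_finrank

theorem IsClosed.eventually_closedBall_subset_imp {E : Type*} [SeminormedAddCommGroup E]
    [NormedSpace ℝ E] {C : Set E} (hC : IsClosed C) (v : E) {σ : ℝ} (hσ : σ ≠ 0) :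
    ∀ᶠ r in 𝓝[<] σ, closedBall v r ⊆ C → closedBall v σ ⊆ C := by
  by_cases h : closedBall v σ ⊆ C
  · exact Eventually.of_forall fun _ _ => h
  rw [← closure_ball v hσ, hC.closure_subset_iff, not_subset] at h
  obtain ⟨u, hu, huC⟩ := h
  filter_upwards [Ioo_mem_nhdsLT (mem_ball.1 hu)] with r hr hrC
  exact absurd (hrC (mem_closedBall.2 hr.1.le)) huC

theorem le_ncard_setOf_closedBall_subset {ι E : Type*} [Finite ι] [SeminormedAddCommGroup E]
    [NormedSpace ℝ E] {C : ι → Set E} (hC : ∀ j, IsClosed (C j)) (v : E) {σ : ℝ} (hσ : σ ≠ 0)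
    {m : ℕ} (h : ∀ r < σ, m ≤ {j | closedBall v r ⊆ C j}.ncard) :
    m ≤ {j | closedBall v σ ⊆ C j}.ncard := by
  obtain ⟨r, hrσ, hr⟩ := ((eventually_mem_nhdsWithin (s := Iio σ)).and
    (eventually_all.2 fun j => (hC j).eventually_closedBall_subset_imp v hσ)).exists
  exact (h r hrσ).trans (ncard_le_ncard hr)

theorem exists_lt_mem_of_ofReal_eq_sSup {s : Set ℝ} {σ r : ℝ} (hσ0 : 0 < σ)
    (hσ : ENNReal.ofReal σ = sSup (ENNReal.ofReal '' s)) (hr : r < σ) : ∃ t ∈ s, r < t := by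
  obtain ⟨_, ⟨t, ht, rfl⟩, hrt⟩ :=
    lt_sSup_iff.1 (hσ ▸ (ENNReal.ofReal_lt_ofReal_iff hσ0).2 hr)
  exact ⟨t, ht, (ENNReal.ofReal_lt_ofReal_iff'.1 hrt).1⟩

theorem pow_le_of_ceil_log_div_log_le {β a : ℝ} (hβ0 : 0 < β) (hβ1 : β < 1) (ha : 0 < a) {k : ℕ}
    (hk : ⌈Real.log a / Real.log β⌉ ≤ (k : ℤ)) : β ^ k ≤ a := by
  rw [Real.pow_le_iff_le_log hβ0 ha, ← div_le_iff_of_neg (Real.log_neg hβ0 hβ1)]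
  exact_mod_cast Int.ceil_le.1 hk

theorem norm_sub_le_of_norm_le_mul_pow {E : Type*} [SeminormedAddCommGroup E] {x : ℕ → E}
    {M β : ℝ} (hβ : β ≠ 0) (hx : ∀ k, ‖x k‖ ≤ M * β ^ k) (k : ℕ) :
    ‖x (k + 1) - x k‖ ≤ M * (1 + β⁻¹) * β ^ (k + 1) := by
  have hk : M * β ^ k = M * β⁻¹ * β ^ (k + 1) := by
    rw [pow_succ, mul_assoc, mul_comm _ β, inv_mul_cancel_left₀ hβ]
  calc ‖x (k + 1) - x k‖ ≤ ‖x (k + 1)‖ + ‖x k‖ := norm_sub_le _ _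
    _ ≤ M * β ^ (k + 1) + M * β ^ k := add_le_add (hx _) (hx _)
    _ = M * (1 + β⁻¹) * β ^ (k + 1) := by rw [hk]; ring

theorem WithLp.prod_dist_toLp_le {α β : Type*} [SeminormedAddCommGroup α]
    [SeminormedAddCommGroup β] {x x' : α} {z z' : β} {κ : ℝ} (h : dist z z' ≤ κ * dist x x') :
    dist (WithLp.toLp 2 (x, z)) (WithLp.toLp 2 (x', z')) ≤ √(1 + κ ^ 2) * dist x x' := by
  rw [WithLp.prod_dist_eq_of_L2, ← Real.sqrt_sq (dist_nonneg (x := x)),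
    ← Real.sqrt_mul (by positivity)]
  refine Real.sqrt_le_sqrt ?_
  have := pow_le_pow_left₀ dist_nonneg h 2
  simp only [WithLp.toLp_fst, WithLp.toLp_snd]
  nlinarith

theorem ncard_union_compl_le {α : Type*} [Finite α] {s t : Set α} {a b : ℕ} (hs : s.ncard ≤ a)
    (ht : Nat.card α - b ≤ t.ncard) : (s ∪ tᶜ).ncard ≤ a + b := by
  have := ncard_add_ncard_compl t
  have := ncard_union_le s tᶜ
  omega

section LiftedPolyhedron

variable {n_x n_z n_c : ℕ} (G : Matrix (Fin n_c) (Fin n_z) ℝ) (S : Matrix (Fin n_c) (Fin n_x) ℝ)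
  (w : Fin n_c → ℝ)

def liftedHalfSpace (j : Fin n_c) :
    Set (WithLp 2 (EuclideanSpace ℝ (Fin n_x) × EuclideanSpace ℝ (Fin n_z))) :=
  {u | G j ⬝ᵥ (WithLp.equiv 2 _ u).2 - S j ⬝ᵥ (WithLp.equiv 2 _ u).1 ≤ w j}

theorem isClosed_liftedHalfSpace (j : Fin n_c) : IsClosed (liftedHalfSpace G S w j) :=
  isClosed_le (by fun_prop) continuous_const

variable {G S w}

theorem closedBall_subset_of_closedBall_subset_liftedHalfSpace {j : Fin n_c}
    {x x' : EuclideanSpace ℝ (Fin n_x)} {z₀ : EuclideanSpace ℝ (Fin n_z)} {κ σ : ℝ}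
    (hj : closedBall (WithLp.toLp 2 (x', z₀)) σ ⊆ liftedHalfSpace G S w j)
    (hσ : √(1 + κ ^ 2) * ‖x - x'‖ ≤ σ) :
    closedBall z₀ (κ * ‖x - x'‖) ⊆ {z | G j ⬝ᵥ z ≤ S j ⬝ᵥ x + w j} := by
  intro z hz
  rw [mem_closedBall, ← dist_eq_norm] at hz
  rw [← dist_eq_norm] at hσ
  have hu := hj (mem_closedBall.2 ((WithLp.prod_dist_toLp_le hz).trans hσ))
  simp only [liftedHalfSpace, mem_ofPred_eq, WithLp.equiv_apply] at hu ⊢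
  linarith

end LiftedPolyhedron

theorem adaptive_trimming_card_le_general
    (n_x n_z n_c : ℕ)
    (G : Matrix (Fin n_c) (Fin n_z) ℝ)
    (S : Matrix (Fin n_c) (Fin n_x) ℝ)
    (w : Fin n_c → ℝ)
    (Z : EuclideanSpace ℝ (Fin n_x) → Set (Fin n_c) → Set (EuclideanSpace ℝ (Fin n_z)))
    (hZ : ∀ x I, Z x I =
      {z : EuclideanSpace ℝ (Fin n_z) | ∀ j ∈ I, dotProduct (G j) z ≤ dotProduct (S j) x + w j})
    (zstar : EuclideanSpace ℝ (Fin n_x) → Set (Fin n_c) → EuclideanSpace ℝ (Fin n_z))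
    (hmem : ∀ x I, zstar x I ∈ Z x I)
    (hLICQ : ∀ x : EuclideanSpace ℝ (Fin n_x), LinearIndependent ℝ
      (fun j : {j : Fin n_c // dotProduct (G j) (zstar x Set.univ)
        = dotProduct (S j) x + w j} => G j.1))
    (κ : ℝ)
    (Vl : Set (WithLp 2 (EuclideanSpace ℝ (Fin n_x) × EuclideanSpace ℝ (Fin n_z))))
    (hVl : Vl = {v | ∀ j, dotProduct (G j) ((WithLp.equiv 2 _) v).2
      ≤ dotProduct (S j) ((WithLp.equiv 2 _) v).1 + w j})
    (N : WithLp 2 (EuclideanSpace ℝ (Fin n_x) × EuclideanSpace ℝ (Fin n_z)) → ℝ → ℕ)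
    (hN : ∀ v r, N v r = Set.ncard {j : Fin n_c | Metric.closedBall v r ⊆
      {u | dotProduct (G j) ((WithLp.equiv 2 _) u).2
        - dotProduct (S j) ((WithLp.equiv 2 _) u).1 ≤ w j}})
    (Γ : ℕ → Set ℝ)
    (hΓ : ∀ i, Γ i = {r : ℝ | 0 ≤ r ∧ ∀ v ∈ Vl, n_c - i ≤ N v r})
    (x : ℕ → EuclideanSpace ℝ (Fin n_x)) (hx0 : x 0 ≠ 0)
    (c : ℝ) (hc : 0 < c) (β : ℝ) (hβ0 : 0 < β) (hβ1 : β < 1)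
    (hdecay : ∀ k : ℕ, ‖x k‖ ≤ c * ‖x 0‖ * β ^ k)
    (i : ℕ)
    (σ : ℝ) (hσpos : 0 < σ)
    (hσ : ENNReal.ofReal σ = sSup (ENNReal.ofReal '' Γ i))
    (Ki : ℤ)
    (hKi : Ki = ⌈Real.log (σ / (c * ‖x 0‖ * (1 + β⁻¹) * Real.sqrt (1 + κ ^ 2)))
      / Real.log β⌉) :
    ∀ k : ℕ, Ki ≤ (k : ℤ) → 1 ≤ k →
      Set.ncard
        ({j | dotProduct (G j) (zstar (x (k - 1)) Set.univ)
            = dotProduct (S j) (x (k - 1)) + w j} ∪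
          {j | Metric.closedBall (zstar (x (k - 1)) Set.univ) (κ * ‖x k - x (k - 1)‖) ⊆
            {z : EuclideanSpace ℝ (Fin n_z) |
              dotProduct (G j) z ≤ dotProduct (S j) (x k) + w j}}ᶜ)
        ≤ n_z + i := by
  intro k hKk hk
  obtain ⟨k, rfl⟩ := Nat.exists_eq_add_of_le' hk
  rw [Nat.add_sub_cancel]
  set v := WithLp.toLp 2 (x k, zstar (x k) univ)
  have hv : v ∈ Vl := by
    rw [hVl]
    exact fun j => (hZ _ _ ▸ hmem (x k) univ) j (mem_univ j)
  have hΓv : ∀ r < σ, n_c - i ≤ {j | closedBall v r ⊆ liftedHalfSpace G S w j}.ncard := by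
    intro r hr
    obtain ⟨t, ht, hrt⟩ := exists_lt_mem_of_ofReal_eq_sSup hσpos hσ hr
    rw [hΓ] at ht
    exact (hN v t ▸ ht.2 v hv).trans
      (ncard_le_ncard fun j hj => (closedBall_subset_closedBall hrt.le).trans hj)
  have hC : 0 < c * ‖x 0‖ * (1 + β⁻¹) * √(1 + κ ^ 2) := by
    have := norm_pos_iff.2 hx0
    positivity
  have hrad : √(1 + κ ^ 2) * ‖x (k + 1) - x k‖ ≤ σ :=
    calc √(1 + κ ^ 2) * ‖x (k + 1) - x k‖
        ≤ √(1 + κ ^ 2) * (c * ‖x 0‖ * (1 + β⁻¹) * β ^ (k + 1)) := by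
          gcongr; exact norm_sub_le_of_norm_le_mul_pow hβ0.ne' hdecay k
      _ = c * ‖x 0‖ * (1 + β⁻¹) * √(1 + κ ^ 2) * β ^ (k + 1) := by ring
      _ ≤ σ := (le_div_iff₀' hC).1 <|
          pow_le_of_ceil_log_div_log_le hβ0 hβ1 (div_pos hσpos hC) (hKi ▸ hKk)
  have hkept := le_ncard_setOf_closedBall_subset (isClosed_liftedHalfSpace G S w) v
    hσpos.ne' hΓv
  refine ncard_union_compl_le ((hLICQ (x k)).ncard_le_finrank.trans_eq (Module.finrank_fin_fun ℝ))
    ?_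
  rw [Nat.card_fin]
  exact hkept.trans (ncard_le_ncard fun j hj =>
    closedBall_subset_of_closedBall_subset_liftedHalfSpace hj hrad)

/-- Theorem 4(a): along an exponentially decaying state sequence, for all
`k ≥ max(K_i, 1)` the adaptive trimming index set `I(x_k)` has at most `n_z + i`
elements. -/
theorem adaptive_trimming_card_le
    (n_x n_z n_c : ℕ) (hnx : 0 < n_x) (hnz : 0 < n_z) (hnc : 0 < n_c)
    (H : Matrix (Fin n_z) (Fin n_z) ℝ) (hH : H.PosDef)
    (F : Matrix (Fin n_x) (Fin n_z) ℝ)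
    (G : Matrix (Fin n_c) (Fin n_z) ℝ)
    (S : Matrix (Fin n_c) (Fin n_x) ℝ)
    (w : Fin n_c → ℝ)
    (V : EuclideanSpace ℝ (Fin n_x) → EuclideanSpace ℝ (Fin n_z) → ℝ)
    (hV : ∀ x z, V x z = (1 / 2) * dotProduct z (H.mulVec z)
      + dotProduct x (F.mulVec z))
    (Z : EuclideanSpace ℝ (Fin n_x) → Set (Fin n_c) → Set (EuclideanSpace ℝ (Fin n_z)))
    (hZ : ∀ x I, Z x I =
      {z : EuclideanSpace ℝ (Fin n_z) | ∀ j ∈ I, dotProduct (G j) z ≤ dotProduct (S j) x + w j})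
    (hfeas : ∀ x, (Z x Set.univ).Nonempty)
    (zstar : EuclideanSpace ℝ (Fin n_x) → Set (Fin n_c) → EuclideanSpace ℝ (Fin n_z))
    (hmem : ∀ x I, zstar x I ∈ Z x I)
    (hopt : ∀ x I, ∀ z ∈ Z x I, V x (zstar x I) ≤ V x z)
    (huniq : ∀ x I, ∀ z ∈ Z x I, (∀ z' ∈ Z x I, V x z ≤ V x z') → z = zstar x I)
    (hLICQ : ∀ x : EuclideanSpace ℝ (Fin n_x), LinearIndependent ℝ
      (fun j : {j : Fin n_c // dotProduct (G j) (zstar x Set.univ)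
        = dotProduct (S j) x + w j} => G j.1))
    (κ : ℝ) (hκ0 : 0 ≤ κ)
    (hGLC : ∀ (x₁ x₂ : EuclideanSpace ℝ (Fin n_x)) (I : Set (Fin n_c)),
      ‖zstar x₁ I - zstar x₂ I‖ ≤ κ * ‖x₁ - x₂‖)
    (Vl : Set (WithLp 2 (EuclideanSpace ℝ (Fin n_x) × EuclideanSpace ℝ (Fin n_z))))
    (hVl : Vl = {v | ∀ j, dotProduct (G j) ((WithLp.equiv 2 _) v).2
      ≤ dotProduct (S j) ((WithLp.equiv 2 _) v).1 + w j})
    (N : WithLp 2 (EuclideanSpace ℝ (Fin n_x) × EuclideanSpace ℝ (Fin n_z)) → ℝ → ℕ)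
    (hN : ∀ v r, N v r = Set.ncard {j : Fin n_c | Metric.closedBall v r ⊆
      {u | dotProduct (G j) ((WithLp.equiv 2 _) u).2
        - dotProduct (S j) ((WithLp.equiv 2 _) u).1 ≤ w j}})
    (Γ : ℕ → Set ℝ)
    (hΓ : ∀ i, Γ i = {r : ℝ | 0 ≤ r ∧ ∀ v ∈ Vl, n_c - i ≤ N v r})
    (hVlne : Vl.Nonempty)
    (x : ℕ → EuclideanSpace ℝ (Fin n_x)) (hx0 : x 0 ≠ 0)
    (c : ℝ) (hc : 0 < c) (β : ℝ) (hβ0 : 0 < β) (hβ1 : β < 1)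
    (hdecay : ∀ k : ℕ, ‖x k‖ ≤ c * ‖x 0‖ * β ^ k)
    (i : ℕ) (hi : 1 ≤ i) (hin : i ≤ n_c)
    (σ : ℝ) (hσpos : 0 < σ)
    (hσ : ENNReal.ofReal σ = sSup (ENNReal.ofReal '' Γ i))
    (Ki : ℤ)
    (hKi : Ki = ⌈Real.log (σ / (c * ‖x 0‖ * (1 + β⁻¹) * Real.sqrt (1 + κ ^ 2)))
      / Real.log β⌉) :
    ∀ k : ℕ, Ki ≤ (k : ℤ) → 1 ≤ k →
      Set.ncard
        ({j | dotProduct (G j) (zstar (x (k - 1)) Set.univ)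
            = dotProduct (S j) (x (k - 1)) + w j} ∪
          {j | Metric.closedBall (zstar (x (k - 1)) Set.univ) (κ * ‖x k - x (k - 1)‖) ⊆
            {z : EuclideanSpace ℝ (Fin n_z) |
              dotProduct (G j) z ≤ dotProduct (S j) (x k) + w j}}ᶜ)
        ≤ n_z + i :=
  adaptive_trimming_card_le_general n_x n_z n_c G S w Z hZ zstar hmem hLICQ κ Vl hVl N hN Γ hΓ x hx0
    c hc β hβ0 hβ1 hdecay i σ hσpos hσ Ki hKi
end

section
/- Assume w_j > 0 and κ‖G_j‖ + ‖S_j‖ > 0 for every j ∈ {1,…,n_c}, and let κ be a GLC. Let (x_k)_{k≥0} be a sequence in ℝ^{n_x} with x₀ ≠ 0 satisfying ‖x_k‖ ≤ c‖x₀‖β^k for all k ≥ 0, where c > 0 and β ∈ (0,1). For k ≥ 1 define D_k = {j : B(z*(x_{k−1}), κ‖x_k − x_{k−1}‖) ⊆ Z_j(x_k)} and I(x_k) = A(x_{k−1}) ∪ ({1,…,n_c} \ D_k). Set K̂ = max(K̂₁, K̂₂) where K̂₁ = max_j ⌈log_β (w_j / (c‖x₀‖β⁻¹(κ‖G_j‖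 + ‖S_j‖)))⌉ and K̂₂ = max_j ⌈log_β (w_j / ρ_j)⌉ with ρ_j = c‖x₀‖(κ‖G_j‖(1 + β⁻¹) + ‖S_j‖ + ‖G_j H⁻¹Fᵀ‖ β⁻¹). Then for every k ≥ max(K̂, 1), the trimmed index set is empty: I(x_k) = ∅ (i.e., A(x_{k−1}) = ∅ and D_k = {1,…,n_c}). -/
/-!
Put `X = c‖x₀‖β^(k-1)`, so `‖x_{k-1}‖ ≤ X` and `‖x_k‖ ≤ βX`. The choice of `K̂₂` gives
`ρ_j β^k = X (κ‖G_j‖(1 + β) + ‖S_j‖β + ‖G_j H⁻¹Fᵀ‖) ≤ w_j`, and this one inequality controls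
everything at the unconstrained minimiser `u(x) = -H⁻¹Fᵀx`: by Cauchy–Schwarz the ball of
radius `κ‖x_k - x_{k-1}‖` around `u(x_{k-1})` lies in `Z_j(x_k)`, and `u(x_{k-1})` satisfies every
constraint strictly. Hence `z*(x_{k-1}) = u(x_{k-1})`, `A(x_{k-1}) = ∅` and `D_k` is everything.

Strictness needs `‖S_j‖ ≤ κ‖G_j‖`, which the GLC forces. Where constraint `j` binds, the solution
`z*(x, {j})` lies on the hyperplane `G_j z = S_j x + w_j`, so moving `x` by `d` inside that
half-space moves `G_j z*(x, {j})` by exactly `S_j d`; taking `d = S_jᵀ` gives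
`‖S_j‖² ≤ ‖G_j‖ κ ‖S_j‖`. The degenerate cases are handled by `I = ∅`, which bounds
`‖G_j H⁻¹Fᵀ‖ ≤ κ‖G_j‖`, and by feasibility, which forces `S_j = 0` when `G_j = 0`.
-/

open Matrix
open scoped RealInnerProductSpace

section Euclidean

variable {ι ι' : Type*} [Fintype ι] [Fintype ι']

lemma dotProduct_eq_inner (v : ι → ℝ) (z : EuclideanSpace ℝ ι) :
    v ⬝ᵥ z = ⟪WithLp.toLp 2 v, z⟫ := by
  rw [EuclideanSpace.inner_eq_star_dotProduct, dotProduct_comm]; rfl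

lemma sqrt_dotProduct_self (v : ι → ℝ) : √(v ⬝ᵥ v) = ‖WithLp.toLp 2 v‖ := by
  rw [← WithLp.ofLp_toLp 2 v, dotProduct_eq_inner, real_inner_self_eq_norm_mul_norm,
    Real.sqrt_mul_self (norm_nonneg _)]

lemma dotProduct_le_norm_mul_norm (v : ι → ℝ) (z : EuclideanSpace ℝ ι) :
    v ⬝ᵥ z ≤ ‖WithLp.toLp 2 v‖ * ‖z‖ := by
  rw [dotProduct_eq_inner]; exact real_inner_le_norm _ _

lemma neg_norm_mul_norm_le_dotProduct (v : ι → ℝ) (z : EuclideanSpace ℝ ι) :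
    -(‖WithLp.toLp 2 v‖ * ‖z‖) ≤ v ⬝ᵥ z := by
  rw [dotProduct_eq_inner, neg_le]
  exact (neg_le_abs _).trans (abs_real_inner_le_norm _ _)

lemma eq_zero_of_forall_le_dotProduct {v : ι → ℝ} {a : ℝ}
    (h : ∀ x : EuclideanSpace ℝ ι, a ≤ v ⬝ᵥ x) : v = 0 := by
  by_contra hv
  have hpos : 0 < v ⬝ᵥ v := dotProduct_self_star_pos_iff.mpr hv
  have := h (WithLp.toLp 2 ((-(|a| + 1) / (v ⬝ᵥ v)) • v))
  rw [WithLp.ofLp_toLp, dotProduct_smul, smul_eq_mul, div_mul_cancel₀ _ hpos.ne'] at this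
  linarith [neg_abs_le a]

lemma norm_vecMul_le_of_norm_mulVec_le {M : Matrix ι ι' ℝ} {κ : ℝ} (hκ : 0 ≤ κ)
    (h : ∀ v : EuclideanSpace ℝ ι', ‖WithLp.toLp 2 (M *ᵥ v)‖ ≤ κ * ‖v‖) (g : ι → ℝ) :
    ‖WithLp.toLp 2 (g ᵥ* M)‖ ≤ κ * ‖WithLp.toLp 2 g‖ := by
  set y : EuclideanSpace ℝ ι' := WithLp.toLp 2 (g ᵥ* M)
  have key : ‖y‖ * ‖y‖ ≤ κ * ‖WithLp.toLp 2 g‖ * ‖y‖ := calc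
    ‖y‖ * ‖y‖ = (g ᵥ* M) ⬝ᵥ y := by rw [dotProduct_eq_inner, real_inner_self_eq_norm_mul_norm]
    _ = g ⬝ᵥ M *ᵥ y := (dotProduct_mulVec _ _ _).symm
    _ ≤ ‖WithLp.toLp 2 g‖ * ‖WithLp.toLp 2 (M *ᵥ y)‖ :=
      dotProduct_le_norm_mul_norm g (WithLp.toLp 2 (M *ᵥ y))
    _ ≤ ‖WithLp.toLp 2 g‖ * (κ * ‖y‖) := by gcongr; exact h y
    _ = κ * ‖WithLp.toLp 2 g‖ * ‖y‖ := by ring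
  nlinarith [norm_nonneg y, mul_nonneg hκ (norm_nonneg (WithLp.toLp 2 g))]

lemma closedBall_subset_halfspace (g : ι → ℝ) {z₀ : EuclideanSpace ℝ ι} {R b : ℝ}
    (h : g ⬝ᵥ z₀ + ‖WithLp.toLp 2 g‖ * R ≤ b) :
    Metric.closedBall z₀ R ⊆ {z : EuclideanSpace ℝ ι | g ⬝ᵥ z ≤ b} := by
  intro z hz
  have hgz := dotProduct_le_norm_mul_norm g (z - z₀)
  have hR : ‖WithLp.toLp 2 g‖ * ‖z - z₀‖ ≤ ‖WithLp.toLp 2 g‖ * R :=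
    mul_le_mul_of_nonneg_left (mem_closedBall_iff_norm.mp hz) (norm_nonneg _)
  rw [WithLp.ofLp_sub, dotProduct_sub] at hgz
  show g ⬝ᵥ z ≤ b
  linarith

end Euclidean

section QP

variable {m n p : Type*} [Fintype m] [Fintype n]

/- `quadCost H F x` is `V_x`, `constraintSet G S w x I` is `Z(x, I)`, and `IsQPSelection` says that
`zstar x I` is the minimiser `z*(x, I)`. -/
noncomputable def quadCost (H : Matrix n n ℝ) (F : Matrix m n ℝ)
    (x : EuclideanSpace ℝ m) (z : EuclideanSpace ℝ n) : ℝ :=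
  1 / 2 * z ⬝ᵥ H *ᵥ z + x ⬝ᵥ F *ᵥ z

def constraintSet (G : Matrix p n ℝ) (S : Matrix p m ℝ) (w : p → ℝ)
    (x : EuclideanSpace ℝ m) (I : Set p) : Set (EuclideanSpace ℝ n) :=
  {z | ∀ j ∈ I, G j ⬝ᵥ z ≤ S j ⬝ᵥ x + w j}

variable {H : Matrix n n ℝ} {F : Matrix m n ℝ}

lemma quadCost_add (hH : H.IsHermitian) (x : EuclideanSpace ℝ m)
    (z d : EuclideanSpace ℝ n) :
    quadCost H F x (z + d) =
      quadCost H F x z + (H *ᵥ z + Fᵀ *ᵥ x) ⬝ᵥ d + 1 / 2 * d ⬝ᵥ H *ᵥ d := by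
  have hsymm : d ⬝ᵥ H *ᵥ z = z ⬝ᵥ H *ᵥ d := by
    rw [dotProduct_mulVec, ← mulVec_transpose, ← conjTranspose_eq_transpose_of_trivial, hH.eq,
      dotProduct_comm]
  have hF : (Fᵀ *ᵥ x) ⬝ᵥ d = x ⬝ᵥ F *ᵥ d := by rw [mulVec_transpose, dotProduct_mulVec]
  simp only [quadCost, WithLp.ofLp_add, mulVec_add, dotProduct_add, add_dotProduct, hF, hsymm,
    dotProduct_comm (H *ᵥ z) d]
  ring

lemma quadCost_le_of_dotProduct_nonneg (hH : H.PosSemidef) {x : EuclideanSpace ℝ m}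
    {z₀ z : EuclideanSpace ℝ n} (h : 0 ≤ (H *ᵥ z₀ + Fᵀ *ᵥ x) ⬝ᵥ (z - z₀)) :
    quadCost H F x z₀ ≤ quadCost H F x z := by
  have hd := hH.dotProduct_mulVec_nonneg (z - z₀ : EuclideanSpace ℝ n)
  rw [star_trivial] at hd
  rw [← add_sub_cancel z₀ z, quadCost_add hH.isHermitian]
  simp only [WithLp.ofLp_sub] at hd ⊢
  linarith

variable [DecidableEq n]

noncomputable def unconstrainedMin (H : Matrix n n ℝ) (F : Matrix m n ℝ)
    (x : EuclideanSpace ℝ m) : EuclideanSpace ℝ n :=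
  WithLp.toLp 2 (-((H⁻¹ * Fᵀ) *ᵥ x))

lemma mulVec_unconstrainedMin_add (hH : IsUnit H) (x : EuclideanSpace ℝ m) :
    H *ᵥ unconstrainedMin H F x + Fᵀ *ᵥ x = 0 := by
  rw [unconstrainedMin, WithLp.ofLp_toLp, mulVec_neg, mulVec_mulVec, ← Matrix.mul_assoc,
    mul_nonsing_inv H ((isUnit_iff_isUnit_det H).mp hH), Matrix.one_mul, neg_add_cancel]

lemma isMinOn_unconstrainedMin (hH : H.PosDef) (x : EuclideanSpace ℝ m)
    (s : Set (EuclideanSpace ℝ n)) :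
    IsMinOn (quadCost H F x) s (unconstrainedMin H F x) := fun z _ ↦
  quadCost_le_of_dotProduct_nonneg hH.posSemidef <| by
    rw [mulVec_unconstrainedMin_add hH.isUnit, zero_dotProduct]

lemma dotProduct_unconstrainedMin (v : n → ℝ) (x : EuclideanSpace ℝ m) :
    v ⬝ᵥ unconstrainedMin H F x = -((v ᵥ* (H⁻¹ * Fᵀ)) ⬝ᵥ x) := by
  rw [unconstrainedMin, WithLp.ofLp_toLp, dotProduct_neg, dotProduct_mulVec]

lemma norm_unconstrainedMin (x : EuclideanSpace ℝ m) :
    ‖unconstrainedMin H F x‖ = ‖WithLp.toLp 2 ((H⁻¹ * Fᵀ) *ᵥ x)‖ := by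
  rw [unconstrainedMin, WithLp.toLp_neg, norm_neg]

variable {G : Matrix p n ℝ} {S : Matrix p m ℝ} {w : p → ℝ}

def IsQPSelection (H : Matrix n n ℝ) (F : Matrix m n ℝ)
    (G : Matrix p n ℝ) (S : Matrix p m ℝ) (w : p → ℝ)
    (zstar : EuclideanSpace ℝ m → Set p → EuclideanSpace ℝ n) : Prop :=
  ∀ x I, ∀ z ∈ constraintSet G S w x I,
    IsMinOn (quadCost H F x) (constraintSet G S w x I) z → z = zstar x I

variable {zstar : EuclideanSpace ℝ m → Set p → EuclideanSpace ℝ n}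

lemma IsQPSelection.eq_unconstrainedMin (hsel : IsQPSelection H F G S w zstar) (hH : H.PosDef)
    {x : EuclideanSpace ℝ m} {I : Set p}
    (hx : unconstrainedMin H F x ∈ constraintSet G S w x I) :
    zstar x I = unconstrainedMin H F x :=
  (hsel x I _ hx (isMinOn_unconstrainedMin hH x _)).symm

lemma IsQPSelection.dotProduct_zstar_singleton_eq (hsel : IsQPSelection H F G S w zstar)
    (hH : H.PosDef) {j : p} (hG : G j ≠ 0) {x : EuclideanSpace ℝ m}
    (hx : (G j ᵥ* (H⁻¹ * Fᵀ) + S j) ⬝ᵥ x ≤ -w j) :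
    G j ⬝ᵥ zstar x {j} = S j ⬝ᵥ x + w j := by
  set a := H⁻¹ *ᵥ G j
  have hq : 0 < G j ⬝ᵥ a := by simpa using hH.inv.dotProduct_mulVec_pos hG
  set lam := -(w j + (G j ᵥ* (H⁻¹ * Fᵀ) + S j) ⬝ᵥ x) / (G j ⬝ᵥ a)
  have hlam : 0 ≤ lam := div_nonneg (by linarith) hq.le
  -- the KKT point of the single-constraint problem, with multiplier `lam`
  set z₀ := unconstrainedMin H F x - lam • WithLp.toLp 2 a
  have htight : G j ⬝ᵥ z₀ = S j ⬝ᵥ x + w j := by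
    simp only [z₀, lam, WithLp.ofLp_sub, WithLp.ofLp_smul, dotProduct_sub,
      dotProduct_smul, smul_eq_mul, dotProduct_unconstrainedMin, add_dotProduct,
      div_mul_cancel₀ _ hq.ne']
    ring
  have hgrad : H *ᵥ z₀ + Fᵀ *ᵥ x = -(lam • G j) := by
    rw [WithLp.ofLp_sub, mulVec_sub, sub_add_eq_add_sub,
      mulVec_unconstrainedMin_add hH.isUnit, WithLp.ofLp_smul, mulVec_smul, WithLp.ofLp_toLp,
      mulVec_mulVec, mul_nonsing_inv H ((isUnit_iff_isUnit_det H).mp hH.isUnit), one_mulVec,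
      zero_sub]
  have hmem : z₀ ∈ constraintSet G S w x {j} := by
    simp [constraintSet, htight]
  have hmin : IsMinOn (quadCost H F x) (constraintSet G S w x {j}) z₀ := by
    intro z hz
    have hzj : G j ⬝ᵥ z ≤ S j ⬝ᵥ x + w j := hz j rfl
    refine quadCost_le_of_dotProduct_nonneg hH.posSemidef ?_
    rw [hgrad, neg_dotProduct, smul_dotProduct, dotProduct_sub, htight,
      smul_eq_mul]
    nlinarith
  rw [← hsel x {j} z₀ hmem hmin, htight]

variable {κ : ℝ}

lemma IsQPSelection.norm_mulVec_le (hsel : IsQPSelection H F G S w zstar) (hH : H.PosDef)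
    (hGLC : ∀ x₁ x₂ I, ‖zstar x₁ I - zstar x₂ I‖ ≤ κ * ‖x₁ - x₂‖)
    (v : EuclideanSpace ℝ m) : ‖WithLp.toLp 2 ((H⁻¹ * Fᵀ) *ᵥ v)‖ ≤ κ * ‖v‖ := by
  have hfree : ∀ x, zstar x ∅ = unconstrainedMin H F x := fun x ↦
    hsel.eq_unconstrainedMin hH (by simp [constraintSet])
  have h0 : unconstrainedMin H F 0 = 0 := by simp [unconstrainedMin]
  have h := hGLC v 0 ∅
  rwa [hfree, hfree, h0, sub_zero, sub_zero, norm_unconstrainedMin] at h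

lemma IsQPSelection.norm_S_row_le (hsel : IsQPSelection H F G S w zstar) (hH : H.PosDef)
    (hκ : 0 ≤ κ) (hGLC : ∀ x₁ x₂ I, ‖zstar x₁ I - zstar x₂ I‖ ≤ κ * ‖x₁ - x₂‖) {j : p}
    (hfeas : ∀ x, (constraintSet G S w x {j}).Nonempty) :
    ‖WithLp.toLp 2 (S j)‖ ≤ κ * ‖WithLp.toLp 2 (G j)‖ := by
  by_cases hG : G j = 0
  · have hS : S j = 0 := eq_zero_of_forall_le_dotProduct (a := -w j) fun x ↦ by
      obtain ⟨z, hz⟩ := hfeas x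
      have := hz j rfl
      rw [hG, zero_dotProduct] at this
      linarith
    simp only [hS, WithLp.toLp_zero, norm_zero]
    positivity
  set r := G j ᵥ* (H⁻¹ * Fᵀ) + S j
  by_cases hr : r = 0
  · rw [eq_neg_of_add_eq_zero_right hr, WithLp.toLp_neg, norm_neg]
    exact norm_vecMul_le_of_norm_mulVec_le hκ (hsel.norm_mulVec_le hH hGLC) _
  -- constraint `j` binds at both `x₁` and `x₂ = x₁ + S_jᵀ`
  set x₁ : EuclideanSpace ℝ m := WithLp.toLp 2 ((-(w j + |r ⬝ᵥ S j|) / (r ⬝ᵥ r)) • r)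
  set x₂ := x₁ + WithLp.toLp 2 (S j)
  have hrr : 0 < r ⬝ᵥ r := by simpa using dotProduct_self_star_pos_iff.mpr hr
  have hrx₁ : r ⬝ᵥ x₁ = -(w j + |r ⬝ᵥ S j|) := by
    rw [WithLp.ofLp_toLp, dotProduct_smul, smul_eq_mul, div_mul_cancel₀ _ hrr.ne']
  have h₁ := hsel.dotProduct_zstar_singleton_eq hH hG (x := x₁) (by
    linarith [abs_nonneg (r ⬝ᵥ S j)])
  have h₂ := hsel.dotProduct_zstar_singleton_eq hH hG (x := x₂) (by
    rw [WithLp.ofLp_add, dotProduct_add, hrx₁, WithLp.ofLp_toLp]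
    linarith [le_abs_self (r ⬝ᵥ S j)])
  set s : EuclideanSpace ℝ m := WithLp.toLp 2 (S j)
  have key : ‖s‖ * ‖s‖ ≤ κ * ‖WithLp.toLp 2 (G j)‖ * ‖s‖ := calc
    ‖s‖ * ‖s‖ = S j ⬝ᵥ s := by rw [dotProduct_eq_inner, real_inner_self_eq_norm_mul_norm]
    _ = G j ⬝ᵥ (zstar x₂ {j} - zstar x₁ {j}) := by
      rw [dotProduct_sub, h₁, h₂, show x₂.ofLp = x₁.ofLp + S j from rfl, dotProduct_add]; ring
    _ ≤ ‖WithLp.toLp 2 (G j)‖ * ‖zstar x₂ {j} - zstar x₁ {j}‖ := dotProduct_le_norm_mul_norm _ _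
    _ ≤ ‖WithLp.toLp 2 (G j)‖ * (κ * ‖x₂ - x₁‖) := by gcongr; exact hGLC _ _ _
    _ = κ * ‖WithLp.toLp 2 (G j)‖ * ‖s‖ := by rw [add_sub_cancel_left]; ring
  nlinarith [norm_nonneg s, mul_nonneg hκ (norm_nonneg (WithLp.toLp 2 (G j)))]

section Decay

variable {j : p} {β X : ℝ} {x x' : EuclideanSpace ℝ m}

lemma dotProduct_unconstrainedMin_lt_of_norm_le (hβ : 0 < β) (hX : 0 < X) (hx : ‖x‖ ≤ X)
    (hS : ‖WithLp.toLp 2 (S j)‖ ≤ κ * ‖WithLp.toLp 2 (G j)‖)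
    (hpos : 0 < κ * ‖WithLp.toLp 2 (G j)‖ + ‖WithLp.toLp 2 (S j)‖)
    (hw : X * (κ * ‖WithLp.toLp 2 (G j)‖ * (1 + β) + ‖WithLp.toLp 2 (S j)‖ * β
      + ‖WithLp.toLp 2 (G j ᵥ* (H⁻¹ * Fᵀ))‖) ≤ w j) :
    G j ⬝ᵥ unconstrainedMin H F x < S j ⬝ᵥ x + w j := by
  set a := ‖WithLp.toLp 2 (G j ᵥ* (H⁻¹ * Fᵀ))‖
  set b := ‖WithLp.toLp 2 (S j)‖
  have hslack : a + b < κ * ‖WithLp.toLp 2 (G j)‖ * (1 + β) + b * β + a := by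
    nlinarith
  have hxa := neg_norm_mul_norm_le_dotProduct (G j ᵥ* (H⁻¹ * Fᵀ)) x
  have hxb := neg_norm_mul_norm_le_dotProduct (S j) x
  have hX' : (a + b) * ‖x‖ ≤ (a + b) * X := by gcongr
  rw [dotProduct_unconstrainedMin]
  nlinarith

lemma closedBall_unconstrainedMin_subset_of_norm_le (hκ : 0 ≤ κ) (hx : ‖x‖ ≤ X) (hx' : ‖x'‖ ≤ β * X)
    (hw : X * (κ * ‖WithLp.toLp 2 (G j)‖ * (1 + β) + ‖WithLp.toLp 2 (S j)‖ * β
      + ‖WithLp.toLp 2 (G j ᵥ* (H⁻¹ * Fᵀ))‖) ≤ w j) :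
    Metric.closedBall (unconstrainedMin H F x) (κ * ‖x' - x‖) ⊆
      {z : EuclideanSpace ℝ n | G j ⬝ᵥ z ≤ S j ⬝ᵥ x' + w j} := by
  refine closedBall_subset_halfspace _ ?_
  have hxa := neg_norm_mul_norm_le_dotProduct (G j ᵥ* (H⁻¹ * Fᵀ)) x
  have hxb := neg_norm_mul_norm_le_dotProduct (S j) x'
  have hd : ‖x' - x‖ ≤ β * X + X := (norm_sub_le _ _).trans (add_le_add hx' hx)
  have h1 : ‖WithLp.toLp 2 (G j ᵥ* (H⁻¹ * Fᵀ))‖ * ‖x‖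
      ≤ ‖WithLp.toLp 2 (G j ᵥ* (H⁻¹ * Fᵀ))‖ * X := by gcongr
  have h2 : ‖WithLp.toLp 2 (G j)‖ * (κ * ‖x' - x‖)
      ≤ ‖WithLp.toLp 2 (G j)‖ * (κ * (β * X + X)) := by gcongr
  have h3 : ‖WithLp.toLp 2 (S j)‖ * ‖x'‖ ≤ ‖WithLp.toLp 2 (S j)‖ * (β * X) := by gcongr
  rw [dotProduct_unconstrainedMin]
  nlinarith

end Decay

end QP

lemma mul_pow_le_of_ceil_log_div_log_le {β ρ t : ℝ} {k : ℕ} (hβ0 : 0 < β) (hβ1 : β < 1)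
    (ht : 0 < t) (hk : ⌈Real.log (t / ρ) / Real.log β⌉ ≤ (k : ℤ)) :
    ρ * β ^ k ≤ t := by
  rcases le_or_gt ρ 0 with hρ | hρ
  · nlinarith [pow_pos hβ0 k]
  have hk' : Real.log (t / ρ) / Real.log β ≤ k := by exact_mod_cast Int.ceil_le.mp hk
  rw [div_le_iff_of_neg (Real.log_neg hβ0 hβ1), ← Real.log_pow,
    Real.log_le_log_iff (pow_pos hβ0 k) (div_pos ht hρ)] at hk'
  exact (le_div_iff₀' hρ).mp hk'

theorem trimmed_index_eventually_empty_general
    (n_x n_z n_c : ℕ) (hnc : 0 < n_c)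
    (H : Matrix (Fin n_z) (Fin n_z) ℝ) (hH : H.PosDef)
    (F : Matrix (Fin n_x) (Fin n_z) ℝ)
    (G : Matrix (Fin n_c) (Fin n_z) ℝ)
    (S : Matrix (Fin n_c) (Fin n_x) ℝ)
    (w : Fin n_c → ℝ)
    (V : EuclideanSpace ℝ (Fin n_x) → EuclideanSpace ℝ (Fin n_z) → ℝ)
    (hV : ∀ x z, V x z = (1 / 2) * dotProduct z (H.mulVec z)
      + dotProduct x (F.mulVec z))
    (Z : EuclideanSpace ℝ (Fin n_x) → Set (Fin n_c) → Set (EuclideanSpace ℝ (Fin n_z)))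
    (hZ : ∀ x I, Z x I =
      {z : EuclideanSpace ℝ (Fin n_z) | ∀ j ∈ I, dotProduct (G j) z ≤ dotProduct (S j) x + w j})
    (hfeas : ∀ x, (Z x Set.univ).Nonempty)
    (zstar : EuclideanSpace ℝ (Fin n_x) → Set (Fin n_c) → EuclideanSpace ℝ (Fin n_z))
    (huniq : ∀ x I, ∀ z ∈ Z x I, (∀ z' ∈ Z x I, V x z ≤ V x z') → z = zstar x I)
    (κ : ℝ) (hκ0 : 0 ≤ κ)
    (hGLC : ∀ (x₁ x₂ : EuclideanSpace ℝ (Fin n_x)) (I : Set (Fin n_c)),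
      ‖zstar x₁ I - zstar x₂ I‖ ≤ κ * ‖x₁ - x₂‖)
    (hw : ∀ j, 0 < w j)
    (hpos : ∀ j, 0 < κ * Real.sqrt (dotProduct (G j) (G j))
      + Real.sqrt (dotProduct (S j) (S j)))
    (x : ℕ → EuclideanSpace ℝ (Fin n_x)) (hx0 : x 0 ≠ 0)
    (c : ℝ) (hc : 0 < c) (β : ℝ) (hβ0 : 0 < β) (hβ1 : β < 1)
    (hdecay : ∀ k : ℕ, ‖x k‖ ≤ c * ‖x 0‖ * β ^ k)
    (ρ : Fin n_c → ℝ)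
    (hρ : ∀ j, ρ j = c * ‖x 0‖ *
      (κ * Real.sqrt (dotProduct (G j) (G j)) * (1 + β⁻¹)
        + Real.sqrt (dotProduct (S j) (S j))
        + Real.sqrt (dotProduct (Matrix.vecMul (G j) (H⁻¹ * Fᵀ))
            (Matrix.vecMul (G j) (H⁻¹ * Fᵀ))) * β⁻¹))
    (K1 K2 Kh : ℤ)
    (hK2 : K2 = Finset.univ.sup' (Finset.univ_nonempty_iff.mpr ⟨⟨0, hnc⟩⟩)
      (fun j : Fin n_c => ⌈Real.log (w j / ρ j) / Real.log β⌉))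
    (hKh : Kh = max K1 K2) :
    ∀ k : ℕ, Kh ≤ (k : ℤ) → 1 ≤ k →
      ({j | dotProduct (G j) (zstar (x (k - 1)) Set.univ)
          = dotProduct (S j) (x (k - 1)) + w j} ∪
        {j | Metric.closedBall (zstar (x (k - 1)) Set.univ) (κ * ‖x k - x (k - 1)‖) ⊆
          {z : EuclideanSpace ℝ (Fin n_z) |
            dotProduct (G j) z ≤ dotProduct (S j) (x k) + w j}}ᶜ)
        = (∅ : Set (Fin n_c)) := by
  intro k hk hk1
  obtain ⟨n, rfl⟩ : ∃ n, k = n + 1 := ⟨k - 1, by omega⟩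
  rw [Nat.add_sub_cancel]
  rw [hKh, hK2] at hk
  simp only [sqrt_dotProduct_self] at hpos hρ
  have hsel : IsQPSelection H F G S w zstar := fun y I z hz hmin ↦
    huniq y I z (by rwa [hZ]) fun z' hz' ↦ by rw [hV, hV]; exact hmin (by rwa [hZ] at hz')
  have hS : ∀ j, ‖WithLp.toLp 2 (S j)‖ ≤ κ * ‖WithLp.toLp 2 (G j)‖ := fun j ↦
    hsel.norm_S_row_le hH hκ0 hGLC fun y ↦ (hfeas y).mono fun z hz i hi ↦ by
      rw [hZ] at hz; exact hz i trivial
  set X := c * ‖x 0‖ * β ^ n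
  have hX : 0 < X := by have := norm_pos_iff.mpr hx0; positivity
  have hnext : ‖x (n + 1)‖ ≤ β * X := by rw [mul_comm β, mul_assoc, ← pow_succ]; exact hdecay _
  have hbound : ∀ j, X * (κ * ‖WithLp.toLp 2 (G j)‖ * (1 + β) + ‖WithLp.toLp 2 (S j)‖ * β
      + ‖WithLp.toLp 2 (G j ᵥ* (H⁻¹ * Fᵀ))‖) ≤ w j := fun j ↦ by
    convert mul_pow_le_of_ceil_log_div_log_le hβ0 hβ1 (hw j)
      ((Finset.le_sup' _ (Finset.mem_univ j)).trans ((le_max_right _ _).trans hk)) using 1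
    rw [hρ j, pow_succ]; field_simp; ring
  have hstrict : ∀ j, G j ⬝ᵥ unconstrainedMin H F (x n) < S j ⬝ᵥ x n + w j := fun j ↦
    dotProduct_unconstrainedMin_lt_of_norm_le hβ0 hX (hdecay n) (hS j) (hpos j) (hbound j)
  rw [hsel.eq_unconstrainedMin hH fun j _ ↦ (hstrict j).le]
  refine Set.eq_empty_iff_forall_notMem.mpr fun j hj ↦ hj.elim (hstrict j).ne fun hD ↦ hD ?_
  exact closedBall_unconstrainedMin_subset_of_norm_le hκ0 (hdecay n) hnext (hbound j)

/-- Theorem 4(b): for `k ≥ max(K̂, 1)` with `K̂ = max(K̂₁, K̂₂)`, the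
adaptive trimming index set is empty: `I(x_k) = ∅`. -/
theorem trimmed_index_eventually_empty
    (n_x n_z n_c : ℕ) (hnx : 0 < n_x) (hnz : 0 < n_z) (hnc : 0 < n_c)
    (H : Matrix (Fin n_z) (Fin n_z) ℝ) (hH : H.PosDef)
    (F : Matrix (Fin n_x) (Fin n_z) ℝ)
    (G : Matrix (Fin n_c) (Fin n_z) ℝ)
    (S : Matrix (Fin n_c) (Fin n_x) ℝ)
    (w : Fin n_c → ℝ)
    (V : EuclideanSpace ℝ (Fin n_x) → EuclideanSpace ℝ (Fin n_z) → ℝ)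
    (hV : ∀ x z, V x z = (1 / 2) * dotProduct z (H.mulVec z)
      + dotProduct x (F.mulVec z))
    (Z : EuclideanSpace ℝ (Fin n_x) → Set (Fin n_c) → Set (EuclideanSpace ℝ (Fin n_z)))
    (hZ : ∀ x I, Z x I =
      {z : EuclideanSpace ℝ (Fin n_z) | ∀ j ∈ I, dotProduct (G j) z ≤ dotProduct (S j) x + w j})
    (hfeas : ∀ x, (Z x Set.univ).Nonempty)
    (zstar : EuclideanSpace ℝ (Fin n_x) → Set (Fin n_c) → EuclideanSpace ℝ (Fin n_z))
    (hmem : ∀ x I, zstar x I ∈ Z x I)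
    (hopt : ∀ x I, ∀ z ∈ Z x I, V x (zstar x I) ≤ V x z)
    (huniq : ∀ x I, ∀ z ∈ Z x I, (∀ z' ∈ Z x I, V x z ≤ V x z') → z = zstar x I)
    (κ : ℝ) (hκ0 : 0 ≤ κ)
    (hGLC : ∀ (x₁ x₂ : EuclideanSpace ℝ (Fin n_x)) (I : Set (Fin n_c)),
      ‖zstar x₁ I - zstar x₂ I‖ ≤ κ * ‖x₁ - x₂‖)
    (hw : ∀ j, 0 < w j)
    (hpos : ∀ j, 0 < κ * Real.sqrt (dotProduct (G j) (G j))
      + Real.sqrt (dotProduct (S j) (S j)))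
    (x : ℕ → EuclideanSpace ℝ (Fin n_x)) (hx0 : x 0 ≠ 0)
    (c : ℝ) (hc : 0 < c) (β : ℝ) (hβ0 : 0 < β) (hβ1 : β < 1)
    (hdecay : ∀ k : ℕ, ‖x k‖ ≤ c * ‖x 0‖ * β ^ k)
    (ρ : Fin n_c → ℝ)
    (hρ : ∀ j, ρ j = c * ‖x 0‖ *
      (κ * Real.sqrt (dotProduct (G j) (G j)) * (1 + β⁻¹)
        + Real.sqrt (dotProduct (S j) (S j))
        + Real.sqrt (dotProduct (Matrix.vecMul (G j) (H⁻¹ * Fᵀ))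
            (Matrix.vecMul (G j) (H⁻¹ * Fᵀ))) * β⁻¹))
    (K1 K2 Kh : ℤ)
    (hK1 : K1 = Finset.univ.sup' (Finset.univ_nonempty_iff.mpr ⟨⟨0, hnc⟩⟩)
      (fun j : Fin n_c => ⌈Real.log (w j / (c * ‖x 0‖ * β⁻¹ *
        (κ * Real.sqrt (dotProduct (G j) (G j))
          + Real.sqrt (dotProduct (S j) (S j))))) / Real.log β⌉))
    (hK2 : K2 = Finset.univ.sup' (Finset.univ_nonempty_iff.mpr ⟨⟨0, hnc⟩⟩)
      (fun j : Fin n_c => ⌈Real.log (w j / ρ j) / Real.log β⌉))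
    (hKh : Kh = max K1 K2) :
    ∀ k : ℕ, Kh ≤ (k : ℤ) → 1 ≤ k →
      ({j | dotProduct (G j) (zstar (x (k - 1)) Set.univ)
          = dotProduct (S j) (x (k - 1)) + w j} ∪
        {j | Metric.closedBall (zstar (x (k - 1)) Set.univ) (κ * ‖x k - x (k - 1)‖) ⊆
          {z : EuclideanSpace ℝ (Fin n_z) |
            dotProduct (G j) z ≤ dotProduct (S j) (x k) + w j}}ᶜ)
        = (∅ : Set (Fin n_c)) :=
  trimmed_index_eventually_empty_general n_x n_z n_c hnc H hH F G S w V hV Z hZ hfeas zstar huniq κ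
    hκ0 hGLC hw hpos x hx0 c hc β hβ0 hβ1 hdecay ρ hρ K1 K2 Kh hK2 hKh
end
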